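/- arXiv:2404.07614 — 6 statements merged into one kernel-verified Lean document; each statement's English description precedes it below -/
import Mathlib

section
/- Let x_n, x ∈ ℝ^N and let u_n, u : [0,1] → ℝ^{d+1} be integrable controls, and let γ_n be the trajectory of (x_n, u_n) and γ the trajectory of (x, u). Then for every t ∈ [0,1] one has |γ_n(t) − γ(t)| ≤ b_n(t) · exp(∫_0^t a(s) ds), where b_n(t) = |x_n − x| + C ∫_0^t Σ_{i=0}^d |u_{n,i}(s) − u_i(s)| ds and a(s) = L Σ_{i=0}^d |u_i(s)|. -/
open MeasureTheory Filter Set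

-- Key lemma: ∫₀ᵀ a e^A ≤ e^{A T} - 1
lemma gron_key (a : ℝ → ℝ) (ha0 : ∀ s, 0 ≤ a s) (haI : IntegrableOn a (Icc (0:ℝ) 1))
    (T : ℝ) (hT : T ∈ Icc (0:ℝ) 1) :
    (∫ s in (0:ℝ)..T, a s * Real.exp (∫ r in (0:ℝ)..s, a r))
      ≤ Real.exp (∫ r in (0:ℝ)..T, a r) - 1 := by
  set A : ℝ → ℝ := fun t => ∫ r in (0:ℝ)..t, a r with hA
  -- interval integrability of a on subintervals of [0,1]
  have haII : ∀ p q : ℝ, p ∈ Icc (0:ℝ) 1 → q ∈ Icc (0:ℝ) 1 → IntervalIntegrable a volume p q := by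
    intro p q hp hq
    exact (haI.mono_set (uIcc_subset_Icc hp hq)).intervalIntegrable
  -- A is monotone on [0,1]
  have hAmono : ∀ p q : ℝ, p ∈ Icc (0:ℝ) 1 → q ∈ Icc (0:ℝ) 1 → p ≤ q → A p ≤ A q := by
    intro p q hp hq hpq
    have hsplit : A p + (∫ r in p..q, a r) = A q :=
      intervalIntegral.integral_add_adjacent_intervals
        (haII 0 p ⟨le_refl 0, zero_le_one⟩ hp) (haII p q hp hq)
    have hnn : 0 ≤ ∫ r in p..q, a r :=
      intervalIntegral.integral_nonneg hpq (fun s _ => ha0 s)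
    linarith
  have hAcont : ContinuousOn A (Icc (0:ℝ) 1) := by
    have := intervalIntegral.continuousOn_primitive_interval (a := (0:ℝ)) (b := (1:ℝ)) (f := a)
      (μ := volume) (by rwa [uIcc_of_le zero_le_one])
    rwa [uIcc_of_le zero_le_one] at this
  have hA0 : A 0 = 0 := intervalIntegral.integral_same
  -- integrability of a * exp A on [0,1]
  have hexpA_cont : ContinuousOn (fun s => Real.exp (A s)) (Icc (0:ℝ) 1) :=
    Real.continuous_exp.comp_continuousOn hAcont
  have hprod : IntegrableOn (fun s => a s * Real.exp (A s)) (Icc (0:ℝ) 1) := by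
    apply Integrable.mono' (g := fun s => Real.exp (A 1) * a s) (haI.const_mul _)
      (haI.aestronglyMeasurable.mul
        (hexpA_cont.aestronglyMeasurable measurableSet_Icc))
    filter_upwards [ae_restrict_mem measurableSet_Icc] with s hs
    simp only [Pi.mul_apply]
    rw [Real.norm_eq_abs, abs_mul, abs_of_nonneg (ha0 s), abs_of_pos (Real.exp_pos _)]
    have : A s ≤ A 1 := hAmono s 1 hs ⟨zero_le_one, le_refl 1⟩ hs.2
    calc a s * Real.exp (A s) ≤ a s * Real.exp (A 1) := by
          exact mul_le_mul_of_nonneg_left (Real.exp_le_exp.2 this) (ha0 s)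
      _ = Real.exp (A 1) * a s := mul_comm _ _
  have hprodII : ∀ p q : ℝ, p ∈ Icc (0:ℝ) 1 → q ∈ Icc (0:ℝ) 1 →
      IntervalIntegrable (fun s => a s * Real.exp (A s)) volume p q := by
    intro p q hp hq
    exact (hprod.mono_set (uIcc_subset_Icc hp hq)).intervalIntegrable
  -- single interval bound
  have single : ∀ δ : ℝ, 0 ≤ δ → ∀ p q : ℝ, p ∈ Icc (0:ℝ) 1 → q ∈ Icc (0:ℝ) 1 → p ≤ q →
      A q - A p ≤ δ →
      (∫ s in p..q, a s * Real.exp (A s)) ≤ Real.exp δ * (Real.exp (A q) - Real.exp (A p)) := by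
    intro δ hδ p q hp hq hpq hd
    have h1 : (∫ s in p..q, a s * Real.exp (A s)) ≤ ∫ s in p..q, a s * Real.exp (A q) := by
      apply intervalIntegral.integral_mono_on hpq (hprodII p q hp hq)
        ((haII p q hp hq).mul_const _)
      intro s hs
      have hsI : s ∈ Icc (0:ℝ) 1 := ⟨le_trans hp.1 hs.1, le_trans hs.2 hq.2⟩
      exact mul_le_mul_of_nonneg_left (Real.exp_le_exp.2 (hAmono s q hsI hq hs.2)) (ha0 s)
    have h2 : (∫ s in p..q, a s * Real.exp (A q)) = Real.exp (A q) * (A q - A p) := by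
      rw [intervalIntegral.integral_mul_const]
      have hsplit : A p + (∫ r in p..q, a r) = A q :=
        intervalIntegral.integral_add_adjacent_intervals
          (haII 0 p ⟨le_refl 0, zero_le_one⟩ hp) (haII p q hp hq)
      rw [mul_comm]; congr 1; linarith
    have hxy : A p ≤ A q := hAmono p q hp hq hpq
    -- e^y (y - x) ≤ e^δ (e^y - e^x)
    have h3 : Real.exp (A q) * (A q - A p) ≤ Real.exp δ * (Real.exp (A q) - Real.exp (A p)) := by
      set x := A p; set y := A q
      have hxy2 : Real.exp (y - x) * Real.exp x = Real.exp y := by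
        rw [← Real.exp_add]; ring_nf
      have hadd := Real.add_one_le_exp (y - x)
      have key : Real.exp x * (y - x) ≤ Real.exp y - Real.exp x := by
        nlinarith [Real.exp_pos x]
      have h4 : Real.exp y * (y - x) ≤ Real.exp (y - x) * (Real.exp y - Real.exp x) := by
        calc Real.exp y * (y - x) = Real.exp (y - x) * (Real.exp x * (y - x)) := by
              rw [← mul_assoc, hxy2]
          _ ≤ Real.exp (y - x) * (Real.exp y - Real.exp x) :=
              mul_le_mul_of_nonneg_left key (Real.exp_pos _).le
      have h5 : Real.exp (y - x) ≤ Real.exp δ := Real.exp_le_exp.2 hd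
      have h6 : 0 ≤ Real.exp y - Real.exp x := by
        have := Real.exp_le_exp.2 hxy; linarith
      calc Real.exp y * (y - x) ≤ Real.exp (y - x) * (Real.exp y - Real.exp x) := h4
        _ ≤ Real.exp δ * (Real.exp y - Real.exp x) := mul_le_mul_of_nonneg_right h5 h6
    linarith
  -- induction claim
  have claim : ∀ δ : ℝ, 0 < δ → ∀ n : ℕ, ∀ p : ℝ, p ∈ Icc (0:ℝ) 1 → p ≤ T →
      A T - A p ≤ n * δ →
      (∫ s in p..T, a s * Real.exp (A s)) ≤ Real.exp δ * (Real.exp (A T) - Real.exp (A p)) := by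
    intro δ hδ n
    induction n with
    | zero =>
      intro p hp hpT hbd
      simp only [Nat.cast_zero, zero_mul] at hbd
      exact single δ hδ.le p T hp hT hpT (le_trans hbd hδ.le)
    | succ n ih =>
      intro p hp hpT hbd
      by_cases hcase : A T - A p ≤ n * δ
      · exact ih p hp hpT hcase
      push_neg at hcase
      -- pick q with A q = A T - n δ
      have hmem : A T - n * δ ∈ Icc (A p) (A T) := by
        constructor
        · linarith
        · have : (0:ℝ) ≤ n * δ := by positivity
          linarith
      obtain ⟨q, hq, hAq⟩ := intermediate_value_Icc hpT (hAcont.mono (Icc_subset_Icc hp.1 hT.2)) hmem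
      have hqI : q ∈ Icc (0:ℝ) 1 := ⟨le_trans hp.1 hq.1, le_trans hq.2 hT.2⟩
      have hsplit : (∫ s in p..q, a s * Real.exp (A s)) + (∫ s in q..T, a s * Real.exp (A s))
          = ∫ s in p..T, a s * Real.exp (A s) :=
        intervalIntegral.integral_add_adjacent_intervals (hprodII p q hp hqI) (hprodII q T hqI hT)
      have h1 : (∫ s in p..q, a s * Real.exp (A s))
          ≤ Real.exp δ * (Real.exp (A q) - Real.exp (A p)) := by
        apply single δ hδ.le p q hp hqI hq.1
        rw [hAq]
        push_cast at hbd ⊢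
        linarith
      have h2 : (∫ s in q..T, a s * Real.exp (A s))
          ≤ Real.exp δ * (Real.exp (A T) - Real.exp (A q)) := by
        apply ih q hqI hq.2
        rw [hAq]; linarith
      linarith
  -- conclude for all δ > 0 : LHS ≤ e^δ (e^{A T} - 1)
  have hAT0 : 0 ≤ A T := by
    have := hAmono 0 T ⟨le_refl 0, zero_le_one⟩ hT hT.1
    rwa [hA0] at this
  have main : ∀ δ : ℝ, 0 < δ →
      (∫ s in (0:ℝ)..T, a s * Real.exp (A s)) ≤ Real.exp δ * (Real.exp (A T) - 1) := by
    intro δ hδ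
    obtain ⟨n, hn⟩ := exists_nat_ge (A T / δ)
    have := claim δ hδ n 0 ⟨le_refl 0, zero_le_one⟩ hT.1
      (by rw [hA0]; rw [div_le_iff₀ hδ] at hn; linarith)
    rwa [hA0, Real.exp_zero] at this
  -- let δ → 0
  have hR : 0 ≤ Real.exp (A T) - 1 := by
    have := Real.one_le_exp hAT0; linarith
  set R := Real.exp (A T) - 1 with hRdef
  show (∫ s in (0:ℝ)..T, a s * Real.exp (A s)) ≤ R
  rcases eq_or_lt_of_le hR with hR0 | hR0
  · have := main 1 one_pos
    rw [← hR0, mul_zero] at this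
    rw [← hR0]; exact this
  · apply le_of_forall_pos_le_add
    intro ε hε
    have hδ : 0 < Real.log (1 + ε / R) := by
      apply Real.log_pos
      have : 0 < ε / R := div_pos hε hR0
      linarith
    have := main _ hδ
    rwa [Real.exp_log (by positivity), add_mul, one_mul,
      div_mul_cancel₀ _ (ne_of_gt hR0)] at this

lemma my_gronwall (a f B : ℝ → ℝ) (ha0 : ∀ s, 0 ≤ a s)
    (haI : IntegrableOn a (Icc (0:ℝ) 1))
    (hfc : ContinuousOn f (Icc (0:ℝ) 1)) (hf0 : ∀ s, 0 ≤ f s)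
    (hBmono : ∀ p q, p ∈ Icc (0:ℝ) 1 → q ∈ Icc (0:ℝ) 1 → p ≤ q → B p ≤ B q)
    (hB0 : 0 ≤ B 0)
    (hineq : ∀ T ∈ Icc (0:ℝ) 1, f T ≤ B T + ∫ s in (0:ℝ)..T, a s * f s) :
    ∀ t ∈ Icc (0:ℝ) 1, f t ≤ B t * Real.exp (∫ s in (0:ℝ)..t, a s) := by
  intro t ht
  set A : ℝ → ℝ := fun r => ∫ s in (0:ℝ)..r, a s with hAdef
  have haII : ∀ p q : ℝ, p ∈ Icc (0:ℝ) 1 → q ∈ Icc (0:ℝ) 1 → IntervalIntegrable a volume p q :=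
    fun p q hp hq => (haI.mono_set (uIcc_subset_Icc hp hq)).intervalIntegrable
  have hAmono : ∀ p q : ℝ, p ∈ Icc (0:ℝ) 1 → q ∈ Icc (0:ℝ) 1 → p ≤ q → A p ≤ A q := by
    intro p q hp hq hpq
    have hsplit : A p + (∫ r in p..q, a r) = A q :=
      intervalIntegral.integral_add_adjacent_intervals
        (haII 0 p ⟨le_refl 0, zero_le_one⟩ hp) (haII p q hp hq)
    have hnn : 0 ≤ ∫ r in p..q, a r :=
      intervalIntegral.integral_nonneg hpq (fun s _ => ha0 s)
    linarith
  have hAcont : ContinuousOn A (Icc (0:ℝ) 1) := by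
    have := intervalIntegral.continuousOn_primitive_interval (a := (0:ℝ)) (b := (1:ℝ)) (f := a)
      (μ := volume) (by rwa [uIcc_of_le zero_le_one])
    rwa [uIcc_of_le zero_le_one] at this
  have hA0 : A 0 = 0 := intervalIntegral.integral_same
  have hA0le : ∀ r ∈ Icc (0:ℝ) 1, 0 ≤ A r := by
    intro r hr
    have := hAmono 0 r ⟨le_refl 0, zero_le_one⟩ hr hr.1
    rwa [hA0] at this
  -- integrability of a * f and a * exp A
  have hfmeas : AEStronglyMeasurable f (volume.restrict (Icc (0:ℝ) 1)) :=
    hfc.aestronglyMeasurable measurableSet_Icc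
  obtain ⟨M, hM⟩ : ∃ M, ∀ s ∈ Icc (0:ℝ) 1, f s ≤ M := by
    obtain ⟨M, hM⟩ := (isCompact_Icc.image_of_continuousOn hfc).bddAbove
    exact ⟨M, fun s hs => hM ⟨s, hs, rfl⟩⟩
  have haf : IntegrableOn (fun s => a s * f s) (Icc (0:ℝ) 1) := by
    apply Integrable.mono' (g := fun s => M * a s) (haI.const_mul _)
      (haI.aestronglyMeasurable.mul hfmeas)
    filter_upwards [ae_restrict_mem measurableSet_Icc] with s hs
    simp only [Pi.mul_apply]
    rw [Real.norm_eq_abs, abs_mul, abs_of_nonneg (ha0 s), abs_of_nonneg (hf0 s)]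
    calc a s * f s ≤ a s * M := mul_le_mul_of_nonneg_left (hM s hs) (ha0 s)
      _ = M * a s := mul_comm _ _
  have hafII : ∀ p q : ℝ, p ∈ Icc (0:ℝ) 1 → q ∈ Icc (0:ℝ) 1 →
      IntervalIntegrable (fun s => a s * f s) volume p q :=
    fun p q hp hq => (haf.mono_set (uIcc_subset_Icc hp hq)).intervalIntegrable
  have hexpA_cont : ContinuousOn (fun s => Real.exp (A s)) (Icc (0:ℝ) 1) :=
    Real.continuous_exp.comp_continuousOn hAcont
  have hprod : IntegrableOn (fun s => a s * Real.exp (A s)) (Icc (0:ℝ) 1) := by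
    apply Integrable.mono' (g := fun s => Real.exp (A 1) * a s) (haI.const_mul _)
      (haI.aestronglyMeasurable.mul (hexpA_cont.aestronglyMeasurable measurableSet_Icc))
    filter_upwards [ae_restrict_mem measurableSet_Icc] with s hs
    simp only [Pi.mul_apply]
    rw [Real.norm_eq_abs, abs_mul, abs_of_nonneg (ha0 s), abs_of_pos (Real.exp_pos _)]
    have : A s ≤ A 1 := hAmono s 1 hs ⟨zero_le_one, le_refl 1⟩ hs.2
    calc a s * Real.exp (A s) ≤ a s * Real.exp (A 1) :=
          mul_le_mul_of_nonneg_left (Real.exp_le_exp.2 this) (ha0 s)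
      _ = Real.exp (A 1) * a s := mul_comm _ _
  have hprodII : ∀ p q : ℝ, p ∈ Icc (0:ℝ) 1 → q ∈ Icc (0:ℝ) 1 →
      IntervalIntegrable (fun s => a s * Real.exp (A s)) volume p q :=
    fun p q hp hq => (hprod.mono_set (uIcc_subset_Icc hp hq)).intervalIntegrable
  -- B t nonneg
  have hBt0 : 0 ≤ B t := le_trans hB0 (hBmono 0 t ⟨le_refl 0, zero_le_one⟩ ht ht.1)
  -- main ε-claim
  have hmain : ∀ ε : ℝ, 0 < ε → f t ≤ (B t + ε) * Real.exp (A t) := by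
    intro ε hε
    set K := B t + ε with hK
    have hKpos : 0 < K := by positivity
    by_contra hcon
    push_neg at hcon
    -- the set where f r ≥ K e^{A r}
    set S : Set ℝ := {r ∈ Icc (0:ℝ) t | K * Real.exp (A r) ≤ f r} with hS
    have hScl : IsClosed S := by
      have : ContinuousOn (fun r => f r - K * Real.exp (A r)) (Icc (0:ℝ) t) :=
        (hfc.mono (Icc_subset_Icc le_rfl ht.2)).sub
          ((continuousOn_const.mul (hexpA_cont.mono (Icc_subset_Icc le_rfl ht.2))))
      have h2 : S = Icc (0:ℝ) t ∩ (fun r => f r - K * Real.exp (A r)) ⁻¹' (Ici 0) := by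
        ext r; simp only [hS, Set.mem_setOf_eq, Set.mem_inter_iff, Set.mem_preimage,
          Set.mem_Ici, sub_nonneg]
      rw [h2]
      exact this.preimage_isClosed_of_isClosed isClosed_Icc isClosed_Ici
    have hSne : S.Nonempty := ⟨t, ⟨⟨ht.1, le_refl t⟩, hcon.le⟩⟩
    have hSbdd : BddBelow S := ⟨0, fun r hr => hr.1.1⟩
    set T := sInf S with hT
    have hTS : T ∈ S := hScl.csInf_mem hSne hSbdd
    have hTI : T ∈ Icc (0:ℝ) 1 := ⟨hTS.1.1, le_trans hTS.1.2 ht.2⟩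
    -- for r ∈ [0, T), f r < K e^{A r}
    have hlt : ∀ r, 0 ≤ r → r < T → f r < K * Real.exp (A r) := by
      intro r hr0 hrT
      by_contra hcon2
      push_neg at hcon2
      have : r ∈ S := ⟨⟨hr0, le_trans hrT.le hTS.1.2⟩, hcon2⟩
      exact absurd (csInf_le hSbdd this) (not_le.2 hrT)
    -- integral comparison on [0, T]
    have hcomp : (∫ s in (0:ℝ)..T, a s * f s) ≤ K * ∫ s in (0:ℝ)..T, a s * Real.exp (A s) := by
      rw [← intervalIntegral.integral_const_mul]
      apply intervalIntegral.integral_mono_ae_restrict hTI.1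
        (hafII 0 T ⟨le_refl 0, zero_le_one⟩ hTI)
        (((hprodII 0 T ⟨le_refl 0, zero_le_one⟩ hTI)).const_mul K)
      rw [Filter.EventuallyLE, ae_restrict_iff' measurableSet_Icc]
      have hTnull : ∀ᵐ (r : ℝ), ¬ r = T := by
        rw [ae_iff]
        simpa using (by simp : volume {(T:ℝ)} = 0)
      filter_upwards [hTnull] with r hrT hr
      have hrlt : r < T := lt_of_le_of_ne hr.2 hrT
      have := hlt r hr.1 hrlt
      calc a r * f r ≤ a r * (K * Real.exp (A r)) :=
            mul_le_mul_of_nonneg_left this.le (ha0 r)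
        _ = K * (a r * Real.exp (A r)) := by ring
    have hkey := gron_key a ha0 haI T hTI
    have hBT : B T ≤ B t := hBmono T t hTI ht hTS.1.2
    have hfT := hineq T hTI
    have hcontr : f T < K * Real.exp (A T) := by
      have h1 : f T ≤ B t + K * (Real.exp (A T) - 1) := by
        calc f T ≤ B T + ∫ s in (0:ℝ)..T, a s * f s := hfT
          _ ≤ B t + K * ∫ s in (0:ℝ)..T, a s * Real.exp (A s) := by
              exact add_le_add hBT hcomp
          _ ≤ B t + K * (Real.exp (A T) - 1) := by
              exact add_le_add le_rfl (mul_le_mul_of_nonneg_left hkey hKpos.le)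
      have : B t + K * (Real.exp (A T) - 1) = K * Real.exp (A T) - ε := by
        rw [hK]; ring
      linarith
    exact absurd hTS.2 (not_le.2 hcontr)
  -- let ε → 0
  have hexp_pos : 0 < Real.exp (A t) := Real.exp_pos _
  apply le_of_forall_pos_le_add
  intro ε hε
  have := hmain (ε / Real.exp (A t)) (by positivity)
  calc f t ≤ (B t + ε / Real.exp (A t)) * Real.exp (A t) := this
    _ = B t * Real.exp (A t) + ε := by
        field_simp

/-- Vector fields `X i : ℝ^N → ℝ^N`, `i = 0, …, d`, globally Lipschitz with
constant `L > 0` and bounded in norm by `C > 0`. If `γₙ` is the trajectory of `(xₙ, uₙ)` and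
`γ` the trajectory of `(x, u)`, then for every `t ∈ [0,1]`,
`|γₙ(t) − γ(t)| ≤ bₙ(t) · exp(∫₀ᵗ a(s) ds)`, where
`bₙ(t) = |xₙ − x| + C ∫₀ᵗ Σᵢ |uₙᵢ(s) − uᵢ(s)| ds` and `a(s) = L Σᵢ |uᵢ(s)|`. -/
theorem statement1
    (N d : ℕ) (L C : ℝ) (hL : 0 < L) (hC : 0 < C)
    (X : Fin (d + 1) → EuclideanSpace ℝ (Fin N) → EuclideanSpace ℝ (Fin N))
    (hLip : ∀ i, LipschitzWith L.toNNReal (X i))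
    (hBdd : ∀ i x, ‖X i x‖ ≤ C)
    (xn x : EuclideanSpace ℝ (Fin N))
    (un u : Fin (d + 1) → ℝ → ℝ)
    (hun : ∀ i, IntegrableOn (un i) (Icc (0:ℝ) 1))
    (hu : ∀ i, IntegrableOn (u i) (Icc (0:ℝ) 1))
    (γn γ : ℝ → EuclideanSpace ℝ (Fin N))
    (hγnc : ContinuousOn γn (Icc (0:ℝ) 1))
    (hγc : ContinuousOn γ (Icc (0:ℝ) 1))
    (hγn : ∀ t ∈ Icc (0:ℝ) 1,
      γn t = xn + ∫ s in (0:ℝ)..t, ∑ i, un i s • X i (γn s))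
    (hγ : ∀ t ∈ Icc (0:ℝ) 1,
      γ t = x + ∫ s in (0:ℝ)..t, ∑ i, u i s • X i (γ s)) :
    ∀ t ∈ Icc (0:ℝ) 1,
      ‖γn t - γ t‖ ≤
        (‖xn - x‖ + C * ∫ s in (0:ℝ)..t, ∑ i, |un i s - u i s|) *
          Real.exp (∫ s in (0:ℝ)..t, L * ∑ i, |u i s|) := by
  set a : ℝ → ℝ := fun s => L * ∑ i, |u i s| with ha_def
  set gd : ℝ → ℝ := fun s => ∑ i, |un i s - u i s| with hgd_def
  set f : ℝ → ℝ := fun s => ‖γn s - γ s‖ with hf_def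
  set B : ℝ → ℝ := fun r => ‖xn - x‖ + C * ∫ s in (0:ℝ)..r, gd s with hB_def
  have hIcc01 : (0:ℝ) ∈ Icc (0:ℝ) 1 := ⟨le_refl 0, zero_le_one⟩
  -- basic nonnegativity
  have ha0 : ∀ s, 0 ≤ a s := fun s => by
    apply mul_nonneg hL.le (Finset.sum_nonneg fun i _ => abs_nonneg _)
  have hgd0 : ∀ s, 0 ≤ gd s := fun s => Finset.sum_nonneg fun i _ => abs_nonneg _
  -- integrability
  have haI : IntegrableOn a (Icc (0:ℝ) 1) := by
    apply Integrable.const_mul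
    exact integrable_finset_sum _ fun i _ => (hu i).abs
  have hgdI : IntegrableOn gd (Icc (0:ℝ) 1) := by
    exact integrable_finset_sum _ fun i _ => ((hun i).sub (hu i)).abs
  have hgdII : ∀ p q : ℝ, p ∈ Icc (0:ℝ) 1 → q ∈ Icc (0:ℝ) 1 → IntervalIntegrable gd volume p q :=
    fun p q hp hq => (hgdI.mono_set (uIcc_subset_Icc hp hq)).intervalIntegrable
  have hfc : ContinuousOn f (Icc (0:ℝ) 1) := (hγnc.sub hγc).norm
  have hf0 : ∀ s, 0 ≤ f s := fun s => norm_nonneg _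
  -- B is monotone
  have hBmono : ∀ p q, p ∈ Icc (0:ℝ) 1 → q ∈ Icc (0:ℝ) 1 → p ≤ q → B p ≤ B q := by
    intro p q hp hq hpq
    have hsplit : (∫ s in (0:ℝ)..p, gd s) + (∫ s in p..q, gd s) = ∫ s in (0:ℝ)..q, gd s :=
      intervalIntegral.integral_add_adjacent_intervals (hgdII 0 p hIcc01 hp) (hgdII p q hp hq)
    have hnn : 0 ≤ ∫ s in p..q, gd s :=
      intervalIntegral.integral_nonneg hpq fun s _ => hgd0 s
    simp only [hB_def]
    have : (∫ s in (0:ℝ)..p, gd s) ≤ ∫ s in (0:ℝ)..q, gd s := by linarith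
    nlinarith
  have hB0 : 0 ≤ B 0 := by
    simp only [hB_def, intervalIntegral.integral_same, mul_zero, add_zero]
    exact norm_nonneg _
  -- integrands
  set hn : ℝ → EuclideanSpace ℝ (Fin N) := fun s => ∑ i, un i s • X i (γn s) with hhn_def
  set hh : ℝ → EuclideanSpace ℝ (Fin N) := fun s => ∑ i, u i s • X i (γ s) with hhh_def
  have hXmeas : ∀ i, AEStronglyMeasurable (fun s => X i (γn s))
      (volume.restrict (Icc (0:ℝ) 1)) := fun i =>
    (((hLip i).continuous).comp_continuousOn hγnc).aestronglyMeasurable measurableSet_Icc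
  have hXmeas' : ∀ i, AEStronglyMeasurable (fun s => X i (γ s))
      (volume.restrict (Icc (0:ℝ) 1)) := fun i =>
    (((hLip i).continuous).comp_continuousOn hγc).aestronglyMeasurable measurableSet_Icc
  have hnI : IntegrableOn hn (Icc (0:ℝ) 1) := by
    apply Integrable.mono' (g := fun s => C * ∑ i, |un i s|)
      ((integrable_finset_sum _ fun i _ => (hun i).abs).const_mul C)
      (Finset.aestronglyMeasurable_fun_sum _ fun i _ => ((hun i).aestronglyMeasurable).smul (hXmeas i))
    filter_upwards with s
    calc ‖∑ i, un i s • X i (γn s)‖ ≤ ∑ i, ‖un i s • X i (γn s)‖ := norm_sum_le _ _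
      _ ≤ ∑ i, |un i s| * C := by
          apply Finset.sum_le_sum
          intro i _
          rw [norm_smul, Real.norm_eq_abs]
          exact mul_le_mul_of_nonneg_left (hBdd i _) (abs_nonneg _)
      _ = C * ∑ i, |un i s| := by rw [← Finset.sum_mul, mul_comm]
  have hhI : IntegrableOn hh (Icc (0:ℝ) 1) := by
    apply Integrable.mono' (g := fun s => C * ∑ i, |u i s|)
      ((integrable_finset_sum _ fun i _ => (hu i).abs).const_mul C)
      (Finset.aestronglyMeasurable_fun_sum _ fun i _ => ((hu i).aestronglyMeasurable).smul (hXmeas' i))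
    filter_upwards with s
    calc ‖∑ i, u i s • X i (γ s)‖ ≤ ∑ i, ‖u i s • X i (γ s)‖ := norm_sum_le _ _
      _ ≤ ∑ i, |u i s| * C := by
          apply Finset.sum_le_sum
          intro i _
          rw [norm_smul, Real.norm_eq_abs]
          exact mul_le_mul_of_nonneg_left (hBdd i _) (abs_nonneg _)
      _ = C * ∑ i, |u i s| := by rw [← Finset.sum_mul, mul_comm]
  -- integrability of a * f
  obtain ⟨M, hM⟩ : ∃ M, ∀ s ∈ Icc (0:ℝ) 1, f s ≤ M := by
    obtain ⟨M, hM⟩ := (isCompact_Icc.image_of_continuousOn hfc).bddAbove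
    exact ⟨M, fun s hs => hM ⟨s, hs, rfl⟩⟩
  have hfmeas : AEStronglyMeasurable f (volume.restrict (Icc (0:ℝ) 1)) :=
    hfc.aestronglyMeasurable measurableSet_Icc
  have hafI : IntegrableOn (fun s => a s * f s) (Icc (0:ℝ) 1) := by
    apply Integrable.mono' (g := fun s => M * a s) (haI.const_mul _)
      (haI.aestronglyMeasurable.mul hfmeas)
    filter_upwards [ae_restrict_mem measurableSet_Icc] with s hs
    simp only [Pi.mul_apply]
    rw [Real.norm_eq_abs, abs_mul, abs_of_nonneg (ha0 s), abs_of_nonneg (hf0 s)]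
    calc a s * f s ≤ a s * M := mul_le_mul_of_nonneg_left (hM s hs) (ha0 s)
      _ = M * a s := mul_comm _ _
  have hsumI : IntegrableOn (fun s => C * gd s + a s * f s) (Icc (0:ℝ) 1) :=
    (hgdI.const_mul C).add hafI
  have hCgdI : IntegrableOn (fun s => C * gd s) (Icc (0:ℝ) 1) := hgdI.const_mul C
  -- the integral inequality
  have hineq : ∀ T ∈ Icc (0:ℝ) 1, f T ≤ B T + ∫ s in (0:ℝ)..T, a s * f s := by
    intro T hT
    have hnII : IntervalIntegrable hn volume 0 T :=
      (hnI.mono_set (uIcc_subset_Icc hIcc01 hT)).intervalIntegrable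
    have hhII : IntervalIntegrable hh volume 0 T :=
      (hhI.mono_set (uIcc_subset_Icc hIcc01 hT)).intervalIntegrable
    have heq : γn T - γ T = (xn - x) + ∫ s in (0:ℝ)..T, (hn s - hh s) := by
      rw [hγn T hT, hγ T hT, intervalIntegral.integral_sub hnII hhII]
      abel
    have h1 : f T ≤ ‖xn - x‖ + ‖∫ s in (0:ℝ)..T, (hn s - hh s)‖ := by
      rw [hf_def]; simp only []
      rw [heq]
      exact norm_add_le _ _
    have h2 : ‖∫ s in (0:ℝ)..T, (hn s - hh s)‖ ≤ ∫ s in (0:ℝ)..T, ‖hn s - hh s‖ :=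
      intervalIntegral.norm_integral_le_integral_norm hT.1
    have h3 : (∫ s in (0:ℝ)..T, ‖hn s - hh s‖)
        ≤ ∫ s in (0:ℝ)..T, (C * gd s + a s * f s) := by
      apply intervalIntegral.integral_mono_on hT.1
        ((hnII.sub hhII).norm)
        ((hsumI.mono_set (uIcc_subset_Icc hIcc01 hT)).intervalIntegrable)
      intro s hs
      have key : ∀ i : Fin (d+1), ‖un i s • X i (γn s) - u i s • X i (γ s)‖
          ≤ C * |un i s - u i s| + L * |u i s| * f s := by
        intro i
        have hdecomp : un i s • X i (γn s) - u i s • X i (γ s)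
            = (un i s - u i s) • X i (γn s) + u i s • (X i (γn s) - X i (γ s)) := by
          rw [sub_smul, smul_sub]; abel
        rw [hdecomp]
        calc ‖(un i s - u i s) • X i (γn s) + u i s • (X i (γn s) - X i (γ s))‖
            ≤ ‖(un i s - u i s) • X i (γn s)‖ + ‖u i s • (X i (γn s) - X i (γ s))‖ :=
              norm_add_le _ _
          _ ≤ |un i s - u i s| * C + |u i s| * (L * f s) := by
              apply add_le_add
              · rw [norm_smul, Real.norm_eq_abs]
                exact mul_le_mul_of_nonneg_left (hBdd i _) (abs_nonneg _)
              · rw [norm_smul, Real.norm_eq_abs]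
                refine mul_le_mul_of_nonneg_left ?_ (abs_nonneg _)
                have hd := (hLip i).dist_le_mul (γn s) (γ s)
                rw [dist_eq_norm, dist_eq_norm, Real.coe_toNNReal L hL.le] at hd
                exact hd
          _ = C * |un i s - u i s| + L * |u i s| * f s := by ring
      calc ‖hn s - hh s‖ = ‖∑ i, (un i s • X i (γn s) - u i s • X i (γ s))‖ := by
            rw [hhn_def, hhh_def]; simp only []
            rw [Finset.sum_sub_distrib]
        _ ≤ ∑ i, ‖un i s • X i (γn s) - u i s • X i (γ s)‖ := norm_sum_le _ _
        _ ≤ ∑ i, (C * |un i s - u i s| + L * |u i s| * f s) := Finset.sum_le_sum fun i _ => key i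
        _ = C * gd s + a s * f s := by
            rw [Finset.sum_add_distrib, ← Finset.mul_sum, ← Finset.sum_mul, ← Finset.mul_sum]
    have h4 : (∫ s in (0:ℝ)..T, (C * gd s + a s * f s))
        = C * (∫ s in (0:ℝ)..T, gd s) + ∫ s in (0:ℝ)..T, a s * f s := by
      rw [intervalIntegral.integral_add
        ((hCgdI.mono_set (uIcc_subset_Icc hIcc01 hT)).intervalIntegrable)
        ((hafI.mono_set (uIcc_subset_Icc hIcc01 hT)).intervalIntegrable),
        intervalIntegral.integral_const_mul]
    calc f T ≤ ‖xn - x‖ + ‖∫ s in (0:ℝ)..T, (hn s - hh s)‖ := h1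
      _ ≤ ‖xn - x‖ + ∫ s in (0:ℝ)..T, ‖hn s - hh s‖ := by linarith
      _ ≤ ‖xn - x‖ + ∫ s in (0:ℝ)..T, (C * gd s + a s * f s) := by linarith
      _ = B T + ∫ s in (0:ℝ)..T, a s * f s := by rw [h4, hB_def]; ring
  exact my_gronwall a f B ha0 haI hfc hf0 hBmono hB0 hineq
end

section
/- Fix 1 ≤ p < ∞. Let x_n → x in ℝ^N and let controls u_n → u in L^p([0,1], ℝ^{d+1}). Let γ_n be the trajectory of (x_n, u_n) and γ the trajectory of (x, u), with derivatives γ̇_n(t) = Σ_{i=0}^d u_{n,i}(t) X_i(γ_n(t)) and γ̇(t) = Σ_{i=0}^d u_i(t) X_i(γ(t)). Then γ_n → γ uniformly on [0,1] and ∫_0^1 |γ̇_n(t) − γ̇(t)|^p dt → 0 as n → ∞; that is, γ_n converges to γ in the W^{1,p} sense. -/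
open MeasureTheory Filter Set

namespace St3Aux

lemma ii_of_Icc {E : Type*} [NormedAddCommGroup E] {f : ℝ → E}
    (hf : IntegrableOn f (Icc (0:ℝ) 1)) {α β : ℝ}
    (hα : α ∈ Icc (0:ℝ) 1) (hβ : β ∈ Icc (0:ℝ) 1) :
    IntervalIntegrable f volume α β := by
  rw [intervalIntegrable_iff]
  exact hf.mono_set (Set.Ioc_subset_Icc_self.trans (Set.uIcc_subset_Icc hα hβ))

lemma primitive_mono {g : ℝ → ℝ} (hgi : IntegrableOn g (Icc (0:ℝ) 1))
    (hg0 : ∀ t, 0 ≤ g t) {s t : ℝ} (hs : 0 ≤ s) (hst : s ≤ t) (ht : t ≤ 1) :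
    ∫ r in (0:ℝ)..s, g r ≤ ∫ r in (0:ℝ)..t, g r := by
  have h1 := intervalIntegral.integral_add_adjacent_intervals
    (a := 0) (b := s) (c := t) (f := g) (μ := volume)
    (ii_of_Icc hgi (by constructor <;> norm_num) ⟨hs, le_trans hst ht⟩)
    (ii_of_Icc hgi ⟨hs, le_trans hst ht⟩ ⟨le_trans hs hst, ht⟩)
  have h2 : 0 ≤ ∫ r in s..t, g r :=
    intervalIntegral.integral_nonneg hst (fun x _ => hg0 x)
  linarith

lemma two_rpow {x y p : ℝ} (hx : 0 ≤ x) (hy : 0 ≤ y) (hp : 1 ≤ p) :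
    (x + y) ^ p ≤ 2 ^ p * (x ^ p + y ^ p) := by
  have hp0 : (0:ℝ) ≤ p := by linarith
  rcases le_total x y with h | h
  · calc (x + y) ^ p ≤ (2 * y) ^ p := by
          apply Real.rpow_le_rpow (by linarith) (by linarith) hp0
      _ = 2 ^ p * y ^ p := Real.mul_rpow (by norm_num) hy
      _ ≤ 2 ^ p * (x ^ p + y ^ p) := by
          have := Real.rpow_nonneg (x := x) hx p
          have h2 : (0:ℝ) ≤ 2 ^ p := Real.rpow_nonneg (by norm_num) p
          nlinarith
  · calc (x + y) ^ p ≤ (2 * x) ^ p := by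
          apply Real.rpow_le_rpow (by linarith) (by linarith) hp0
      _ = 2 ^ p * x ^ p := Real.mul_rpow (by norm_num) hx
      _ ≤ 2 ^ p * (x ^ p + y ^ p) := by
          have := Real.rpow_nonneg (x := y) hy p
          have h2 : (0:ℝ) ≤ 2 ^ p := Real.rpow_nonneg (by norm_num) p
          nlinarith

lemma sum_rpow_le {ι : Type*} (s : Finset ι) (hs : s.Nonempty) (a : ι → ℝ)
    (ha : ∀ i ∈ s, 0 ≤ a i) {p : ℝ} (hp : 1 ≤ p) :
    (∑ i ∈ s, a i) ^ p ≤ (s.card : ℝ) ^ p * ∑ i ∈ s, a i ^ p := by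
  obtain ⟨j, hj, hmax⟩ := s.exists_max_image a hs
  have h1 : ∑ i ∈ s, a i ≤ (s.card : ℝ) * a j := by
    calc ∑ i ∈ s, a i ≤ ∑ _i ∈ s, a j := Finset.sum_le_sum (fun i hi => hmax i hi)
      _ = (s.card : ℝ) * a j := by rw [Finset.sum_const, nsmul_eq_mul]
  have hsum0 : 0 ≤ ∑ i ∈ s, a i := Finset.sum_nonneg ha
  calc (∑ i ∈ s, a i) ^ p ≤ ((s.card : ℝ) * a j) ^ p :=
        Real.rpow_le_rpow hsum0 h1 (by linarith)
    _ = (s.card : ℝ) ^ p * a j ^ p := Real.mul_rpow (by positivity) (ha j hj)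
    _ ≤ (s.card : ℝ) ^ p * ∑ i ∈ s, a i ^ p := by
        apply mul_le_mul_of_nonneg_left _ (by positivity)
        exact Finset.single_le_sum (fun i hi => Real.rpow_nonneg (ha i hi) p) hj

lemma abs_le_rpow {p : ℝ} (hp : 1 ≤ p) {δ : ℝ} (hδ : 0 < δ) (x : ℝ) :
    |x| ≤ δ + δ ^ (1 - p) * |x| ^ p := by
  rcases le_or_gt |x| δ with h | h
  · have : 0 ≤ δ ^ (1 - p) * |x| ^ p := by positivity
    linarith
  · have hx0 : (0:ℝ) < |x| := lt_trans hδ h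
    have h1 : |x| = |x| ^ (1 - p) * |x| ^ p := by
      rw [← Real.rpow_add hx0]; norm_num
    have h2 : |x| ^ (1 - p) ≤ δ ^ (1 - p) :=
      Real.rpow_le_rpow_of_nonpos hδ h.le (by linarith)
    have h3 : |x| ^ (1 - p) * |x| ^ p ≤ δ ^ (1 - p) * |x| ^ p :=
      mul_le_mul_of_nonneg_right h2 (by positivity)
    linarith [h1 ▸ h3, hδ.le]

lemma gronwall_step (L : ℝ) (hL : 0 < L) (g : ℝ → ℝ)
    (hgi : IntegrableOn g (Icc (0:ℝ) 1)) (hg0 : ∀ t, 0 ≤ g t)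
    (φ : ℝ → ℝ) (hφc : ContinuousOn φ (Icc (0:ℝ) 1))
    (hφ0 : ∀ t ∈ Icc (0:ℝ) 1, 0 ≤ φ t)
    (hgφ : IntegrableOn (fun s => g s * φ s) (Icc (0:ℝ) 1))
    (a : ℝ) (ha : 0 ≤ a)
    (hineq : ∀ t ∈ Icc (0:ℝ) 1, φ t ≤ a + L * ∫ s in (0:ℝ)..t, g s * φ s) :
    ∀ (k : ℕ), ∀ t ∈ Icc (0:ℝ) 1, L * (∫ s in (0:ℝ)..t, g s) ≤ k / 2 →
      φ t ≤ 3 ^ k * (k.factorial : ℝ) * a := by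
  set G : ℝ → ℝ := fun t => ∫ s in (0:ℝ)..t, g s with hG
  have hGc : ContinuousOn G (Icc (0:ℝ) 1) := by
    have := intervalIntegral.continuousOn_primitive (a := 0) (b := 1) (μ := volume) hgi
    refine this.congr (fun r hr => ?_)
    show (∫ s in (0:ℝ)..r, g s) = ∫ t in Ioc (0:ℝ) r, g t
    rw [intervalIntegral.integral_of_le hr.1]
  have hGnn : ∀ t ∈ Icc (0:ℝ) 1, 0 ≤ G t := fun t ht =>
    intervalIntegral.integral_nonneg ht.1 (fun x _ => hg0 x)
  intro k
  induction k with
  | zero =>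
    intro t ht hk
    replace hk : L * G t ≤ 0 := by simpa using hk
    have hGt : G t = 0 := le_antisymm (by nlinarith [hGnn t ht]) (hGnn t ht)
    obtain ⟨M, hM⟩ := isCompact_Icc.exists_bound_of_continuousOn hφc
    have hM' : ∀ s ∈ Icc (0:ℝ) 1, φ s ≤ |M| := by
      intro s hs
      have h := hM s hs
      rw [Real.norm_eq_abs] at h
      exact le_trans (le_trans (le_abs_self _) h) (le_abs_self M)
    have hle : ∫ s in (0:ℝ)..t, g s * φ s ≤ ∫ s in (0:ℝ)..t, g s * |M| := by
      apply intervalIntegral.integral_mono_on ht.1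
        (ii_of_Icc hgφ ⟨le_refl 0, by norm_num⟩ ht)
        (ii_of_Icc (hgi.mul_const _) ⟨le_refl 0, by norm_num⟩ ht)
      intro s hs
      exact mul_le_mul_of_nonneg_left (hM' s ⟨hs.1, hs.2.trans ht.2⟩) (hg0 s)
    have heq : ∫ s in (0:ℝ)..t, g s * |M| = G t * |M| := by
      rw [intervalIntegral.integral_mul_const]
    rw [hGt, zero_mul] at heq
    have hge : 0 ≤ ∫ s in (0:ℝ)..t, g s * φ s :=
      intervalIntegral.integral_nonneg ht.1
        (fun s hs => mul_nonneg (hg0 s) (hφ0 s ⟨hs.1, hs.2.trans ht.2⟩))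
    have h0 : ∫ s in (0:ℝ)..t, g s * φ s = 0 := le_antisymm (by linarith) hge
    have := hineq t ht
    rw [h0] at this
    simpa using this
  | succ k ih =>
    intro t ht hk
    replace hk : L * G t ≤ ((k:ℝ) + 1) / 2 := by
      have : L * G t ≤ ((k + 1 : ℕ) : ℝ) / 2 := hk
      push_cast at this; exact this
    have h3k : (0:ℝ) < 3 ^ k := by positivity
    have hfp : (0:ℝ) < (k.factorial : ℝ) := by exact_mod_cast k.factorial_pos
    have hc1 : (1:ℝ) ≤ 3 ^ k * (k.factorial : ℝ) := by
      have := one_le_pow₀ (a := (3:ℝ)) (by norm_num) (n := k)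
      have hf1 : (1:ℝ) ≤ (k.factorial : ℝ) := by exact_mod_cast k.factorial_pos
      nlinarith
    have hRHS : (3:ℝ) ^ (k+1) * (((k+1).factorial : ℕ) : ℝ) * a
        = 3 * ((k:ℝ) + 1) * (3 ^ k * (k.factorial : ℝ) * a) := by
      rw [pow_succ, Nat.factorial_succ]; push_cast; ring
    rcases le_or_gt (L * G t) ((k:ℝ) / 2) with hcase | hcase
    · have h1 := ih t ht hcase
      rw [hRHS]
      nlinarith [mul_nonneg (mul_nonneg h3k.le hfp.le) ha,
        mul_nonneg (mul_nonneg (mul_nonneg h3k.le hfp.le) ha) (Nat.cast_nonneg (α := ℝ) k)]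
    · have hmem : ((k:ℝ) / (2*L) : ℝ) ∈ Icc (G 0) (G t) := by
        constructor
        · have : G 0 = 0 := intervalIntegral.integral_same
          rw [this]; positivity
        · rw [div_le_iff₀ (by positivity)]
          nlinarith
      obtain ⟨τ, hτmem, hGτ⟩ := intermediate_value_Icc ht.1
        (hGc.mono (Icc_subset_Icc (le_refl 0) ht.2)) hmem
      have hτ1 : τ ∈ Icc (0:ℝ) 1 := ⟨hτmem.1, hτmem.2.trans ht.2⟩
      have hLGτ : L * G τ = (k:ℝ) / 2 := by
        rw [hGτ]; field_simp
      have hIH : ∀ σ ∈ Icc (0:ℝ) τ, φ σ ≤ 3 ^ k * (k.factorial : ℝ) * a := by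
        intro σ hσ
        have hσ1 : σ ∈ Icc (0:ℝ) 1 := ⟨hσ.1, hσ.2.trans hτ1.2⟩
        apply ih σ hσ1
        have hmono : G σ ≤ G τ := primitive_mono hgi hg0 hσ.1 hσ.2 hτ1.2
        nlinarith
      set c : ℝ := 3 ^ k * (k.factorial : ℝ) with hc
      have hc0 : (0:ℝ) ≤ c := by positivity
      have hsplit : ∀ s : ℝ, s ∈ Icc τ t →
          (∫ r in (0:ℝ)..s, g r * φ r)
            = (∫ r in (0:ℝ)..τ, g r * φ r) + ∫ r in τ..s, g r * φ r := by
        intro s hs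
        exact (intervalIntegral.integral_add_adjacent_intervals
          (ii_of_Icc hgφ ⟨le_refl 0, by norm_num⟩ hτ1)
          (ii_of_Icc hgφ hτ1 ⟨hτ1.1.trans hs.1, hs.2.trans ht.2⟩)).symm
      have hB : (∫ r in (0:ℝ)..τ, g r * φ r) ≤ c * a * G τ := by
        have h1 : (∫ r in (0:ℝ)..τ, g r * φ r) ≤ ∫ r in (0:ℝ)..τ, g r * (c * a) := by
          apply intervalIntegral.integral_mono_on hτ1.1
            (ii_of_Icc hgφ ⟨le_refl 0, by norm_num⟩ hτ1)
            (ii_of_Icc (hgi.mul_const _) ⟨le_refl 0, by norm_num⟩ hτ1)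
          intro s hs
          exact mul_le_mul_of_nonneg_left (hIH s hs) (hg0 s)
        rw [intervalIntegral.integral_mul_const] at h1
        calc (∫ r in (0:ℝ)..τ, g r * φ r) ≤ (∫ r in (0:ℝ)..τ, g r) * (c * a) := h1
          _ = c * a * G τ := by rw [hG]; ring
      set S : ℝ := sSup (φ '' Icc τ t) with hS
      have hne : (φ '' Icc τ t).Nonempty := ⟨φ τ, mem_image_of_mem _ ⟨le_refl τ, hτmem.2⟩⟩
      have hbdd : BddAbove (φ '' Icc τ t) :=
        (isCompact_Icc.image_of_continuousOn
          (hφc.mono (Icc_subset_Icc hτ1.1 ht.2))).bddAbove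
      have hSle : ∀ s ∈ Icc τ t, φ s ≤ S := fun s hs =>
        le_csSup hbdd (mem_image_of_mem _ hs)
      have hS0 : 0 ≤ S := le_trans (hφ0 τ hτ1) (hSle τ ⟨le_refl τ, hτmem.2⟩)
      have hkey : ∀ s ∈ Icc τ t, φ s ≤ a + c * a * ((k:ℝ)/2) + S / 2 := by
        intro s hs
        have hs1 : s ∈ Icc (0:ℝ) 1 := ⟨hτ1.1.trans hs.1, hs.2.trans ht.2⟩
        have h1 := hineq s hs1
        rw [hsplit s hs] at h1
        have h2 : (∫ r in τ..s, g r * φ r) ≤ (∫ r in τ..s, g r) * S := by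
          have := intervalIntegral.integral_mono_on hs.1
            (ii_of_Icc hgφ hτ1 hs1)
            (ii_of_Icc (hgi.mul_const S) hτ1 hs1)
            (fun r hr => mul_le_mul_of_nonneg_left
              (hSle r ⟨hr.1, hr.2.trans hs.2⟩) (hg0 r))
          rwa [intervalIntegral.integral_mul_const] at this
        have h3 : (∫ r in τ..s, g r) = G s - G τ := by
          have hadj := intervalIntegral.integral_add_adjacent_intervals
            (a := 0) (b := τ) (c := s) (f := g) (μ := volume)
            (ii_of_Icc hgi ⟨le_refl 0, by norm_num⟩ hτ1)
            (ii_of_Icc hgi hτ1 hs1)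
          have e1 : G τ = ∫ r in (0:ℝ)..τ, g r := rfl
          have e2 : G s = ∫ r in (0:ℝ)..s, g r := rfl
          rw [e1, e2]; linarith
        have h4 : G s ≤ G t := primitive_mono hgi hg0 hs1.1 hs.2 ht.2
        have h5 : L * ((G s - G τ) * S) ≤ S / 2 := by
          have hL2 : L * (G s - G τ) ≤ 1/2 := by
            nlinarith [mul_le_mul_of_nonneg_left h4 hL.le]
          nlinarith [mul_le_mul_of_nonneg_right hL2 hS0]
        have h6 : L * (∫ r in (0:ℝ)..τ, g r * φ r) ≤ c * a * ((k:ℝ)/2) := by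
          calc L * (∫ r in (0:ℝ)..τ, g r * φ r) ≤ L * (c * a * G τ) :=
                mul_le_mul_of_nonneg_left hB hL.le
            _ = c * a * (L * G τ) := by ring
            _ = c * a * ((k:ℝ)/2) := by rw [hLGτ]
        have h7 : L * (∫ r in τ..s, g r * φ r) ≤ S / 2 := by
          have h2' : (∫ r in τ..s, g r * φ r) ≤ (G s - G τ) * S := by
            rw [← h3]; exact h2
          calc L * (∫ r in τ..s, g r * φ r) ≤ L * ((G s - G τ) * S) :=
                mul_le_mul_of_nonneg_left h2' hL.le
            _ ≤ S / 2 := h5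
        linarith
      have hSb : S ≤ a + c * a * ((k:ℝ)/2) + S / 2 := by
        apply csSup_le hne
        rintro y ⟨s, hs, rfl⟩
        exact hkey s hs
      have hS2 : S ≤ 2 * a + c * a * (k:ℝ) := by linarith
      have hφt : φ t ≤ S := hSle t ⟨hτmem.2, le_refl t⟩
      rw [hRHS]
      have hca : 0 ≤ c * a := mul_nonneg hc0 ha
      nlinarith [mul_nonneg hca (Nat.cast_nonneg (α := ℝ) k),
        mul_le_mul_of_nonneg_right hc1 ha]

lemma gronwall_bound (L : ℝ) (hL : 0 < L) (g : ℝ → ℝ)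
    (hgi : IntegrableOn g (Icc (0:ℝ) 1)) (hg0 : ∀ t, 0 ≤ g t) :
    ∃ K : ℝ, 1 ≤ K ∧ ∀ (φ : ℝ → ℝ) (a : ℝ),
      ContinuousOn φ (Icc (0:ℝ) 1) → (∀ t ∈ Icc (0:ℝ) 1, 0 ≤ φ t) →
      IntegrableOn (fun s => g s * φ s) (Icc (0:ℝ) 1) → 0 ≤ a →
      (∀ t ∈ Icc (0:ℝ) 1, φ t ≤ a + L * ∫ s in (0:ℝ)..t, g s * φ s) →
      ∀ t ∈ Icc (0:ℝ) 1, φ t ≤ K * a := by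
  set k₀ : ℕ := ⌈2 * L * ∫ s in (0:ℝ)..1, g s⌉₊ with hk₀
  refine ⟨3 ^ k₀ * (k₀.factorial : ℝ), ?_, ?_⟩
  · have h1 := one_le_pow₀ (a := (3:ℝ)) (by norm_num) (n := k₀)
    have h2 : (1:ℝ) ≤ (k₀.factorial : ℝ) := by exact_mod_cast k₀.factorial_pos
    nlinarith
  · intro φ a hφc hφ0 hgφ ha hineq t ht
    apply gronwall_step L hL g hgi hg0 φ hφc hφ0 hgφ a ha hineq k₀ t ht
    have h1 : (∫ s in (0:ℝ)..t, g s) ≤ ∫ s in (0:ℝ)..1, g s :=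
      primitive_mono hgi hg0 ht.1 ht.2 (le_refl 1)
    have h2 : 2 * L * (∫ s in (0:ℝ)..1, g s) ≤ (k₀ : ℝ) := Nat.le_ceil _
    nlinarith [mul_le_mul_of_nonneg_left h1 hL.le]

lemma L1_conv {p : ℝ} (hp : 1 ≤ p) (w : ℕ → ℝ → ℝ)
    (hw : ∀ n, IntegrableOn (w n) (Icc (0:ℝ) 1))
    (hwp : ∀ n, IntegrableOn (fun t => |w n t| ^ p) (Icc (0:ℝ) 1))
    (hconv : Tendsto (fun n => ∫ t in (0:ℝ)..1, |w n t| ^ p) atTop (nhds 0)) :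
    Tendsto (fun n => ∫ t in (0:ℝ)..1, |w n t|) atTop (nhds 0) := by
  rw [Metric.tendsto_atTop]
  intro ε hε
  set δ : ℝ := ε / 2 with hδdef
  have hδ : 0 < δ := by positivity
  have hev : ∀ᶠ n in atTop, (∫ t in (0:ℝ)..1, |w n t| ^ p) < δ ^ p :=
    hconv.eventually_lt_const (by positivity)
  obtain ⟨Nb, hNb⟩ := hev.exists_forall_of_atTop
  refine ⟨Nb, fun n hn => ?_⟩
  have h01 : (0:ℝ) ≤ 1 := by norm_num
  have hmono : (∫ t in (0:ℝ)..1, |w n t|)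
      ≤ ∫ t in (0:ℝ)..1, (δ + δ ^ (1 - p) * |w n t| ^ p) := by
    apply intervalIntegral.integral_mono_on h01
      (ii_of_Icc (hw n).abs ⟨le_refl 0, h01⟩ ⟨h01, le_refl 1⟩)
      (ii_of_Icc ((integrableOn_const (by simp) (by simp)).add
        ((hwp n).const_mul _)) ⟨le_refl 0, h01⟩ ⟨h01, le_refl 1⟩)
    exact fun t _ => abs_le_rpow hp hδ (w n t)
  have heq : (∫ t in (0:ℝ)..1, (δ + δ ^ (1 - p) * |w n t| ^ p))
      = δ + δ ^ (1 - p) * ∫ t in (0:ℝ)..1, |w n t| ^ p := by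
    rw [intervalIntegral.integral_add
        (by apply intervalIntegrable_const)
        (((ii_of_Icc (hwp n) ⟨le_refl 0, h01⟩ ⟨h01, le_refl 1⟩)).const_mul _),
      intervalIntegral.integral_const_mul, intervalIntegral.integral_const]
    simp
  have hlt : δ ^ (1 - p) * (∫ t in (0:ℝ)..1, |w n t| ^ p) < δ ^ (1 - p) * δ ^ p :=
    mul_lt_mul_of_pos_left (hNb n hn) (by positivity)
  have hδδ : δ ^ (1 - p) * δ ^ p = δ := by
    rw [← Real.rpow_add hδ]; norm_num
  have hnn : 0 ≤ ∫ t in (0:ℝ)..1, |w n t| :=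
    intervalIntegral.integral_nonneg h01 (fun t _ => abs_nonneg _)
  rw [Real.dist_eq, sub_zero, abs_of_nonneg hnn]
  calc (∫ t in (0:ℝ)..1, |w n t|) ≤ _ := hmono
    _ = δ + δ ^ (1 - p) * ∫ t in (0:ℝ)..1, |w n t| ^ p := heq
    _ < δ + δ := by linarith
    _ = ε := by rw [hδdef]; ring

end St3Aux

open St3Aux

/-- Vector fields `X i : ℝ^N → ℝ^N`, `i = 0, …, d`, globally Lipschitz with
constant `L > 0` and bounded in norm by `C > 0`. Fix `1 ≤ p < ∞`. If `xₙ → x` in `ℝ^N` and the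
controls `uₙ → u` in `L^p([0,1], ℝ^{d+1})`, and `γₙ`, `γ` are the trajectories of `(xₙ, uₙ)`
and `(x, u)` with derivatives `γ̇ₙ(t) = Σᵢ uₙᵢ(t) Xᵢ(γₙ(t))`, `γ̇(t) = Σᵢ uᵢ(t) Xᵢ(γ(t))`,
then `γₙ → γ` uniformly on `[0,1]` and `∫₀¹ |γ̇ₙ − γ̇|^p dt → 0`, i.e. `γₙ → γ` in the
`W^{1,p}` sense. -/
theorem statement3
    (N d : ℕ) (p : ℝ) (hp : 1 ≤ p) (L C : ℝ) (hL : 0 < L) (hC : 0 < C)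
    (X : Fin (d + 1) → EuclideanSpace ℝ (Fin N) → EuclideanSpace ℝ (Fin N))
    (hLip : ∀ i, LipschitzWith L.toNNReal (X i))
    (hBdd : ∀ i x, ‖X i x‖ ≤ C)
    (x : ℕ → EuclideanSpace ℝ (Fin N)) (x₀ : EuclideanSpace ℝ (Fin N))
    (u : ℕ → Fin (d + 1) → ℝ → ℝ) (u₀ : Fin (d + 1) → ℝ → ℝ)
    (hu : ∀ n i, IntegrableOn (u n i) (Icc (0:ℝ) 1))
    (hu₀ : ∀ i, IntegrableOn (u₀ i) (Icc (0:ℝ) 1))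
    (hup : ∀ n i, IntegrableOn (fun t => |u n i t| ^ p) (Icc (0:ℝ) 1))
    (hu₀p : ∀ i, IntegrableOn (fun t => |u₀ i t| ^ p) (Icc (0:ℝ) 1))
    (γ : ℕ → ℝ → EuclideanSpace ℝ (Fin N)) (γ₀ : ℝ → EuclideanSpace ℝ (Fin N))
    (hγc : ∀ n, ContinuousOn (γ n) (Icc (0:ℝ) 1))
    (hγ₀c : ContinuousOn γ₀ (Icc (0:ℝ) 1))
    (hγ : ∀ n, ∀ t ∈ Icc (0:ℝ) 1,
      γ n t = x n + ∫ s in (0:ℝ)..t, ∑ i, u n i s • X i (γ n s))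
    (hγ₀ : ∀ t ∈ Icc (0:ℝ) 1,
      γ₀ t = x₀ + ∫ s in (0:ℝ)..t, ∑ i, u₀ i s • X i (γ₀ s))
    (hx : Tendsto x atTop (nhds x₀))
    (huconv : Tendsto (fun n => ∫ t in (0:ℝ)..1, ∑ i, |u n i t - u₀ i t| ^ p)
      atTop (nhds 0)) :
    Tendsto (fun n => ⨆ t : Icc (0:ℝ) 1, ‖γ n t - γ₀ t‖) atTop (nhds 0) ∧
    Tendsto (fun n => ∫ t in (0:ℝ)..1,
        ‖(∑ i, u n i t • X i (γ n t)) - ∑ i, u₀ i t • X i (γ₀ t)‖ ^ p)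
      atTop (nhds 0) := by
  have hp0 : (0:ℝ) < p := by linarith
  have h01 : (0:ℝ) ≤ 1 := by norm_num
  have h0mem : (0:ℝ) ∈ Icc (0:ℝ) 1 := ⟨le_refl 0, h01⟩
  have h1mem : (1:ℝ) ∈ Icc (0:ℝ) 1 := ⟨h01, le_refl 1⟩
  have hLip' : ∀ i (a b : EuclideanSpace ℝ (Fin N)), ‖X i a - X i b‖ ≤ L * ‖a - b‖ := by
    intro i a b
    have := (hLip i).dist_le_mul a b
    rwa [dist_eq_norm, dist_eq_norm, Real.coe_toNNReal L hL.le] at this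
  have hXc : ∀ i, Continuous (X i) := fun i => (hLip i).continuous
  -- the comparison function g and norms φ
  set g : ℝ → ℝ := fun s => ∑ i, |u₀ i s| with hgdef
  have hg0 : ∀ t, 0 ≤ g t := fun t => Finset.sum_nonneg fun i _ => abs_nonneg _
  have hgi : IntegrableOn g (Icc (0:ℝ) 1) :=
    integrable_finset_sum _ (fun i _ => (hu₀ i).abs)
  set φ : ℕ → ℝ → ℝ := fun n t => ‖γ n t - γ₀ t‖ with hφdef
  have hφc : ∀ n, ContinuousOn (φ n) (Icc (0:ℝ) 1) := fun n => ((hγc n).sub hγ₀c).norm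
  -- integrability of the integrands
  have hfn : ∀ n i, IntegrableOn (fun s => u n i s • X i (γ n s)) (Icc (0:ℝ) 1) := by
    intro n i
    refine Integrable.mono' ((hu n i).abs.const_mul C) ?_ ?_
    · exact ((hu n i).aestronglyMeasurable).smul
        ((hXc i).comp_aestronglyMeasurable ((hγc n).aestronglyMeasurable measurableSet_Icc))
    · refine ae_of_all _ (fun s => ?_)
      rw [norm_smul, Real.norm_eq_abs]
      calc |u n i s| * ‖X i (γ n s)‖ ≤ |u n i s| * C :=
            mul_le_mul_of_nonneg_left (hBdd i _) (abs_nonneg _)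
        _ = C * |u n i s| := mul_comm _ _
  have hf₀ : ∀ i, IntegrableOn (fun s => u₀ i s • X i (γ₀ s)) (Icc (0:ℝ) 1) := by
    intro i
    refine Integrable.mono' ((hu₀ i).abs.const_mul C) ?_ ?_
    · exact ((hu₀ i).aestronglyMeasurable).smul
        ((hXc i).comp_aestronglyMeasurable (hγ₀c.aestronglyMeasurable measurableSet_Icc))
    · refine ae_of_all _ (fun s => ?_)
      rw [norm_smul, Real.norm_eq_abs]
      calc |u₀ i s| * ‖X i (γ₀ s)‖ ≤ |u₀ i s| * C :=
            mul_le_mul_of_nonneg_left (hBdd i _) (abs_nonneg _)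
        _ = C * |u₀ i s| := mul_comm _ _
  have hsumn : ∀ n, IntegrableOn (fun s => ∑ i, u n i s • X i (γ n s)) (Icc (0:ℝ) 1) :=
    fun n => integrable_finset_sum _ (fun i _ => hfn n i)
  have hsum₀ : IntegrableOn (fun s => ∑ i, u₀ i s • X i (γ₀ s)) (Icc (0:ℝ) 1) :=
    integrable_finset_sum _ (fun i _ => hf₀ i)
  have hdiffint : ∀ n, IntegrableOn
      (fun s => (∑ i, u n i s • X i (γ n s)) - ∑ i, u₀ i s • X i (γ₀ s)) (Icc (0:ℝ) 1) :=
    fun n => (hsumn n).sub hsum₀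
  -- g * φ n is integrable
  have hgφ : ∀ n, IntegrableOn (fun s => g s * φ n s) (Icc (0:ℝ) 1) := by
    intro n
    obtain ⟨M, hM⟩ := isCompact_Icc.exists_bound_of_continuousOn (hφc n)
    refine Integrable.mono' (hgi.mul_const |M|) ?_ ?_
    · exact hgi.aestronglyMeasurable.mul ((hφc n).aestronglyMeasurable measurableSet_Icc)
    · rw [ae_restrict_iff' measurableSet_Icc]
      refine ae_of_all _ (fun s hs => ?_)
      rw [Real.norm_eq_abs, abs_mul, abs_of_nonneg (hg0 s)]
      have h1 : |φ n s| ≤ |M| := by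
        have h2 := hM s hs
        rw [Real.norm_eq_abs] at h2
        exact h2.trans (le_abs_self M)
      exact mul_le_mul_of_nonneg_left h1 (hg0 s)
  -- the per-point bound on the difference of the integrands
  have hΔint : ∀ n i, IntegrableOn (fun s => |u n i s - u₀ i s|) (Icc (0:ℝ) 1) :=
    fun n i => ((hu n i).sub (hu₀ i)).abs
  have hD1int : ∀ n, IntegrableOn (fun s => ∑ i, C * |u n i s - u₀ i s|) (Icc (0:ℝ) 1) :=
    fun n => integrable_finset_sum _ (fun i _ => (hΔint n i).const_mul C)
  have hptw : ∀ n, ∀ s ∈ Icc (0:ℝ) 1,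
      ‖(∑ i, u n i s • X i (γ n s)) - ∑ i, u₀ i s • X i (γ₀ s)‖
        ≤ (∑ i, C * |u n i s - u₀ i s|) + L * (g s * φ n s) := by
    intro n s hs
    have hre : (∑ i, u n i s • X i (γ n s)) - (∑ i, u₀ i s • X i (γ₀ s))
        = ∑ i, (u n i s • X i (γ n s) - u₀ i s • X i (γ₀ s)) := by
      rw [Finset.sum_sub_distrib]
    rw [hre]
    calc ‖∑ i, (u n i s • X i (γ n s) - u₀ i s • X i (γ₀ s))‖
        ≤ ∑ i, ‖u n i s • X i (γ n s) - u₀ i s • X i (γ₀ s)‖ := norm_sum_le _ _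
      _ ≤ ∑ i, (C * |u n i s - u₀ i s| + L * (|u₀ i s| * φ n s)) := by
          apply Finset.sum_le_sum
          intro i _
          have hsplit : u n i s • X i (γ n s) - u₀ i s • X i (γ₀ s)
              = (u n i s - u₀ i s) • X i (γ n s)
                + u₀ i s • (X i (γ n s) - X i (γ₀ s)) := by
            rw [sub_smul, smul_sub]; abel
          rw [hsplit]
          calc ‖(u n i s - u₀ i s) • X i (γ n s) + u₀ i s • (X i (γ n s) - X i (γ₀ s))‖
              ≤ ‖(u n i s - u₀ i s) • X i (γ n s)‖
                + ‖u₀ i s • (X i (γ n s) - X i (γ₀ s))‖ := norm_add_le _ _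
            _ ≤ C * |u n i s - u₀ i s| + L * (|u₀ i s| * φ n s) := by
                apply add_le_add
                · rw [norm_smul, Real.norm_eq_abs]
                  calc |u n i s - u₀ i s| * ‖X i (γ n s)‖
                      ≤ |u n i s - u₀ i s| * C :=
                        mul_le_mul_of_nonneg_left (hBdd i _) (abs_nonneg _)
                    _ = C * |u n i s - u₀ i s| := mul_comm _ _
                · rw [norm_smul, Real.norm_eq_abs]
                  calc |u₀ i s| * ‖X i (γ n s) - X i (γ₀ s)‖
                      ≤ |u₀ i s| * (L * ‖γ n s - γ₀ s‖) :=
                        mul_le_mul_of_nonneg_left (hLip' i _ _) (abs_nonneg _)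
                    _ = L * (|u₀ i s| * φ n s) := by rw [hφdef]; ring
      _ = (∑ i, C * |u n i s - u₀ i s|) + L * (g s * φ n s) := by
          have hgs : g s = ∑ i, |u₀ i s| := rfl
          rw [Finset.sum_add_distrib, hgs, Finset.sum_mul, Finset.mul_sum]
  -- the quantity A n
  set A : ℕ → ℝ := fun n => ‖x n - x₀‖ + C * ∑ i, ∫ s in (0:ℝ)..1, |u n i s - u₀ i s|
    with hAdef
  have hA0 : ∀ n, 0 ≤ A n := by
    intro n
    apply add_nonneg (norm_nonneg _)
    apply mul_nonneg hC.le
    exact Finset.sum_nonneg fun i _ =>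
      intervalIntegral.integral_nonneg h01 (fun s _ => abs_nonneg _)
  -- key Grönwall-type integral inequality
  have key : ∀ n, ∀ t ∈ Icc (0:ℝ) 1,
      φ n t ≤ A n + L * ∫ s in (0:ℝ)..t, g s * φ n s := by
    intro n t ht
    have hdiff : γ n t - γ₀ t = (x n - x₀)
        + ∫ s in (0:ℝ)..t, ((∑ i, u n i s • X i (γ n s)) - ∑ i, u₀ i s • X i (γ₀ s)) := by
      rw [hγ n t ht, hγ₀ t ht,
        intervalIntegral.integral_sub (ii_of_Icc (hsumn n) h0mem ht)
          (ii_of_Icc hsum₀ h0mem ht)]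
      abel
    have step1 : φ n t ≤ ‖x n - x₀‖
        + ∫ s in (0:ℝ)..t,
            ‖(∑ i, u n i s • X i (γ n s)) - ∑ i, u₀ i s • X i (γ₀ s)‖ := by
      rw [hφdef]
      calc ‖γ n t - γ₀ t‖ ≤ ‖x n - x₀‖
            + ‖∫ s in (0:ℝ)..t,
                ((∑ i, u n i s • X i (γ n s)) - ∑ i, u₀ i s • X i (γ₀ s))‖ := by
            rw [hdiff]; exact norm_add_le _ _
        _ ≤ _ := by
            gcongr
            exact intervalIntegral.norm_integral_le_integral_norm ht.1
    have step2 : (∫ s in (0:ℝ)..t,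
          ‖(∑ i, u n i s • X i (γ n s)) - ∑ i, u₀ i s • X i (γ₀ s)‖)
        ≤ ∫ s in (0:ℝ)..t, ((∑ i, C * |u n i s - u₀ i s|) + L * (g s * φ n s)) := by
      apply intervalIntegral.integral_mono_on ht.1
        (ii_of_Icc (hdiffint n).norm h0mem ht)
        (ii_of_Icc ((hD1int n).add ((hgφ n).const_mul L)) h0mem ht)
      intro s hs
      exact hptw n s ⟨hs.1, hs.2.trans ht.2⟩
    have step3 : (∫ s in (0:ℝ)..t, ((∑ i, C * |u n i s - u₀ i s|) + L * (g s * φ n s)))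
        = (∫ s in (0:ℝ)..t, ∑ i, C * |u n i s - u₀ i s|)
          + L * ∫ s in (0:ℝ)..t, g s * φ n s := by
      rw [intervalIntegral.integral_add (ii_of_Icc (hD1int n) h0mem ht)
        ((ii_of_Icc (hgφ n) h0mem ht).const_mul L),
        intervalIntegral.integral_const_mul]
    have step4 : (∫ s in (0:ℝ)..t, ∑ i, C * |u n i s - u₀ i s|)
        ≤ C * ∑ i, ∫ s in (0:ℝ)..1, |u n i s - u₀ i s| := by
      have hm : (∫ s in (0:ℝ)..t, ∑ i, C * |u n i s - u₀ i s|)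
          ≤ ∫ s in (0:ℝ)..1, ∑ i, C * |u n i s - u₀ i s| :=
        primitive_mono (hD1int n)
          (fun s => Finset.sum_nonneg fun i _ => mul_nonneg hC.le (abs_nonneg _))
          ht.1 ht.2 (le_refl 1)
      have hcomp : (∫ s in (0:ℝ)..1, ∑ i, C * |u n i s - u₀ i s|)
          = C * ∑ i, ∫ s in (0:ℝ)..1, |u n i s - u₀ i s| := by
        rw [intervalIntegral.integral_finset_sum
          (fun i _ => (ii_of_Icc (hΔint n i) h0mem h1mem).const_mul C)]
        rw [Finset.mul_sum]
        exact Finset.sum_congr rfl fun i _ => intervalIntegral.integral_const_mul _ _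
      rw [hcomp] at hm
      exact hm
    have hAn : A n = ‖x n - x₀‖ + C * ∑ i, ∫ s in (0:ℝ)..1, |u n i s - u₀ i s| := rfl
    have := step2.trans (le_of_eq step3)
    linarith [step1, step4, hAn]
  -- Grönwall bound
  obtain ⟨K, hK1, hKb⟩ := gronwall_bound L hL g hgi hg0
  have hbound : ∀ n, ∀ t ∈ Icc (0:ℝ) 1, φ n t ≤ K * A n := fun n =>
    hKb (φ n) (A n) (hφc n) (fun t _ => norm_nonneg _) (hgφ n) (hA0 n) (key n)
  -- convergence of A n to 0
  have hxconv : Tendsto (fun n => ‖x n - x₀‖) atTop (nhds 0) :=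
    tendsto_iff_norm_sub_tendsto_zero.mp hx
  have hΔp : ∀ n i, IntegrableOn (fun t => |u n i t - u₀ i t| ^ p) (Icc (0:ℝ) 1) := by
    intro n i
    refine Integrable.mono' (((hup n i).add (hu₀p i)).const_mul (2 ^ p)) ?_ ?_
    · exact (continuous_abs.rpow_const (fun y => Or.inr hp0.le)).comp_aestronglyMeasurable
        ((hu n i).sub (hu₀ i)).aestronglyMeasurable
    · refine ae_of_all _ (fun t => ?_)
      rw [Real.norm_eq_abs, abs_of_nonneg (Real.rpow_nonneg (abs_nonneg _) p)]
      calc |u n i t - u₀ i t| ^ p ≤ (|u n i t| + |u₀ i t|) ^ p :=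
            Real.rpow_le_rpow (abs_nonneg _) (abs_sub _ _) hp0.le
        _ ≤ 2 ^ p * (|u n i t| ^ p + |u₀ i t| ^ p) :=
            two_rpow (abs_nonneg _) (abs_nonneg _) hp
  have hPconv : ∀ i, Tendsto (fun n => ∫ t in (0:ℝ)..1, |u n i t - u₀ i t| ^ p)
      atTop (nhds 0) := by
    intro i
    refine squeeze_zero
      (fun n => intervalIntegral.integral_nonneg h01
        (fun t _ => Real.rpow_nonneg (abs_nonneg _) p))
      (fun n => ?_) huconv
    apply intervalIntegral.integral_mono_on h01
      (ii_of_Icc (hΔp n i) h0mem h1mem)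
      (ii_of_Icc (integrable_finset_sum _ fun j _ => hΔp n j) h0mem h1mem)
    intro t _
    exact Finset.single_le_sum (f := fun j => |u n j t - u₀ j t| ^ p)
      (fun j _ => Real.rpow_nonneg (abs_nonneg _) p) (Finset.mem_univ i)
  have hL1conv : ∀ i, Tendsto (fun n => ∫ t in (0:ℝ)..1, |u n i t - u₀ i t|)
      atTop (nhds 0) := fun i =>
    L1_conv hp (fun n t => u n i t - u₀ i t) (fun n => (hu n i).sub (hu₀ i))
      (fun n => hΔp n i) (hPconv i)
  have hAconv : Tendsto A atTop (nhds 0) := by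
    have h2 : Tendsto (fun n => C * ∑ i, ∫ t in (0:ℝ)..1, |u n i t - u₀ i t|)
        atTop (nhds 0) := by
      have hs := tendsto_finset_sum (Finset.univ)
        (fun (i : Fin (d+1)) (_ : i ∈ Finset.univ) => hL1conv i)
      simpa using hs.const_mul C
    have := hxconv.add h2
    simpa [hAdef] using this
  haveI : Nonempty ↥(Icc (0:ℝ) 1) := ⟨⟨0, h0mem⟩⟩
  have conc1 : Tendsto (fun n => ⨆ t : Icc (0:ℝ) 1, ‖γ n t - γ₀ t‖) atTop (nhds 0) := by
    have hub : ∀ n, (⨆ t : Icc (0:ℝ) 1, ‖γ n (t:ℝ) - γ₀ (t:ℝ)‖) ≤ K * A n := by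
      intro n
      exact ciSup_le fun t => hbound n t t.2
    have hKA : Tendsto (fun n => K * A n) atTop (nhds 0) := by
      simpa using hAconv.const_mul K
    exact squeeze_zero (fun n => Real.iSup_nonneg fun t => norm_nonneg _) hub hKA
  refine ⟨conc1, ?_⟩
  -- the W^{1,p} part
  have hLKA0 : ∀ n, 0 ≤ L * (K * A n) := fun n =>
    mul_nonneg hL.le (mul_nonneg (by linarith) (hA0 n))
  set D : ℕ → ℝ → ℝ := fun n t => ((d:ℝ) + 1) ^ p * ∑ i, 2 ^ p *
      (C ^ p * |u n i t - u₀ i t| ^ p + (L * (K * A n)) ^ p * |u₀ i t| ^ p) with hD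
  have hDint : ∀ n, IntegrableOn (D n) (Icc (0:ℝ) 1) := fun n =>
    (integrable_finset_sum _ fun i _ =>
      ((((hΔp n i).const_mul _).add ((hu₀p i).const_mul _)).const_mul _)).const_mul _
  have hptw2 : ∀ n, ∀ t ∈ Icc (0:ℝ) 1,
      ‖(∑ i, u n i t • X i (γ n t)) - ∑ i, u₀ i t • X i (γ₀ t)‖ ^ p ≤ D n t := by
    intro n t ht
    have h1 : ‖(∑ i, u n i t • X i (γ n t)) - ∑ i, u₀ i t • X i (γ₀ t)‖
        ≤ ∑ i, (C * |u n i t - u₀ i t| + (L * (K * A n)) * |u₀ i t|) := by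
      have hφb : φ n t ≤ K * A n := hbound n t ht
      have hsec : L * (g t * φ n t)
          ≤ ∑ i, (L * (K * A n)) * |u₀ i t| := by
        have hgt : g t = ∑ i, |u₀ i t| := rfl
        calc L * (g t * φ n t) ≤ L * (g t * (K * A n)) := by
              apply mul_le_mul_of_nonneg_left _ hL.le
              exact mul_le_mul_of_nonneg_left hφb (hg0 t)
          _ = ∑ i, (L * (K * A n)) * |u₀ i t| := by
              rw [hgt, Finset.sum_mul, Finset.mul_sum]
              exact Finset.sum_congr rfl fun i _ => by ring
      calc ‖(∑ i, u n i t • X i (γ n t)) - ∑ i, u₀ i t • X i (γ₀ t)‖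
          ≤ (∑ i, C * |u n i t - u₀ i t|) + L * (g t * φ n t) := hptw n t ht
        _ ≤ (∑ i, C * |u n i t - u₀ i t|) + ∑ i, (L * (K * A n)) * |u₀ i t| := by
            linarith
        _ = ∑ i, (C * |u n i t - u₀ i t| + (L * (K * A n)) * |u₀ i t|) := by
            rw [Finset.sum_add_distrib]
    have hterm0 : ∀ i : Fin (d+1),
        0 ≤ C * |u n i t - u₀ i t| + (L * (K * A n)) * |u₀ i t| := fun i =>
      add_nonneg (mul_nonneg hC.le (abs_nonneg _))
        (mul_nonneg (hLKA0 n) (abs_nonneg _))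
    have h2 : ‖(∑ i, u n i t • X i (γ n t)) - ∑ i, u₀ i t • X i (γ₀ t)‖ ^ p
        ≤ (∑ i, (C * |u n i t - u₀ i t| + (L * (K * A n)) * |u₀ i t|)) ^ p :=
      Real.rpow_le_rpow (norm_nonneg _) h1 hp0.le
    have h3 := sum_rpow_le (Finset.univ : Finset (Fin (d+1))) Finset.univ_nonempty
      (fun i => C * |u n i t - u₀ i t| + (L * (K * A n)) * |u₀ i t|)
      (fun i _ => hterm0 i) hp
    have hcard : (((Finset.univ : Finset (Fin (d+1))).card : ℝ)) = (d:ℝ) + 1 := by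
      simp
    rw [hcard] at h3
    have h4 : ∀ i : Fin (d+1),
        (C * |u n i t - u₀ i t| + (L * (K * A n)) * |u₀ i t|) ^ p
          ≤ 2 ^ p * (C ^ p * |u n i t - u₀ i t| ^ p
              + (L * (K * A n)) ^ p * |u₀ i t| ^ p) := by
      intro i
      calc (C * |u n i t - u₀ i t| + (L * (K * A n)) * |u₀ i t|) ^ p
          ≤ 2 ^ p * ((C * |u n i t - u₀ i t|) ^ p
              + ((L * (K * A n)) * |u₀ i t|) ^ p) :=
            two_rpow (mul_nonneg hC.le (abs_nonneg _))
              (mul_nonneg (hLKA0 n) (abs_nonneg _)) hp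
        _ = 2 ^ p * (C ^ p * |u n i t - u₀ i t| ^ p
              + (L * (K * A n)) ^ p * |u₀ i t| ^ p) := by
            rw [Real.mul_rpow hC.le (abs_nonneg _),
              Real.mul_rpow (hLKA0 n) (abs_nonneg _)]
    have h5 : (∑ i, (C * |u n i t - u₀ i t| + (L * (K * A n)) * |u₀ i t|) ^ p)
        ≤ ∑ i, 2 ^ p * (C ^ p * |u n i t - u₀ i t| ^ p
            + (L * (K * A n)) ^ p * |u₀ i t| ^ p) :=
      Finset.sum_le_sum fun i _ => h4 i
    have hDval : D n t = ((d:ℝ) + 1) ^ p * ∑ i, 2 ^ p *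
        (C ^ p * |u n i t - u₀ i t| ^ p + (L * (K * A n)) ^ p * |u₀ i t| ^ p) := rfl
    rw [hDval]
    have hm0 : (0:ℝ) ≤ ((d:ℝ) + 1) ^ p := Real.rpow_nonneg (by positivity) p
    calc ‖(∑ i, u n i t • X i (γ n t)) - ∑ i, u₀ i t • X i (γ₀ t)‖ ^ p
        ≤ (∑ i, (C * |u n i t - u₀ i t| + (L * (K * A n)) * |u₀ i t|)) ^ p := h2
      _ ≤ ((d:ℝ) + 1) ^ p
            * ∑ i, (C * |u n i t - u₀ i t| + (L * (K * A n)) * |u₀ i t|) ^ p := h3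
      _ ≤ _ := mul_le_mul_of_nonneg_left h5 hm0
  have hFint : ∀ n, IntegrableOn
      (fun t => ‖(∑ i, u n i t • X i (γ n t)) - ∑ i, u₀ i t • X i (γ₀ t)‖ ^ p)
      (Icc (0:ℝ) 1) := by
    intro n
    refine Integrable.mono' (hDint n) ?_ ?_
    · exact (continuous_id.rpow_const fun y => Or.inr hp0.le).comp_aestronglyMeasurable
        (hdiffint n).aestronglyMeasurable.norm
    · rw [ae_restrict_iff' measurableSet_Icc]
      refine ae_of_all _ (fun t ht => ?_)
      rw [Real.norm_eq_abs, abs_of_nonneg (Real.rpow_nonneg (norm_nonneg _) p)]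
      exact hptw2 n t ht
  have hIle : ∀ n, (∫ t in (0:ℝ)..1,
      ‖(∑ i, u n i t • X i (γ n t)) - ∑ i, u₀ i t • X i (γ₀ t)‖ ^ p)
        ≤ ∫ t in (0:ℝ)..1, D n t := fun n =>
    intervalIntegral.integral_mono_on h01 (ii_of_Icc (hFint n) h0mem h1mem)
      (ii_of_Icc (hDint n) h0mem h1mem) (hptw2 n)
  have hDcalc : ∀ n, (∫ t in (0:ℝ)..1, D n t) = ((d:ℝ) + 1) ^ p * ∑ i, 2 ^ p *
      (C ^ p * (∫ t in (0:ℝ)..1, |u n i t - u₀ i t| ^ p)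
        + (L * (K * A n)) ^ p * ∫ t in (0:ℝ)..1, |u₀ i t| ^ p) := by
    intro n
    have hDfun : D n = fun t => ((d:ℝ) + 1) ^ p * ∑ i, 2 ^ p *
        (C ^ p * |u n i t - u₀ i t| ^ p + (L * (K * A n)) ^ p * |u₀ i t| ^ p) := rfl
    rw [hDfun, intervalIntegral.integral_const_mul]
    congr 1
    rw [intervalIntegral.integral_finset_sum (fun i _ =>
      ((((ii_of_Icc (hΔp n i) h0mem h1mem).const_mul (C ^ p)).add
        ((ii_of_Icc (hu₀p i) h0mem h1mem).const_mul _)).const_mul (2 ^ p)))]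
    refine Finset.sum_congr rfl fun i _ => ?_
    rw [intervalIntegral.integral_const_mul,
      intervalIntegral.integral_add
        ((ii_of_Icc (hΔp n i) h0mem h1mem).const_mul (C ^ p))
        ((ii_of_Icc (hu₀p i) h0mem h1mem).const_mul _),
      intervalIntegral.integral_const_mul, intervalIntegral.integral_const_mul]
  have hDconv : Tendsto (fun n => ∫ t in (0:ℝ)..1, D n t) atTop (nhds 0) := by
    have heq : (fun n => ∫ t in (0:ℝ)..1, D n t) = fun n => ((d:ℝ) + 1) ^ p * ∑ i, 2 ^ p *
        (C ^ p * (∫ t in (0:ℝ)..1, |u n i t - u₀ i t| ^ p)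
          + (L * (K * A n)) ^ p * ∫ t in (0:ℝ)..1, |u₀ i t| ^ p) := funext hDcalc
    rw [heq]
    have hLKAconv : Tendsto (fun n => (L * (K * A n)) ^ p) atTop (nhds 0) := by
      have h1 : Tendsto (fun n => L * (K * A n)) atTop (nhds 0) := by
        simpa using (hAconv.const_mul K).const_mul L
      have h2 := h1.rpow_const (Or.inr hp0.le)
      rwa [Real.zero_rpow hp0.ne'] at h2
    have hterm : ∀ i : Fin (d+1), Tendsto (fun n => 2 ^ p *
        (C ^ p * (∫ t in (0:ℝ)..1, |u n i t - u₀ i t| ^ p)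
          + (L * (K * A n)) ^ p * ∫ t in (0:ℝ)..1, |u₀ i t| ^ p)) atTop (nhds 0) := by
      intro i
      have h1 := (hPconv i).const_mul (C ^ p)
      have h2 := hLKAconv.mul_const (∫ t in (0:ℝ)..1, |u₀ i t| ^ p)
      have h3 := (h1.add h2).const_mul ((2:ℝ) ^ p)
      simpa using h3
    have hs := tendsto_finset_sum (Finset.univ)
      (fun (i : Fin (d+1)) (_ : i ∈ Finset.univ) => hterm i)
    have := hs.const_mul (((d:ℝ) + 1) ^ p)
    simpa using this
  exact squeeze_zero
    (fun n => intervalIntegral.integral_nonneg h01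
      (fun t _ => Real.rpow_nonneg (norm_nonneg _) p))
    hIle hDconv
end

section
/- Fix 1 ≤ p < ∞ and k ∈ ℕ. Let A ⊆ L^p([0,1], ℝ^k) (with the subspace topology of the L^p-norm topology) be a subset containing the zero function and such that for every u ∈ A and every s ∈ [0,1], the truncated function t ↦ u(t)·χ_{[0,1−s]}(t) also belongs to A. Then A is a contractible topological space. -/
open MeasureTheory Filter Set
open scoped ENNReal NNReal unitInterval

namespace Stmt6

noncomputable section

variable (P : ENNReal) [Fact (1 ≤ P)] (k : ℕ)

abbrev μ01 : Measure ℝ := MeasureTheory.volume.restrict (Icc (0:ℝ) 1)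
abbrev LpSp := Lp (EuclideanSpace ℝ (Fin k)) P μ01

/-- Truncation operator on Lp. -/
def trunc (s : ℝ) (u : LpSp P k) : LpSp P k :=
  MemLp.toLp ((Icc (0:ℝ) (1-s)).indicator ⇑u) ((Lp.memLp u).indicator measurableSet_Icc)

lemma trunc_coe (s : ℝ) (u : LpSp P k) :
    ⇑(trunc P k s u) =ᵐ[μ01] (Icc (0:ℝ) (1-s)).indicator ⇑u :=
  MemLp.coeFn_toLp _

lemma trunc_zero (u : LpSp P k) : trunc P k 0 u = u := by
  refine Lp.ext ((trunc_coe P k 0 u).trans ?_)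
  filter_upwards [ae_restrict_mem measurableSet_Icc] with t ht
  simpa using indicator_of_mem ht ⇑u

lemma trunc_one (u : LpSp P k) : trunc P k 1 u = 0 := by
  have hnull : μ01 (Icc (0:ℝ) (1-1)) = 0 := by
    simp only [sub_self, Icc_self]
    refine le_antisymm (le_trans ?_ (le_of_eq (Real.volume_singleton (a := 0)))) zero_le
    rw [Measure.restrict_apply (measurableSet_singleton _)]
    exact measure_mono inter_subset_left
  refine Lp.ext ((trunc_coe P k 1 u).trans ?_)
  have h2 : (Icc (0:ℝ) (1-1)).indicator (⇑u) =ᵐ[μ01] (fun _ => 0) :=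
    (measure_eq_zero_iff_ae_notMem.mp hnull).mono fun t ht => indicator_of_notMem ht _
  exact h2.trans (Lp.coeFn_zero _ _ _).symm

lemma indicator_norm_sub_le (f : ℝ → EuclideanSpace ℝ (Fin k)) (a b x : ℝ) :
    ‖(Icc (0:ℝ) a).indicator f x - (Icc (0:ℝ) b).indicator f x‖
      ≤ ‖(Ioc (min a b) (max a b)).indicator f x‖ := by
  by_cases ha : x ∈ Icc (0:ℝ) a <;> by_cases hb : x ∈ Icc (0:ℝ) b
  · simp [indicator_of_mem, ha, hb]
  · have hx : x ∈ Ioc (min a b) (max a b) :=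
      ⟨lt_of_le_of_lt (min_le_right _ _) (lt_of_not_ge fun h => hb ⟨ha.1, h⟩),
        le_trans ha.2 (le_max_left _ _)⟩
    simp [indicator_of_mem, indicator_of_notMem, ha, hb, hx]
  · have hx : x ∈ Ioc (min a b) (max a b) :=
      ⟨lt_of_le_of_lt (min_le_left _ _) (lt_of_not_ge fun h => ha ⟨hb.1, h⟩),
        le_trans hb.2 (le_max_right _ _)⟩
    simp [indicator_of_mem, indicator_of_notMem, ha, hb, hx]
  · simp [indicator_of_notMem, ha, hb]

lemma continuous_trunc (hP : P ≠ ⊤) :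
    Continuous fun q : ℝ × LpSp P k => trunc P k q.1 q.2 := by
  have h1 : (1:ℝ≥0∞) ≤ P := Fact.out
  rw [Metric.continuous_iff]
  rintro ⟨s₀, u₀⟩ ε hε
  obtain ⟨δ, hδ, hδ'⟩ := (Lp.memLp u₀).eLpNorm_indicator_le h1 hP (half_pos hε)
  refine ⟨min δ (ε/2), lt_min hδ (half_pos hε), ?_⟩
  rintro ⟨s, u⟩ hdist
  rw [Prod.dist_eq, max_lt_iff] at hdist
  have hds : dist s s₀ < δ := lt_of_lt_of_le hdist.1 (min_le_left _ _)
  have hdu : dist u u₀ < ε/2 := lt_of_lt_of_le hdist.2 (min_le_right _ _)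
  have part1 : dist (trunc P k s u) (trunc P k s u₀) ≤ dist u u₀ := by
    rw [Lp.dist_def, Lp.dist_def]
    refine ENNReal.toReal_mono ?_ ?_
    · rw [eLpNorm_congr_ae (Lp.coeFn_sub u u₀).symm]
      exact Lp.eLpNorm_ne_top (u - u₀)
    · calc eLpNorm (⇑(trunc P k s u) - ⇑(trunc P k s u₀)) P μ01
          = eLpNorm ((Icc (0:ℝ) (1-s)).indicator (⇑u - ⇑u₀)) P μ01 := by
            refine eLpNorm_congr_ae ?_
            filter_upwards [trunc_coe P k s u, trunc_coe P k s u₀] with t h1 h2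
            simp only [Pi.sub_apply, h1, h2, Set.indicator_apply]
            split <;> simp
        _ ≤ eLpNorm (⇑u - ⇑u₀) P μ01 := eLpNorm_indicator_le _
  have part2 : dist (trunc P k s u₀) (trunc P k s₀ u₀) ≤ ε/2 := by
    set a := 1 - s with ha
    set b := 1 - s₀ with hb
    have hD : μ01 (Ioc (min a b) (max a b)) ≤ ENNReal.ofReal δ := by
      have hle : μ01 (Ioc (min a b) (max a b))
          ≤ MeasureTheory.volume (Ioc (min a b) (max a b)) := by
        rw [Measure.restrict_apply measurableSet_Ioc]
        exact measure_mono inter_subset_left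
      refine hle.trans ?_
      rw [Real.volume_Ioc, max_sub_min_eq_abs]
      refine ENNReal.ofReal_le_ofReal ?_
      have habs : |a - b| = |s - s₀| := by
        rw [ha, hb, show (1-s) - (1-s₀) = -(s - s₀) by ring, abs_neg]
      rw [abs_sub_comm, habs]
      exact le_of_lt (by rwa [Real.dist_eq] at hds)
    have key : eLpNorm (⇑(trunc P k s u₀) - ⇑(trunc P k s₀ u₀)) P μ01
        ≤ ENNReal.ofReal (ε/2) := by
      calc eLpNorm (⇑(trunc P k s u₀) - ⇑(trunc P k s₀ u₀)) P μ01
          = eLpNorm (fun t => (Icc (0:ℝ) a).indicator (⇑u₀) t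
              - (Icc (0:ℝ) b).indicator (⇑u₀) t) P μ01 := by
            refine eLpNorm_congr_ae ?_
            filter_upwards [trunc_coe P k s u₀, trunc_coe P k s₀ u₀] with t h1 h2
            simp [h1, h2, ha, hb]
        _ ≤ eLpNorm ((Ioc (min a b) (max a b)).indicator (⇑u₀)) P μ01 :=
            eLpNorm_mono fun t => indicator_norm_sub_le k (⇑u₀) a b t
        _ ≤ ENNReal.ofReal (ε/2) := hδ' _ measurableSet_Ioc hD
    rw [Lp.dist_def]
    calc (eLpNorm (⇑(trunc P k s u₀) - ⇑(trunc P k s₀ u₀)) P μ01).toReal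
        ≤ (ENNReal.ofReal (ε/2)).toReal := ENNReal.toReal_mono ENNReal.ofReal_ne_top key
      _ = ε/2 := ENNReal.toReal_ofReal (by positivity)
  calc dist (trunc P k s u) (trunc P k s₀ u₀)
      ≤ dist (trunc P k s u) (trunc P k s u₀) + dist (trunc P k s u₀) (trunc P k s₀ u₀) :=
        dist_triangle _ _ _
    _ < ε/2 + ε/2 := add_lt_add_of_lt_of_le (lt_of_le_of_lt part1 hdu) part2
    _ = ε := add_halves ε

end

end Stmt6

/-- Fix `1 ≤ p < ∞` and `k ∈ ℕ`. Let `A ⊆ L^p([0,1], ℝ^k)` (subspace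
topology of the `L^p`-norm topology) contain the zero function and be stable under
truncation: for every `u ∈ A` and `s ∈ [0,1]` the function `t ↦ u(t)·χ_{[0,1−s]}(t)`
(i.e. any `L^p` element a.e. equal to it) belongs to `A`. Then `A` is contractible. -/
theorem statement6 (p : ℝ) (hp : 1 ≤ p) [Fact (1 ≤ ENNReal.ofReal p)] (k : ℕ)
    (A : Set (Lp (EuclideanSpace ℝ (Fin k)) (ENNReal.ofReal p)
      (volume.restrict (Icc (0:ℝ) 1))))
    (h0 : (0 : Lp (EuclideanSpace ℝ (Fin k)) (ENNReal.ofReal p)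
      (volume.restrict (Icc (0:ℝ) 1))) ∈ A)
    (hTrunc : ∀ u ∈ A, ∀ s ∈ Icc (0:ℝ) 1,
      ∀ v : Lp (EuclideanSpace ℝ (Fin k)) (ENNReal.ofReal p)
        (volume.restrict (Icc (0:ℝ) 1)),
      (∀ᵐ t ∂(volume.restrict (Icc (0:ℝ) 1)),
        v t = (Icc (0:ℝ) (1 - s)).indicator (⇑u) t) → v ∈ A) :
    ContractibleSpace A := by
  have hmem : ∀ (s : unitInterval) (u : A), Stmt6.trunc (ENNReal.ofReal p) k (s:ℝ) (u:_) ∈ A := fun s u =>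
    hTrunc u u.2 s s.2 _ (Stmt6.trunc_coe (ENNReal.ofReal p) k s u)
  rw [contractible_iff_id_nullhomotopic]
  refine ⟨⟨0, h0⟩, ⟨⟨⟨fun q => ⟨Stmt6.trunc (ENNReal.ofReal p) k (q.1:ℝ) (q.2:_), hmem q.1 q.2⟩, ?_⟩, ?_, ?_⟩⟩⟩
  · exact ((Stmt6.continuous_trunc (ENNReal.ofReal p) k ENNReal.ofReal_ne_top).comp
      ((continuous_subtype_val.comp continuous_fst).prodMk
        (continuous_subtype_val.comp continuous_snd))).subtype_mk _
  · intro u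
    exact Subtype.ext (by simpa using Stmt6.trunc_zero (ENNReal.ofReal p) k (u : _))
  · intro u
    exact Subtype.ext (by simpa using Stmt6.trunc_one (ENNReal.ofReal p) k (u : _))
end

section
/- Fix 1 ≤ p < ∞ and k ∈ ℕ. Let (s_n) ⊂ [0,1) with s_n → 0, set φ_n(t) = (t + 1 − s_n)/(4 − 3 s_n) for t ∈ [0,1], and let c_n → c in L^p([0,1], ℝ^k). Then the sequence of functions f_n : [0,1] → [0,∞), f_n(t) = χ_{[1/4,1/2]}(φ_n(t)) · |c_n(φ_n(t)) − c((t+1)/4)|^p, is uniformly integrable on [0,1] with respect to Lebesgue measure. -/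
open MeasureTheory Filter Set
open scoped ENNReal

namespace S7Aux

lemma map_affine (b cc : ℝ) (hb : 0 < b) :
    Measure.map (fun t : ℝ => (t + cc) / b) volume = ENNReal.ofReal b • volume := by
  have h1 : (fun t : ℝ => (t + cc) / b) = (fun x : ℝ => b⁻¹ * x) ∘ (fun t : ℝ => cc + t) := by
    funext t; simp [Function.comp, div_eq_inv_mul, add_comm]
  rw [h1, ← Measure.map_map (measurable_const_mul _) (measurable_const_add _),
    map_add_left_eq_self volume cc, Real.map_volume_mul_left (inv_ne_zero hb.ne'),
    abs_of_pos (by simpa using hb), inv_inv]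

lemma meas_affine (b cc : ℝ) : Measurable (fun t : ℝ => (t + cc) / b) :=
  (measurable_id.add_const cc).div_const b

lemma image_eq (b cc : ℝ) (hb : 0 < b) (A : Set ℝ) :
    (fun t : ℝ => (t + cc) / b) '' A = (fun u : ℝ => u * b - cc) ⁻¹' A := by
  ext u
  constructor
  · rintro ⟨t, ht, rfl⟩
    simpa [div_mul_cancel₀ _ hb.ne'] using ht
  · intro hu
    exact ⟨u * b - cc, hu, by field_simp; ring⟩

lemma image_measurable (b cc : ℝ) (hb : 0 < b) {A : Set ℝ} (hA : MeasurableSet A) :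
    MeasurableSet ((fun t : ℝ => (t + cc) / b) '' A) := by
  rw [image_eq b cc hb]
  exact ((measurable_id.mul_const b).sub_const cc) hA

lemma image_injective (b cc : ℝ) (hb : 0 < b) :
    Function.Injective (fun t : ℝ => (t + cc) / b) := by
  intro x y h
  simp only at h
  rw [div_eq_div_iff hb.ne' hb.ne'] at h
  have := mul_right_cancel₀ hb.ne' h
  linarith

lemma image_volume_le (b cc : ℝ) (hb : 1 ≤ b) {A : Set ℝ} (hA : MeasurableSet A) :
    volume ((fun t : ℝ => (t + cc) / b) '' A) ≤ volume A := by
  have hb0 : (0:ℝ) < b := lt_of_lt_of_le one_pos hb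
  have hmap := map_affine b cc hb0
  have him := image_measurable b cc hb0 hA
  have h1 : (Measure.map (fun t : ℝ => (t + cc) / b) volume) ((fun t : ℝ => (t + cc) / b) '' A)
      = volume A := by
    rw [Measure.map_apply (meas_affine b cc) him,
      Function.Injective.preimage_image (image_injective b cc hb0)]
  rw [hmap] at h1
  simp only [Measure.smul_apply, smul_eq_mul] at h1
  calc volume ((fun t : ℝ => (t + cc) / b) '' A)
      = 1 * volume ((fun t : ℝ => (t + cc) / b) '' A) := (one_mul _).symm
    _ ≤ ENNReal.ofReal b * volume ((fun t : ℝ => (t + cc) / b) '' A) := by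
        gcongr; exact ENNReal.one_le_ofReal.2 hb
    _ = volume A := h1

/-- Change of variables for the lintegral under an affine map; no measurability needed on `g`. -/
lemma cov (b cc : ℝ) (hb : 0 < b) {A : Set ℝ} (hA : MeasurableSet A) (g : ℝ → ℝ≥0∞) :
    ∫⁻ t in A, g ((t + cc) / b) ∂volume
      = ENNReal.ofReal b * ∫⁻ u in (fun t : ℝ => (t + cc) / b) '' A, g u ∂volume := by
  set φ := fun t : ℝ => (t + cc) / b with hφ
  have hinj := image_injective b cc hb
  have him := image_measurable b cc hb hA
  let e : ℝ ≃ᵐ ℝ :=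
    (Homeomorph.addRight cc).toMeasurableEquiv.trans
      ((Homeomorph.mulLeft₀ b⁻¹ (inv_ne_zero hb.ne')).toMeasurableEquiv)
  have he : ⇑e = φ := by
    funext t
    simp [e, Homeomorph.mulLeft₀, φ, div_eq_inv_mul]; rfl
  have key : ∀ h : ℝ → ℝ≥0∞, ∫⁻ t, h (φ t) ∂volume = ENNReal.ofReal b * ∫⁻ u, h u ∂volume := by
    intro h
    have := MeasureTheory.lintegral_map_equiv (μ := volume) h e
    rw [he, map_affine b cc hb] at this
    rw [← this, lintegral_smul_measure, smul_eq_mul]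
  have hind : A.indicator (fun t => g (φ t)) = fun t => ((φ '' A).indicator g) (φ t) := by
    funext t
    by_cases ht : t ∈ A
    · rw [indicator_of_mem ht, indicator_of_mem (mem_image_of_mem φ ht)]
    · rw [indicator_of_notMem ht, indicator_of_notMem]
      intro hmem
      obtain ⟨t', ht', h'⟩ := hmem
      exact ht (hinj h' ▸ ht')
  rw [← lintegral_indicator hA, hind, key ((φ '' A).indicator g), lintegral_indicator him]

lemma mapac (b cc : ℝ) (hb : 0 < b) {A : Set ℝ} (hA : MeasurableSet A)
    (hsub : ∀ t ∈ A, (t + cc) / b ∈ Icc (0:ℝ) 1) :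
    Measure.map (fun t : ℝ => (t + cc) / b) (volume.restrict A)
      ≪ volume.restrict (Icc (0:ℝ) 1) := by
  refine Measure.AbsolutelyContinuous.mk (fun s hs h0 => ?_)
  rw [Measure.restrict_apply hs] at h0
  rw [Measure.map_apply (meas_affine b cc) hs, Measure.restrict_apply (meas_affine b cc hs)]
  have hsub2 : (fun t : ℝ => (t + cc) / b) ⁻¹' s ∩ A
      ⊆ (fun t : ℝ => (t + cc) / b) ⁻¹' (s ∩ Icc (0:ℝ) 1) := by
    rintro t ⟨hts, htA⟩
    exact ⟨hts, hsub t htA⟩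
  refine le_antisymm (le_trans (measure_mono hsub2) ?_) zero_le
  have : (Measure.map (fun t : ℝ => (t + cc) / b) volume) (s ∩ Icc (0:ℝ) 1)
      = volume ((fun t : ℝ => (t + cc) / b) ⁻¹' (s ∩ Icc (0:ℝ) 1)) :=
    Measure.map_apply (meas_affine b cc) (hs.inter measurableSet_Icc)
  rw [map_affine b cc hb] at this
  simp only [Measure.smul_apply, smul_eq_mul, h0, mul_zero] at this
  rw [← this]

lemma comp_aemeas (b cc : ℝ) (hb : 0 < b) {A : Set ℝ} (hA : MeasurableSet A)
    (hsub : ∀ t ∈ A, (t + cc) / b ∈ Icc (0:ℝ) 1) {g : ℝ → ℝ≥0∞}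
    (hg : AEMeasurable g (volume.restrict (Icc (0:ℝ) 1))) :
    AEMeasurable (fun t => g ((t + cc) / b)) (volume.restrict A) :=
  AEMeasurable.comp_aemeasurable (hg.mono_ac (mapac b cc hb hA hsub))
    (meas_affine b cc).aemeasurable

lemma absCont (g : ℝ → ℝ≥0∞) (hg : ∫⁻ u in Icc (0:ℝ) 1, g u ≠ ∞) {η : ℝ} (hη : 0 < η) :
    ∃ δ > (0:ℝ), ∀ B : Set ℝ, MeasurableSet B → B ⊆ Icc (0:ℝ) 1 →
      volume B < ENNReal.ofReal δ → ∫⁻ u in B, g u < ENNReal.ofReal η := by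
  obtain ⟨δ', hδ'pos, hδ'⟩ := exists_pos_setLIntegral_lt_of_measure_lt
    (μ := volume.restrict (Icc (0:ℝ) 1)) (f := g) hg
    (ε := ENNReal.ofReal η) (ENNReal.ofReal_pos.2 hη).ne'
  refine ⟨(min δ' 1).toReal, ?_, fun B hB hBsub hBlt => ?_⟩
  · apply ENNReal.toReal_pos
    · exact (lt_min hδ'pos zero_lt_one).ne'
    · exact ne_top_of_le_ne_top (by simp) (min_le_right _ _)
  · have h1 : (volume.restrict (Icc (0:ℝ) 1)) B < δ' := by
      rw [Measure.restrict_apply hB]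
      calc volume (B ∩ Icc (0:ℝ) 1) ≤ volume B := measure_mono inter_subset_left
        _ < ENNReal.ofReal (min δ' 1).toReal := hBlt
        _ ≤ min δ' 1 := ENNReal.ofReal_toReal_le
        _ ≤ δ' := min_le_left _ _
    have h2 := hδ' B h1
    rwa [Measure.restrict_restrict hB, inter_eq_self_of_subset_left hBsub] at h2

lemma three (p : ℝ) (hp : 0 ≤ p) {x y z : ℝ} (hx : 0 ≤ x) (hy : 0 ≤ y) (hz : 0 ≤ z) :
    (x + y + z) ^ p ≤ 3 ^ p * (x ^ p + y ^ p + z ^ p) := by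
  set M := max x (max y z) with hM
  have hxM : x ≤ M := le_max_left _ _
  have hyM : y ≤ M := le_trans (le_max_left _ _) (le_max_right _ _)
  have hzM : z ≤ M := le_trans (le_max_right _ _) (le_max_right _ _)
  have hM0 : 0 ≤ M := le_trans hx hxM
  have h1 : (x + y + z) ^ p ≤ (3 * M) ^ p :=
    Real.rpow_le_rpow (by positivity) (by linarith) hp
  have h2 : (3 * M) ^ p = 3 ^ p * M ^ p := Real.mul_rpow (by norm_num) hM0
  have h3 : M ^ p ≤ x ^ p + y ^ p + z ^ p := by
    rcases max_choice x (max y z) with h | h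
    · rw [hM, h]
      have := Real.rpow_nonneg hy p
      have := Real.rpow_nonneg hz p
      linarith
    · rcases max_choice y z with h' | h'
      · rw [hM, h, h']
        have := Real.rpow_nonneg hx p
        have := Real.rpow_nonneg hz p
        linarith
      · rw [hM, h, h']
        have := Real.rpow_nonneg hx p
        have := Real.rpow_nonneg hy p
        linarith
  calc (x + y + z) ^ p ≤ 3 ^ p * M ^ p := by rw [← h2]; exact h1
    _ ≤ 3 ^ p * (x ^ p + y ^ p + z ^ p) :=
        mul_le_mul_of_nonneg_left h3 (Real.rpow_nonneg (by norm_num) p)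

variable {E : Type*} [NormedAddCommGroup E]

lemma memLp_int {p : ℝ} (hp : 1 ≤ p) {μ : Measure ℝ} {f : ℝ → E}
    (hf : MemLp f (ENNReal.ofReal p) μ) : Integrable (fun u => ‖f u‖ ^ p) μ := by
  have h0 : (ENNReal.ofReal p) ≠ 0 := by
    simp only [ne_eq, ENNReal.ofReal_eq_zero, not_le]; linarith
  have := hf.integrable_norm_rpow h0 ENNReal.ofReal_ne_top
  rwa [ENNReal.toReal_ofReal (by linarith)] at this

lemma lint_ne_top {p : ℝ} (hp : 1 ≤ p) {μ : Measure ℝ} {f : ℝ → E}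
    (hf : MemLp f (ENNReal.ofReal p) μ) :
    ∫⁻ u, ENNReal.ofReal (‖f u‖ ^ p) ∂μ ≠ ∞ := by
  have h := (memLp_int hp hf).hasFiniteIntegral
  have hle : ∫⁻ u, ENNReal.ofReal (‖f u‖ ^ p) ∂μ ≤ ∫⁻ u, (‖(‖f u‖ ^ p)‖₊ : ℝ≥0∞) ∂μ :=
    lintegral_mono fun u => Real.ofReal_le_enorm _
  exact ne_top_of_le_ne_top h.ne hle

lemma lint_eq_interval {p : ℝ} (hp : 1 ≤ p) {f : ℝ → E}
    (hf : MemLp f (ENNReal.ofReal p) (volume.restrict (Icc (0:ℝ) 1))) :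
    ∫⁻ u in Icc (0:ℝ) 1, ENNReal.ofReal (‖f u‖ ^ p) ∂volume
      = ENNReal.ofReal (∫ t in (0:ℝ)..1, ‖f t‖ ^ p) := by
  have hres : volume.restrict (Icc (0:ℝ) 1) = volume.restrict (Ioc (0:ℝ) 1) :=
    (Measure.restrict_congr_set Ioc_ae_eq_Icc).symm
  have hint : Integrable (fun u => ‖f u‖ ^ p) (volume.restrict (Ioc (0:ℝ) 1)) := by
    have := memLp_int hp hf
    rwa [hres] at this
  rw [intervalIntegral.integral_of_le zero_le_one, hres,
    ofReal_integral_eq_lintegral_ofReal hint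
      (ae_of_all _ fun x => Real.rpow_nonneg (norm_nonneg _) p)]

end S7Aux

/-- Fix `1 ≤ p < ∞` and `k ∈ ℕ`. Let `(sₙ) ⊂ [0,1)` with `sₙ → 0`, set
`φₙ(t) = (t + 1 − sₙ)/(4 − 3 sₙ)`, and let `cₙ → c` in `L^p([0,1], ℝ^k)`. Then the
functions `fₙ(t) = χ_{[1/4,1/2]}(φₙ(t)) · |cₙ(φₙ(t)) − c((t+1)/4)|^p` are uniformly
integrable on `[0,1]`: for every `ε > 0` there is `δ > 0` such that `∫_A fₙ dt < ε` for
every `n` and every measurable `A ⊆ [0,1]` with Lebesgue measure less than `δ`. -/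
theorem statement7 (p : ℝ) (hp : 1 ≤ p) (k : ℕ)
    (s : ℕ → ℝ) (hs : ∀ n, s n ∈ Ico (0:ℝ) 1) (hs0 : Tendsto s atTop (nhds 0))
    (c : ℕ → ℝ → EuclideanSpace ℝ (Fin k)) (c₀ : ℝ → EuclideanSpace ℝ (Fin k))
    (hc : ∀ n, MemLp (c n) (ENNReal.ofReal p) (volume.restrict (Icc (0:ℝ) 1)))
    (hc₀ : MemLp c₀ (ENNReal.ofReal p) (volume.restrict (Icc (0:ℝ) 1)))
    (hconv : Tendsto (fun n => ∫ t in (0:ℝ)..1, ‖c n t - c₀ t‖ ^ p) atTop (nhds 0)) :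
    ∀ ε > 0, ∃ δ > 0, ∀ n, ∀ A : Set ℝ, MeasurableSet A → A ⊆ Icc (0:ℝ) 1 →
      volume A < ENNReal.ofReal δ →
      (∫ t in A,
        (if (t + 1 - s n) / (4 - 3 * s n) ∈ Icc (1/4 : ℝ) (1/2) then (1:ℝ) else 0) *
          ‖c n ((t + 1 - s n) / (4 - 3 * s n)) - c₀ ((t + 1) / 4)‖ ^ p) < ε := by
  intro ε hε
  have hp0 : (0:ℝ) < p := lt_of_lt_of_le one_pos hp
  set C : ℝ := 3 ^ p with hCdef
  have hC : 0 < C := Real.rpow_pos_of_pos (by norm_num) p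
  set η : ℝ := ε / (12 * C + 1) with hηdef
  have hη : 0 < η := div_pos hε (by linarith)
  -- the two reference functions
  set g0 : ℝ → ℝ≥0∞ := fun u => ENNReal.ofReal (‖c₀ u‖ ^ p) with hg0def
  set g1 : ℕ → ℝ → ℝ≥0∞ := fun n u => ENNReal.ofReal (‖c n u - c₀ u‖ ^ p) with hg1def
  have hg0top : ∫⁻ u in Icc (0:ℝ) 1, g0 u ∂volume ≠ ∞ := S7Aux.lint_ne_top hp hc₀
  have hg1top : ∀ n, ∫⁻ u in Icc (0:ℝ) 1, g1 n u ∂volume ≠ ∞ :=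
    fun n => S7Aux.lint_ne_top hp ((hc n).sub hc₀)
  -- N such that for n ≥ N the L^p distance is < η
  obtain ⟨N, hN⟩ := Metric.tendsto_atTop.1 hconv η hη
  -- δ₀ for g0
  obtain ⟨δ0, hδ0pos, hδ0⟩ := S7Aux.absCont g0 hg0top hη
  -- δ for each g1 n
  have hΔex : ∀ n, ∃ δ > (0:ℝ), ∀ B : Set ℝ, MeasurableSet B → B ⊆ Icc (0:ℝ) 1 →
      volume B < ENNReal.ofReal δ → ∫⁻ u in B, g1 n u ∂volume < ENNReal.ofReal η :=
    fun n => S7Aux.absCont (g1 n) (hg1top n) hη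
  choose Δ hΔpos hΔ using hΔex
  set δ1 : ℝ := (Finset.range (N + 1)).inf' Finset.nonempty_range_add_one Δ with hδ1def
  set δ : ℝ := min δ0 δ1 with hδdef
  have hδpos : 0 < δ :=
    lt_min hδ0pos (by rw [hδ1def, Finset.lt_inf'_iff]; exact fun i _ => hΔpos i)
  refine ⟨δ, hδpos, fun n A hA hAsub hAlt => ?_⟩
  -- basic facts about the affine maps
  obtain ⟨hs0n, hs1n⟩ := hs n
  set b : ℝ := 4 - 3 * s n with hbdef
  have hb1 : 1 ≤ b := by rw [hbdef]; linarith
  have hb0 : 0 < b := lt_of_lt_of_le one_pos hb1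
  have hb4 : b ≤ 4 := by rw [hbdef]; linarith
  set cc : ℝ := 1 - s n with hccdef
  have hφmem : ∀ t ∈ A, (t + cc) / b ∈ Icc (0:ℝ) 1 := by
    intro t ht
    obtain ⟨ht0, ht1⟩ := hAsub ht
    constructor
    · apply div_nonneg _ hb0.le
      rw [hccdef]; linarith
    · rw [div_le_one hb0, hccdef, hbdef]; linarith
  have hψmem : ∀ t ∈ A, (t + 1) / 4 ∈ Icc (0:ℝ) 1 := by
    intro t ht
    obtain ⟨ht0, ht1⟩ := hAsub ht
    constructor
    · apply div_nonneg _ (by norm_num); linarith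
    · rw [div_le_one (by norm_num)]; linarith
  have hIsub : Icc (1/4 : ℝ) (1/2) ⊆ Icc (0:ℝ) 1 := by
    intro x hx
    exact ⟨by linarith [hx.1], by linarith [hx.2]⟩
  -- rewrite the integrand into the canonical affine form
  have hrw : ∀ t : ℝ, t + 1 - s n = t + cc := fun t => by rw [hccdef]; ring
  simp only [hrw, ← hbdef]
  set F : ℝ → ℝ := fun t =>
    (if (t + cc) / b ∈ Icc (1/4 : ℝ) (1/2) then (1:ℝ) else 0) *
      ‖c n ((t + cc) / b) - c₀ ((t + 1) / 4)‖ ^ p with hFdef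
  show ∫ t in A, F t < ε
  by_cases hInt : Integrable F (volume.restrict A)
  swap
  · rw [integral_undef hInt]; exact hε
  have hFnn : 0 ≤ᵐ[volume.restrict A] F := by
    refine ae_of_all _ fun t => ?_
    apply mul_nonneg
    · split <;> norm_num
    · exact Real.rpow_nonneg (norm_nonneg _) p
  rw [integral_eq_lintegral_of_nonneg_ae hFnn hInt.aestronglyMeasurable]
  apply ENNReal.toReal_lt_of_lt_ofReal
  -- the three comparison functions
  set U1 : ℝ → ℝ≥0∞ := fun t => (Icc (1/4 : ℝ) (1/2)).indicator (g1 n) ((t + cc) / b) with hU1def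
  set U2 : ℝ → ℝ≥0∞ := fun t => (Icc (1/4 : ℝ) (1/2)).indicator g0 ((t + cc) / b) with hU2def
  set U3 : ℝ → ℝ≥0∞ := fun t => g0 ((t + 1) / 4) with hU3def
  -- pointwise bound
  have key : ∀ t, ENNReal.ofReal (F t)
      ≤ ENNReal.ofReal C * (U1 t + (U2 t + U3 t)) := by
    intro t
    by_cases hm : (t + cc) / b ∈ Icc (1/4 : ℝ) (1/2)
    · set u : ℝ := (t + cc) / b
      set v : ℝ := (t + 1) / 4
      have hreal : F t ≤ C * (‖c n u - c₀ u‖ ^ p + (‖c₀ u‖ ^ p + ‖c₀ v‖ ^ p)) := by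
        have hF : F t = ‖c n u - c₀ v‖ ^ p := by simp only [hFdef]; rw [if_pos hm, one_mul]
        have htri : ‖c n u - c₀ v‖ ≤ ‖c n u - c₀ u‖ + ‖c₀ u‖ + ‖c₀ v‖ := by
          calc ‖c n u - c₀ v‖ = ‖(c n u - c₀ u) + (c₀ u - c₀ v)‖ := by
                rw [sub_add_sub_cancel]
            _ ≤ ‖c n u - c₀ u‖ + ‖c₀ u - c₀ v‖ := norm_add_le _ _
            _ ≤ ‖c n u - c₀ u‖ + (‖c₀ u‖ + ‖c₀ v‖) := by
                have := norm_sub_le (c₀ u) (c₀ v)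
                linarith
            _ = ‖c n u - c₀ u‖ + ‖c₀ u‖ + ‖c₀ v‖ := by ring
        have h1 : ‖c n u - c₀ v‖ ^ p ≤ (‖c n u - c₀ u‖ + ‖c₀ u‖ + ‖c₀ v‖) ^ p :=
          Real.rpow_le_rpow (norm_nonneg _) htri hp0.le
        have h2 := S7Aux.three p hp0.le (norm_nonneg (c n u - c₀ u))
          (norm_nonneg (c₀ u)) (norm_nonneg (c₀ v))
        rw [hF]
        calc ‖c n u - c₀ v‖ ^ p
            ≤ 3 ^ p * (‖c n u - c₀ u‖ ^ p + ‖c₀ u‖ ^ p + ‖c₀ v‖ ^ p) := le_trans h1 h2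
          _ = C * (‖c n u - c₀ u‖ ^ p + (‖c₀ u‖ ^ p + ‖c₀ v‖ ^ p)) := by
              rw [hCdef]; ring
      have hx1 : (0:ℝ) ≤ ‖c n u - c₀ u‖ ^ p := Real.rpow_nonneg (norm_nonneg _) p
      have hx2 : (0:ℝ) ≤ ‖c₀ u‖ ^ p := Real.rpow_nonneg (norm_nonneg _) p
      have hx3 : (0:ℝ) ≤ ‖c₀ v‖ ^ p := Real.rpow_nonneg (norm_nonneg _) p
      calc ENNReal.ofReal (F t)
          ≤ ENNReal.ofReal (C * (‖c n u - c₀ u‖ ^ p + (‖c₀ u‖ ^ p + ‖c₀ v‖ ^ p))) :=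
            ENNReal.ofReal_le_ofReal hreal
        _ = ENNReal.ofReal C * (ENNReal.ofReal (‖c n u - c₀ u‖ ^ p) +
              (ENNReal.ofReal (‖c₀ u‖ ^ p) + ENNReal.ofReal (‖c₀ v‖ ^ p))) := by
            rw [ENNReal.ofReal_mul hC.le, ENNReal.ofReal_add hx1 (add_nonneg hx2 hx3),
              ENNReal.ofReal_add hx2 hx3]
        _ = ENNReal.ofReal C * (U1 t + (U2 t + U3 t)) := by
            rw [hU1def, hU2def, hU3def]
            simp only [indicator_of_mem (show (t + cc) / b ∈ Icc (1/4 : ℝ) (1/2) from hm), hg0def, hg1def]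
            rfl
    · have : F t = 0 := by simp only [hFdef]; rw [if_neg hm, zero_mul]
      rw [this, ENNReal.ofReal_zero]
      exact zero_le
  -- measurability of g0, g1 n on [0,1]
  have hg1m : AEMeasurable (g1 n) (volume.restrict (Icc (0:ℝ) 1)) := by
    rw [hg1def]
    exact (((hc n).aestronglyMeasurable.aemeasurable.sub
      hc₀.aestronglyMeasurable.aemeasurable).norm.pow_const p).ennreal_ofReal
  have hg0m : AEMeasurable g0 (volume.restrict (Icc (0:ℝ) 1)) := by
    rw [hg0def]
    exact (hc₀.aestronglyMeasurable.aemeasurable.norm.pow_const p).ennreal_ofReal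
  have hU1m : AEMeasurable U1 (volume.restrict A) :=
    S7Aux.comp_aemeas b cc hb0 hA hφmem (hg1m.indicator measurableSet_Icc)
  have hU2m : AEMeasurable U2 (volume.restrict A) :=
    S7Aux.comp_aemeas b cc hb0 hA hφmem (hg0m.indicator measurableSet_Icc)
  -- images and their properties
  set B1 : Set ℝ := Icc (1/4 : ℝ) (1/2) ∩ ((fun t : ℝ => (t + cc) / b) '' A) with hB1def
  have hB1meas : MeasurableSet B1 :=
    measurableSet_Icc.inter (S7Aux.image_measurable b cc hb0 hA)
  have hB1sub : B1 ⊆ Icc (0:ℝ) 1 := fun x hx => hIsub hx.1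
  have hB1vol : volume B1 < ENNReal.ofReal δ :=
    lt_of_le_of_lt (le_trans (measure_mono inter_subset_right)
      (S7Aux.image_volume_le b cc hb1 hA)) hAlt
  set B3 : Set ℝ := (fun t : ℝ => (t + 1) / 4) '' A with hB3def
  have hB3meas : MeasurableSet B3 := S7Aux.image_measurable 4 1 (by norm_num) hA
  have hB3sub : B3 ⊆ Icc (0:ℝ) 1 := by
    rw [hB3def, image_subset_iff]
    exact fun t ht => hψmem t ht
  have hB3vol : volume B3 < ENNReal.ofReal δ :=
    lt_of_le_of_lt (S7Aux.image_volume_le 4 1 (by norm_num) hA) hAlt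
  have hδle0 : ENNReal.ofReal δ ≤ ENNReal.ofReal δ0 :=
    ENNReal.ofReal_le_ofReal (min_le_left _ _)
  -- bound for U1
  have hT1 : ∫⁻ t in A, U1 t ∂volume ≤ ENNReal.ofReal 4 * ENNReal.ofReal η := by
    rw [hU1def, S7Aux.cov b cc hb0 hA ((Icc (1/4 : ℝ) (1/2)).indicator (g1 n)),
      lintegral_indicator measurableSet_Icc, Measure.restrict_restrict measurableSet_Icc]
    have hmain : ∫⁻ u in B1, g1 n u ∂volume ≤ ENNReal.ofReal η := by
      rcases le_or_gt N n with hn | hn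
      · have h1 : ∫⁻ u in B1, g1 n u ∂volume ≤ ∫⁻ u in Icc (0:ℝ) 1, g1 n u ∂volume :=
          lintegral_mono' (Measure.restrict_mono hB1sub le_rfl) le_rfl
        have h2 : ∫⁻ u in Icc (0:ℝ) 1, g1 n u ∂volume
            = ENNReal.ofReal (∫ t in (0:ℝ)..1, ‖c n t - c₀ t‖ ^ p) := by
          rw [hg1def]
          exact S7Aux.lint_eq_interval hp ((hc n).sub hc₀)
        have h3 : (∫ t in (0:ℝ)..1, ‖c n t - c₀ t‖ ^ p) ≤ η := by
          have := hN n hn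
          rw [Real.dist_eq, sub_zero] at this
          exact le_of_lt (abs_lt.1 this).2
        exact le_trans h1 (h2 ▸ ENNReal.ofReal_le_ofReal h3)
      · have hmem : n ∈ Finset.range (N + 1) := Finset.mem_range.2 (by omega)
        have hδle : ENNReal.ofReal δ ≤ ENNReal.ofReal (Δ n) :=
          ENNReal.ofReal_le_ofReal (le_trans (min_le_right _ _)
            (Finset.inf'_le Δ hmem))
        exact le_of_lt (hΔ n B1 hB1meas hB1sub (lt_of_lt_of_le hB1vol hδle))
    exact mul_le_mul' (ENNReal.ofReal_le_ofReal hb4) hmain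
  -- bound for U2
  have hT2 : ∫⁻ t in A, U2 t ∂volume ≤ ENNReal.ofReal 4 * ENNReal.ofReal η := by
    rw [hU2def, S7Aux.cov b cc hb0 hA ((Icc (1/4 : ℝ) (1/2)).indicator g0),
      lintegral_indicator measurableSet_Icc, Measure.restrict_restrict measurableSet_Icc]
    have hmain : ∫⁻ u in B1, g0 u ∂volume ≤ ENNReal.ofReal η :=
      le_of_lt (hδ0 B1 hB1meas hB1sub (lt_of_lt_of_le hB1vol hδle0))
    exact mul_le_mul' (ENNReal.ofReal_le_ofReal hb4) hmain
  -- bound for U3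
  have hT3 : ∫⁻ t in A, U3 t ∂volume ≤ ENNReal.ofReal 4 * ENNReal.ofReal η := by
    rw [hU3def, S7Aux.cov 4 1 (by norm_num) hA g0]
    have hmain : ∫⁻ u in B3, g0 u ∂volume ≤ ENNReal.ofReal η :=
      le_of_lt (hδ0 B3 hB3meas hB3sub (lt_of_lt_of_le hB3vol hδle0))
    exact mul_le_mul' le_rfl hmain
  -- assembling
  calc ∫⁻ t in A, ENNReal.ofReal (F t) ∂volume
      ≤ ∫⁻ t in A, ENNReal.ofReal C * (U1 t + (U2 t + U3 t)) ∂volume :=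
        lintegral_mono fun t => key t
    _ = ENNReal.ofReal C * ∫⁻ t in A, (U1 t + (U2 t + U3 t)) ∂volume :=
        lintegral_const_mul' _ _ ENNReal.ofReal_ne_top
    _ = ENNReal.ofReal C * ((∫⁻ t in A, U1 t ∂volume) +
          ((∫⁻ t in A, U2 t ∂volume) + (∫⁻ t in A, U3 t ∂volume))) := by
        rw [lintegral_add_left' hU1m, lintegral_add_left' hU2m]
    _ ≤ ENNReal.ofReal C * (ENNReal.ofReal 4 * ENNReal.ofReal η +
          (ENNReal.ofReal 4 * ENNReal.ofReal η + ENNReal.ofReal 4 * ENNReal.ofReal η)) := by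
        gcongr
    _ = ENNReal.ofReal (C * (4 * η + (4 * η + 4 * η))) := by
        rw [ENNReal.ofReal_mul hC.le, ENNReal.ofReal_add (by positivity) (by positivity),
          ENNReal.ofReal_add (by positivity) (by positivity),
          ENNReal.ofReal_mul (by norm_num)]
    _ < ENNReal.ofReal ε := by
        rw [ENNReal.ofReal_lt_ofReal_iff hε]
        have harith : C * (4 * η + (4 * η + 4 * η)) = ε * (12 * C / (12 * C + 1)) := by
          rw [hηdef]; ring
        rw [harith]
        calc ε * (12 * C / (12 * C + 1)) < ε * 1 := by
              apply mul_lt_mul_of_pos_left _ hε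
              rw [div_lt_one (by linarith)]
              linarith
          _ = ε := mul_one ε
end

section
/- Fix 1 ≤ p < ∞ and k ∈ ℕ. Let (s_n) ⊂ [0,1) with s_n → 0, set φ_n(t) = (t + 1 − s_n)/(4 − 3 s_n), and let c_n → c in L^p([0,1], ℝ^k). Then ∫_{s_n/4}^{1 − s_n/2} |c_n(φ_n(t)) − c((t+1)/4)|^p dt → 0 as n → ∞. -/
open MeasureTheory Filter Set
open scoped ENNReal

private lemma rpow_add4_le {p w x y z : ℝ} (hp : 0 ≤ p) (hw : 0 ≤ w) (hx : 0 ≤ x)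
    (hy : 0 ≤ y) (hz : 0 ≤ z) :
    (w + x + y + z) ^ p ≤ 4 ^ p * (w ^ p + x ^ p + y ^ p + z ^ p) := by
  set M := max (max w x) (max y z) with hM
  have hM0 : 0 ≤ M := le_trans hw ((le_max_left w x).trans (le_max_left _ _))
  have h1 : w + x + y + z ≤ 4 * M := by
    have := le_max_left w x; have := le_max_right w x
    have := le_max_left y z; have := le_max_right y z
    have h1 := (le_max_left w x).trans (le_max_left (max w x) (max y z))
    have h2 := (le_max_right w x).trans (le_max_left (max w x) (max y z))
    have h3 := (le_max_left y z).trans (le_max_right (max w x) (max y z))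
    have h4 := (le_max_right y z).trans (le_max_right (max w x) (max y z))
    linarith
  calc (w + x + y + z) ^ p ≤ (4 * M) ^ p :=
        Real.rpow_le_rpow (by linarith) h1 hp
    _ = 4 ^ p * M ^ p := Real.mul_rpow (by norm_num) hM0
    _ ≤ 4 ^ p * (w ^ p + x ^ p + y ^ p + z ^ p) := by
        have hMcases : M = w ∨ M = x ∨ M = y ∨ M = z := by
          rcases max_choice (max w x) (max y z) with h | h <;>
            rw [hM, h]
          · rcases max_choice w x with h' | h' <;> simp [h']
          · rcases max_choice y z with h' | h' <;> simp [h']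
        have hpow : M ^ p ≤ w ^ p + x ^ p + y ^ p + z ^ p := by
          have nw := Real.rpow_nonneg hw p
          have nx := Real.rpow_nonneg hx p
          have ny := Real.rpow_nonneg hy p
          have nz := Real.rpow_nonneg hz p
          rcases hMcases with h | h | h | h <;> rw [h] <;> linarith
        have : (0:ℝ) ≤ 4 ^ p := Real.rpow_nonneg (by norm_num) p
        nlinarith
private lemma map_affine_volume {a : ℝ} (b : ℝ) (ha : a ≠ 0) :
    Measure.map (fun x => a * x + b) (volume : Measure ℝ)
      = ENNReal.ofReal |a⁻¹| • volume := by
  have h : (fun x : ℝ => a * x + b) = (fun x : ℝ => x + b) ∘ (fun x : ℝ => a * x) := rfl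
  rw [h, ← Measure.map_map (measurable_add_const b) (measurable_const_mul a),
    Real.map_volume_mul_left ha, Measure.map_smul, map_add_right_eq_self]

private lemma qmp_affine {a b : ℝ} (ha : a ≠ 0) {S : Set ℝ}
    (himg : ∀ t ∈ S, a * t + b ∈ Icc (0:ℝ) 1) :
    Measure.QuasiMeasurePreserving (fun t => a * t + b)
      (volume.restrict S) (volume.restrict (Icc (0:ℝ) 1)) := by
  have hmeas : Measurable (fun t : ℝ => a * t + b) :=
    (measurable_id.const_mul a).add_const b
  refine ⟨hmeas, Measure.AbsolutelyContinuous.mk ?_⟩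
  intro A hA h0
  rw [Measure.restrict_apply hA] at h0
  rw [Measure.map_apply hmeas hA, Measure.restrict_apply (hmeas hA)]
  have hsub : (fun t => a * t + b) ⁻¹' A ∩ S ⊆ (fun t => a * t + b) ⁻¹' (A ∩ Icc (0:ℝ) 1) := by
    rintro t ⟨htA, htS⟩
    exact ⟨htA, himg t htS⟩
  refine measure_mono_null hsub ?_
  have : volume ((fun t => a * t + b) ⁻¹' (A ∩ Icc (0:ℝ) 1))
      = Measure.map (fun t => a * t + b) volume (A ∩ Icc (0:ℝ) 1) :=
    (Measure.map_apply hmeas (hA.inter measurableSet_Icc)).symm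
  rw [this, map_affine_volume b ha]
  simp [h0]

private lemma aesm_comp_affine {E : Type*} [TopologicalSpace E] {f : ℝ → E}
    (hf : AEStronglyMeasurable f (volume.restrict (Icc (0:ℝ) 1))) {a b : ℝ} (ha : a ≠ 0)
    {S : Set ℝ} (himg : ∀ t ∈ S, a * t + b ∈ Icc (0:ℝ) 1) :
    AEStronglyMeasurable (fun t => f (a * t + b)) (volume.restrict S) :=
  hf.comp_quasiMeasurePreserving (qmp_affine ha himg)

private lemma intervalIntegrable_comp_affine {f : ℝ → ℝ} {a : ℝ} (ha : a ≠ 0) (b u v : ℝ)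
    (hf : IntervalIntegrable f volume (a * u + b) (a * v + b)) :
    IntervalIntegrable (fun t => f (a * t + b)) volume u v := by
  have h1 := hf.comp_add_right b
  have h2 : IntervalIntegrable (fun x => f (x + b)) volume (a * u) (a * v) := by
    simpa using h1
  have h3 := h2.comp_mul_left (c := a)
  simpa [ne_eq, ha, mul_div_cancel_left₀] using h3

set_option maxHeartbeats 1000000 in

/-- Fix `1 ≤ p < ∞` and `k ∈ ℕ`. Let `(sₙ) ⊂ [0,1)` with `sₙ → 0`, set
`φₙ(t) = (t + 1 − sₙ)/(4 − 3 sₙ)`, and let `cₙ → c` in `L^p([0,1], ℝ^k)`. Then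
`∫_{sₙ/4}^{1 − sₙ/2} |cₙ(φₙ(t)) − c((t+1)/4)|^p dt → 0` as `n → ∞`. -/
theorem statement8 (p : ℝ) (hp : 1 ≤ p) (k : ℕ)
    (s : ℕ → ℝ) (hs : ∀ n, s n ∈ Ico (0:ℝ) 1) (hs0 : Tendsto s atTop (nhds 0))
    (c : ℕ → ℝ → EuclideanSpace ℝ (Fin k)) (c₀ : ℝ → EuclideanSpace ℝ (Fin k))
    (hc : ∀ n, MemLp (c n) (ENNReal.ofReal p) (volume.restrict (Icc (0:ℝ) 1)))
    (hc₀ : MemLp c₀ (ENNReal.ofReal p) (volume.restrict (Icc (0:ℝ) 1)))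
    (hconv : Tendsto (fun n => ∫ t in (0:ℝ)..1, ‖c n t - c₀ t‖ ^ p) atTop (nhds 0)) :
    Tendsto (fun n => ∫ t in (s n / 4)..(1 - s n / 2),
        ‖c n ((t + 1 - s n) / (4 - 3 * s n)) - c₀ ((t + 1) / 4)‖ ^ p)
      atTop (nhds 0) := by
  have hp0 : (0:ℝ) < p := lt_of_lt_of_le one_pos hp
  set q : ℝ≥0∞ := ENNReal.ofReal p with hqdef
  have hq0 : q ≠ 0 := by
    simp only [hqdef, ne_eq, ENNReal.ofReal_eq_zero, not_le]; exact hp0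
  have hqtop : q ≠ ⊤ := ENNReal.ofReal_ne_top
  have hqr : q.toReal = p := ENNReal.toReal_ofReal hp0.le
  have hs0n : ∀ n, 0 ≤ s n := fun n => (hs n).1
  have hs1n : ∀ n, s n < 1 := fun n => (hs n).2
  have ha0 : ∀ n, (0:ℝ) < 4 - 3 * s n := fun n => by nlinarith [hs1n n, hs0n n]
  have hαβ : ∀ n, s n / 4 ≤ 1 - s n / 2 := fun n => by nlinarith [hs1n n, hs0n n]
  -- rewrite integrand into canonical affine form
  have hgoal_eq : ∀ n, (∫ t in (s n / 4)..(1 - s n / 2),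
        ‖c n ((t + 1 - s n) / (4 - 3 * s n)) - c₀ ((t + 1) / 4)‖ ^ p)
      = ∫ t in (s n / 4)..(1 - s n / 2),
        ‖c n ((4 - 3 * s n)⁻¹ * t + (1 - s n) / (4 - 3 * s n)) - c₀ ((4:ℝ)⁻¹ * t + 4⁻¹)‖ ^ p := by
    intro n
    refine intervalIntegral.integral_congr fun t _ => ?_
    have h1 : (t + 1 - s n) / (4 - 3 * s n) = (4 - 3 * s n)⁻¹ * t + (1 - s n) / (4 - 3 * s n) := by
      field_simp; ring
    have h2 : (t + 1) / 4 = (4:ℝ)⁻¹ * t + 4⁻¹ := by ring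
    rw [h1, h2]
  simp only [hgoal_eq]
  -- substitution lemmas
  have hsubφ : ∀ n (h : ℝ → ℝ),
      (∫ t in (s n / 4)..(1 - s n / 2), h ((4 - 3 * s n)⁻¹ * t + (1 - s n) / (4 - 3 * s n)))
        = (4 - 3 * s n) * ∫ u in (1/4 : ℝ)..(1/2 : ℝ), h u := by
    intro n h
    have e1 : (4 - 3 * s n)⁻¹ * (s n / 4) + (1 - s n) / (4 - 3 * s n) = 1/4 := by
      rw [inv_mul_eq_div, ← add_div, div_eq_div_iff (ha0 n).ne' (by norm_num : (4:ℝ) ≠ 0)]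
      ring
    have e2 : (4 - 3 * s n)⁻¹ * (1 - s n / 2) + (1 - s n) / (4 - 3 * s n) = 1/2 := by
      rw [inv_mul_eq_div, ← add_div, div_eq_div_iff (ha0 n).ne' (by norm_num : (2:ℝ) ≠ 0)]
      ring
    rw [intervalIntegral.integral_comp_mul_add h (inv_ne_zero (ha0 n).ne')
      ((1 - s n) / (4 - 3 * s n)), e1, e2, inv_inv, smul_eq_mul]
  have hsubψ : ∀ n (h : ℝ → ℝ),
      (∫ t in (s n / 4)..(1 - s n / 2), h ((4:ℝ)⁻¹ * t + 4⁻¹))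
        = 4 * ∫ u in (1/4 + s n / 16 : ℝ)..(1/2 - s n / 8 : ℝ), h u := by
    intro n h
    have e1 : (4:ℝ)⁻¹ * (s n / 4) + 4⁻¹ = 1/4 + s n / 16 := by ring
    have e2 : (4:ℝ)⁻¹ * (1 - s n / 2) + 4⁻¹ = 1/2 - s n / 8 := by ring
    have h4 : ((4:ℝ)⁻¹)⁻¹ = (4:ℝ) := by norm_num
    rw [intervalIntegral.integral_comp_mul_add h (by norm_num : ((4:ℝ)⁻¹) ≠ 0) 4⁻¹,
      e1, e2, h4, smul_eq_mul]
  -- base integrability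
  have hbase : ∀ n, IntervalIntegrable (fun u => ‖c n u - c₀ u‖ ^ p) volume 0 1 := by
    intro n
    have h := ((hc n).sub hc₀).integrable_norm_rpow hq0 hqtop
    rw [hqr] at h
    have h' : IntegrableOn (fun u => ‖c n u - c₀ u‖ ^ p) (Icc (0:ℝ) 1) volume := by
      simpa [Pi.sub_apply, IntegrableOn] using h
    exact (intervalIntegrable_iff_integrableOn_Ioc_of_le (by norm_num)).2
      (h'.mono_set Ioc_subset_Icc_self)
  set T0 : ℕ → ℝ := fun n => ∫ t in (s n / 4)..(1 - s n / 2),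
      ‖c n ((4 - 3 * s n)⁻¹ * t + (1 - s n) / (4 - 3 * s n))
        - c₀ ((4 - 3 * s n)⁻¹ * t + (1 - s n) / (4 - 3 * s n))‖ ^ p with hT0def
  have hT0eq : ∀ n, T0 n = (4 - 3 * s n) * ∫ u in (1/4:ℝ)..(1/2:ℝ), ‖c n u - c₀ u‖ ^ p :=
    fun n => hsubφ n (fun u => ‖c n u - c₀ u‖ ^ p)
  have hT0nonneg : ∀ n, 0 ≤ T0 n := fun n =>
    intervalIntegral.integral_nonneg (hαβ n) (fun t _ => Real.rpow_nonneg (norm_nonneg _) p)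
  have hmid_nonneg : ∀ n, 0 ≤ ∫ u in (1/4:ℝ)..(1/2:ℝ), ‖c n u - c₀ u‖ ^ p := fun n =>
    intervalIntegral.integral_nonneg (by norm_num) (fun t _ => Real.rpow_nonneg (norm_nonneg _) p)
  have hmid_le : ∀ n, (∫ u in (1/4:ℝ)..(1/2:ℝ), ‖c n u - c₀ u‖ ^ p)
      ≤ ∫ u in (0:ℝ)..1, ‖c n u - c₀ u‖ ^ p := fun n =>
    intervalIntegral.integral_mono_interval (by norm_num) (by norm_num) (by norm_num)
      (ae_of_all _ fun t => Real.rpow_nonneg (norm_nonneg _) p) (hbase n)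
  have hT0tendsto : Tendsto T0 atTop (nhds 0) := by
    have hbd : ∀ n, T0 n ≤ 4 * ∫ u in (0:ℝ)..1, ‖c n u - c₀ u‖ ^ p := by
      intro n
      rw [hT0eq n]
      nlinarith [hmid_le n, hmid_nonneg n, hs0n n, mul_nonneg (hs0n n) (hmid_nonneg n)]
    have h4 : Tendsto (fun n => 4 * ∫ u in (0:ℝ)..1, ‖c n u - c₀ u‖ ^ p) atTop (nhds 0) := by
      simpa using hconv.const_mul 4
    exact squeeze_zero hT0nonneg hbd h4
  -- the indicator extension
  set f' : ℝ → EuclideanSpace ℝ (Fin k) := (Icc (0:ℝ) 1).indicator c₀ with hf'def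
  have hf'mem : MemLp f' q volume := (memLp_indicator_iff_restrict measurableSet_Icc).2 hc₀
  have hf'eq : ∀ u ∈ Icc (0:ℝ) 1, f' u = c₀ u := fun u hu => indicator_of_mem hu c₀
  have hsub01 : Icc (1/4:ℝ) (1/2) ⊆ Icc (0:ℝ) 1 := Icc_subset_Icc (by norm_num) (by norm_num)
  have hφmem : ∀ n, ∀ t ∈ Icc (s n / 4) (1 - s n / 2),
      (4 - 3 * s n)⁻¹ * t + (1 - s n) / (4 - 3 * s n) ∈ Icc (1/4:ℝ) (1/2) := by
    intro n t ht
    have ha := ha0 n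
    have h1 : (4 - 3 * s n)⁻¹ * t + (1 - s n) / (4 - 3 * s n) = (t + 1 - s n) / (4 - 3 * s n) := by
      rw [inv_mul_eq_div, ← add_div]
      congr 1
      ring
    rw [h1]
    constructor
    · rw [le_div_iff₀ ha]; linarith [ht.1]
    · rw [div_le_iff₀ ha]; linarith [ht.2]
  have hψmem : ∀ n, ∀ t ∈ Icc (s n / 4) (1 - s n / 2),
      (4:ℝ)⁻¹ * t + 4⁻¹ ∈ Icc (1/4:ℝ) (1/2) := by
    intro n t ht
    constructor <;> nlinarith [ht.1, ht.2, hs0n n]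
  -- main ε-argument
  have hrp_nonneg : ∀ x : EuclideanSpace ℝ (Fin k), (0:ℝ) ≤ ‖x‖ ^ p :=
    fun x => Real.rpow_nonneg (norm_nonneg _) p
  rw [Metric.tendsto_atTop]
  intro ε hε
  set K : ℝ := 4 ^ p with hKdef
  have hK : 0 < K := Real.rpow_pos_of_pos (by norm_num) p
  set δ : ℝ := ε / (32 * K) with hδdef
  have hδ : 0 < δ := div_pos hε (by positivity)
  obtain ⟨g, gsupp, hgs, gcont, gmem⟩ :=
    hf'mem.exists_hasCompactSupport_eLpNorm_sub_le hqtop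
      (ε := ENNReal.ofReal (δ ^ p⁻¹)) (by
        simp only [ne_eq, ENNReal.ofReal_eq_zero, not_le]
        exact Real.rpow_pos_of_pos hδ _)
  set D : ℝ := ∫ x, ‖f' x - g x‖ ^ p with hDdef
  have hmemsub : MemLp (f' - g) q volume := hf'mem.sub gmem
  have hDint : Integrable (fun x => ‖f' x - g x‖ ^ p) volume := by
    have h := hmemsub.integrable_norm_rpow hq0 hqtop
    rw [hqr] at h
    simpa [Pi.sub_apply] using h
  have hDnonneg : 0 ≤ D := integral_nonneg fun x => hrp_nonneg _
  have hDle : D ≤ δ := by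
    have heq := hmemsub.eLpNorm_eq_integral_rpow_norm hq0 hqtop
    rw [hqr] at heq
    rw [heq] at hgs
    have h2 : (∫ a, ‖(f' - g) a‖ ^ p) = D := by simp only [hDdef, Pi.sub_apply]
    rw [h2] at hgs
    have h1 : (D ^ p⁻¹ : ℝ) ≤ δ ^ p⁻¹ :=
      (ENNReal.ofReal_le_ofReal_iff (Real.rpow_nonneg hδ.le _)).1 hgs
    calc D = (D ^ p⁻¹) ^ p := (Real.rpow_inv_rpow hDnonneg hp0.ne').symm
      _ ≤ (δ ^ p⁻¹) ^ p := Real.rpow_le_rpow (Real.rpow_nonneg hDnonneg _) h1 hp0.le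
      _ = δ := Real.rpow_inv_rpow hδ.le hp0.ne' 
  -- uniform continuity of g
  have hgu : UniformContinuous g := gsupp.uniformContinuous_of_continuous gcont
  set κ : ℝ := (ε / (4 * K)) ^ p⁻¹ with hκdef
  have hκpos : 0 < κ := Real.rpow_pos_of_pos (div_pos hε (by positivity)) _
  obtain ⟨d, hd0, hdimp⟩ := Metric.uniformContinuous_iff.1 hgu κ hκpos
  have hκp : κ ^ p = ε / (4 * K) := Real.rpow_inv_rpow (by positivity) hp0.ne'
  have hIIfg : ∀ u v : ℝ, IntervalIntegrable (fun x => ‖f' x - g x‖ ^ p) volume u v :=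
    fun u v => hDint.intervalIntegrable
  have hfgle : ∀ u v : ℝ, u ≤ v → (∫ x in u..v, ‖f' x - g x‖ ^ p) ≤ D := by
    intro u v huv
    rw [intervalIntegral.integral_of_le huv]
    exact setIntegral_le_integral hDint (ae_of_all _ fun x => hrp_nonneg _)
  have hfgnn : ∀ u v : ℝ, u ≤ v → 0 ≤ ∫ x in u..v, ‖f' x - g x‖ ^ p := fun u v huv =>
    intervalIntegral.integral_nonneg huv fun x _ => hrp_nonneg _
  have hev1 : ∀ᶠ n in atTop, T0 n < ε / (4 * K) :=
    hT0tendsto.eventually_lt_const (by positivity)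
  have hev2 : ∀ᶠ n in atTop, s n < 2 * d := hs0.eventually_lt_const (by positivity)
  obtain ⟨N, hN⟩ := eventually_atTop.1 (hev1.and hev2)
  refine ⟨N, fun n hn => ?_⟩
  obtain ⟨hT0small, hssmall⟩ := hN n hn
  have ha := ha0 n
  have hαβn := hαβ n
  set A : ℝ := (4 - 3 * s n)⁻¹ with hAdef
  set B : ℝ := (1 - s n) / (4 - 3 * s n) with hBdef
  have hAne : A ≠ 0 := inv_ne_zero ha.ne'
  have himgφ : ∀ t ∈ Ioc (s n / 4) (1 - s n / 2), A * t + B ∈ Icc (0:ℝ) 1 :=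
    fun t ht => hsub01 (hφmem n t (Ioc_subset_Icc_self ht))
  have himgψ : ∀ t ∈ Ioc (s n / 4) (1 - s n / 2), (4:ℝ)⁻¹ * t + 4⁻¹ ∈ Icc (0:ℝ) 1 :=
    fun t ht => hsub01 (hψmem n t (Ioc_subset_Icc_self ht))
  have huIcc : uIcc (1/4:ℝ) (1/2) ⊆ uIcc (0:ℝ) 1 := by
    rw [uIcc_of_le (by norm_num : (1/4:ℝ) ≤ 1/2), uIcc_of_le (by norm_num : (0:ℝ) ≤ 1)]
    exact Icc_subset_Icc (by norm_num) (by norm_num)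
  have he1 : A * (s n / 4) + B = 1/4 := by
    rw [hAdef, hBdef, inv_mul_eq_div, ← add_div,
      div_eq_div_iff ha.ne' (by norm_num : (4:ℝ) ≠ 0)]
    ring
  have he2 : A * (1 - s n / 2) + B = 1/2 := by
    rw [hAdef, hBdef, inv_mul_eq_div, ← add_div,
      div_eq_div_iff ha.ne' (by norm_num : (2:ℝ) ≠ 0)]
    ring
  -- interval integrability of the four pieces
  have hII1 : IntervalIntegrable (fun t => ‖c n (A*t+B) - c₀ (A*t+B)‖ ^ p)
      volume (s n/4) (1 - s n/2) := by
    refine intervalIntegrable_comp_affine (f := fun u => ‖c n u - c₀ u‖ ^ p) hAne B _ _ ?_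
    rw [he1, he2]
    exact (hbase n).mono_set huIcc
  have hII2 : IntervalIntegrable (fun t => ‖f' (A*t+B) - g (A*t+B)‖ ^ p)
      volume (s n/4) (1 - s n/2) := by
    refine intervalIntegrable_comp_affine (f := fun u => ‖f' u - g u‖ ^ p) hAne B _ _ ?_
    exact hIIfg _ _
  have hcontφ : Continuous fun t : ℝ => A * t + B := (continuous_const.mul continuous_id).add continuous_const
  have hcontψ : Continuous fun t : ℝ => (4:ℝ)⁻¹ * t + 4⁻¹ := (continuous_const.mul continuous_id).add continuous_const
  have hII3 : IntervalIntegrable (fun t => ‖g (A*t+B) - g ((4:ℝ)⁻¹*t+4⁻¹)‖ ^ p)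
      volume (s n/4) (1 - s n/2) :=
    (((gcont.comp hcontφ).sub (gcont.comp hcontψ)).norm.rpow_const
      (fun x => Or.inr hp0.le)).intervalIntegrable _ _
  have hII4 : IntervalIntegrable (fun t => ‖g ((4:ℝ)⁻¹*t+4⁻¹) - f' ((4:ℝ)⁻¹*t+4⁻¹)‖ ^ p)
      volume (s n/4) (1 - s n/2) := by
    refine intervalIntegrable_comp_affine (f := fun u => ‖g u - f' u‖ ^ p)
      (by norm_num : ((4:ℝ)⁻¹) ≠ 0) 4⁻¹ _ _ ?_
    have : (fun u => ‖g u - f' u‖ ^ p) = fun u => ‖f' u - g u‖ ^ p :=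
      funext fun u => by rw [norm_sub_rev]
    rw [this]
    exact hIIfg _ _
  -- bounds on the three error pieces
  have hI2bd : (∫ t in (s n/4)..(1 - s n/2), ‖f' (A*t+B) - g (A*t+B)‖ ^ p) ≤ 4 * δ := by
    have hsubst := hsubφ n (fun u => ‖f' u - g u‖ ^ p)
    rw [← hAdef, ← hBdef] at hsubst
    rw [hsubst]
    have h1 := hfgle (1/4:ℝ) (1/2:ℝ) (by norm_num)
    have h2 := hfgnn (1/4:ℝ) (1/2:ℝ) (by norm_num)
    nlinarith [hs0n n, mul_nonneg (hs0n n) h2, le_trans h1 hDle]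
  have hI4bd : (∫ t in (s n/4)..(1 - s n/2),
      ‖g ((4:ℝ)⁻¹*t+4⁻¹) - f' ((4:ℝ)⁻¹*t+4⁻¹)‖ ^ p) ≤ 4 * δ := by
    have hsubst := hsubψ n (fun u => ‖g u - f' u‖ ^ p)
    rw [hsubst]
    have hcongr : (∫ u in (1/4 + s n/16 : ℝ)..(1/2 - s n/8 : ℝ), ‖g u - f' u‖ ^ p)
        = ∫ u in (1/4 + s n/16 : ℝ)..(1/2 - s n/8 : ℝ), ‖f' u - g u‖ ^ p :=
      intervalIntegral.integral_congr fun u _ => by rw [norm_sub_rev]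
    rw [hcongr]
    have hle' : (1/4 + s n/16 : ℝ) ≤ 1/2 - s n/8 := by linarith [hs1n n, hs0n n]
    have h1 := hfgle _ _ hle'
    linarith [le_trans h1 hDle]
  have hI3bd : (∫ t in (s n/4)..(1 - s n/2),
      ‖g (A*t+B) - g ((4:ℝ)⁻¹*t+4⁻¹)‖ ^ p) ≤ ε / (4*K) := by
    have hpt3 : ∀ t ∈ Icc (s n/4) (1 - s n/2),
        ‖g (A*t+B) - g ((4:ℝ)⁻¹*t+4⁻¹)‖ ^ p ≤ κ ^ p := by
      intro t ht
      have ht0 : 0 ≤ t := le_trans (by nlinarith [hs0n n] : (0:ℝ) ≤ s n/4) ht.1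
      have ht1 : t ≤ 1 := le_trans ht.2 (by nlinarith [hs0n n])
      have hdiff : (A*t+B) - ((4:ℝ)⁻¹*t+4⁻¹) = s n * (3*t - 1)/(4*(4 - 3*s n)) := by
        rw [hAdef, hBdef]
        field_simp
        ring
      have h3t : |3*t - 1| ≤ 2 := by
        rw [abs_le]; constructor <;> linarith
      have habs : |(A*t+B) - ((4:ℝ)⁻¹*t+4⁻¹)| ≤ s n / 2 := by
        rw [hdiff, abs_div, abs_of_pos (by linarith : (0:ℝ) < 4*(4-3*s n)), abs_mul,
          abs_of_nonneg (hs0n n), div_le_iff₀ (by linarith : (0:ℝ) < 4*(4-3*s n))]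
        nlinarith [mul_le_mul_of_nonneg_left h3t (hs0n n),
          mul_nonneg (hs0n n) (sub_nonneg.2 (hs1n n).le), hs0n n]
      have hdist : dist (A*t+B) ((4:ℝ)⁻¹*t+4⁻¹) < d := by
        rw [Real.dist_eq]; linarith
      have hnorm : ‖g (A*t+B) - g ((4:ℝ)⁻¹*t+4⁻¹)‖ ≤ κ := by
        rw [← dist_eq_norm]; exact (hdimp hdist).le
      exact Real.rpow_le_rpow (norm_nonneg _) hnorm hp0.le
    have hmono3 := intervalIntegral.integral_mono_on hαβn hII3
      (intervalIntegrable_const) hpt3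
    rw [intervalIntegral.integral_const, smul_eq_mul] at hmono3
    have hkp : 0 ≤ κ ^ p := (Real.rpow_pos_of_pos hκpos p).le
    calc (∫ t in (s n/4)..(1 - s n/2), ‖g (A*t+B) - g ((4:ℝ)⁻¹*t+4⁻¹)‖ ^ p)
        ≤ (1 - s n/2 - s n/4) * κ^p := hmono3
      _ ≤ 1 * κ^p := by nlinarith [hs0n n]
      _ = ε/(4*K) := by rw [one_mul, hκp]
  -- pointwise estimate
  have hpt : ∀ t ∈ Icc (s n/4) (1 - s n/2),
      ‖c n (A*t+B) - c₀ ((4:ℝ)⁻¹*t+4⁻¹)‖ ^ p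
        ≤ K * (‖c n (A*t+B) - c₀ (A*t+B)‖ ^ p + ‖f' (A*t+B) - g (A*t+B)‖ ^ p
          + ‖g (A*t+B) - g ((4:ℝ)⁻¹*t+4⁻¹)‖ ^ p
          + ‖g ((4:ℝ)⁻¹*t+4⁻¹) - f' ((4:ℝ)⁻¹*t+4⁻¹)‖ ^ p) := by
    intro t ht
    have hm1 : A*t+B ∈ Icc (0:ℝ) 1 := hsub01 (hφmem n t ht)
    have hm2 : (4:ℝ)⁻¹*t+4⁻¹ ∈ Icc (0:ℝ) 1 := hsub01 (hψmem n t ht)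
    have hdecomp : c n (A*t+B) - c₀ ((4:ℝ)⁻¹*t+4⁻¹)
        = (c n (A*t+B) - c₀ (A*t+B)) + (f' (A*t+B) - g (A*t+B))
          + (g (A*t+B) - g ((4:ℝ)⁻¹*t+4⁻¹)) + (g ((4:ℝ)⁻¹*t+4⁻¹) - f' ((4:ℝ)⁻¹*t+4⁻¹)) := by
      rw [hf'eq _ hm1, hf'eq _ hm2]
      abel
    have hnorm : ‖c n (A*t+B) - c₀ ((4:ℝ)⁻¹*t+4⁻¹)‖
        ≤ ‖c n (A*t+B) - c₀ (A*t+B)‖ + ‖f' (A*t+B) - g (A*t+B)‖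
          + ‖g (A*t+B) - g ((4:ℝ)⁻¹*t+4⁻¹)‖ + ‖g ((4:ℝ)⁻¹*t+4⁻¹) - f' ((4:ℝ)⁻¹*t+4⁻¹)‖ := by
      rw [hdecomp]
      have n1 := norm_add_le ((c n (A*t+B) - c₀ (A*t+B)) + (f' (A*t+B) - g (A*t+B))
        + (g (A*t+B) - g ((4:ℝ)⁻¹*t+4⁻¹))) (g ((4:ℝ)⁻¹*t+4⁻¹) - f' ((4:ℝ)⁻¹*t+4⁻¹))
      have n2 := norm_add_le ((c n (A*t+B) - c₀ (A*t+B)) + (f' (A*t+B) - g (A*t+B)))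
        (g (A*t+B) - g ((4:ℝ)⁻¹*t+4⁻¹))
      have n3 := norm_add_le (c n (A*t+B) - c₀ (A*t+B)) (f' (A*t+B) - g (A*t+B))
      linarith
    calc ‖c n (A*t+B) - c₀ ((4:ℝ)⁻¹*t+4⁻¹)‖ ^ p
        ≤ (‖c n (A*t+B) - c₀ (A*t+B)‖ + ‖f' (A*t+B) - g (A*t+B)‖
          + ‖g (A*t+B) - g ((4:ℝ)⁻¹*t+4⁻¹)‖
          + ‖g ((4:ℝ)⁻¹*t+4⁻¹) - f' ((4:ℝ)⁻¹*t+4⁻¹)‖) ^ p :=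
          Real.rpow_le_rpow (norm_nonneg _) hnorm hp0.le
      _ ≤ 4 ^ p * (‖c n (A*t+B) - c₀ (A*t+B)‖ ^ p + ‖f' (A*t+B) - g (A*t+B)‖ ^ p
          + ‖g (A*t+B) - g ((4:ℝ)⁻¹*t+4⁻¹)‖ ^ p
          + ‖g ((4:ℝ)⁻¹*t+4⁻¹) - f' ((4:ℝ)⁻¹*t+4⁻¹)‖ ^ p) :=
          rpow_add4_le hp0.le (norm_nonneg _) (norm_nonneg _) (norm_nonneg _) (norm_nonneg _)
      _ = K * _ := by rw [hKdef]
  -- integrability of the left-hand side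
  have haesm1 : AEStronglyMeasurable (fun t => c n (A*t+B))
      (volume.restrict (Ioc (s n/4) (1 - s n/2))) :=
    aesm_comp_affine (hc n).aestronglyMeasurable hAne himgφ
  have haesm2 : AEStronglyMeasurable (fun t => c₀ ((4:ℝ)⁻¹*t+4⁻¹))
      (volume.restrict (Ioc (s n/4) (1 - s n/2))) :=
    aesm_comp_affine hc₀.aestronglyMeasurable (by norm_num : ((4:ℝ)⁻¹) ≠ 0) himgψ
  have haesm : AEStronglyMeasurable (fun t => ‖c n (A*t+B) - c₀ ((4:ℝ)⁻¹*t+4⁻¹)‖ ^ p)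
      (volume.restrict (Ioc (s n/4) (1 - s n/2))) :=
    ((haesm1.sub haesm2).norm.aemeasurable.pow_const p).aestronglyMeasurable
  have hIIRHS := (((hII1.add hII2).add hII3).add hII4).const_mul K
  have hLHSII : IntervalIntegrable (fun t => ‖c n (A*t+B) - c₀ ((4:ℝ)⁻¹*t+4⁻¹)‖ ^ p)
      volume (s n/4) (1 - s n/2) := by
    rw [intervalIntegrable_iff_integrableOn_Ioc_of_le hαβn]
    refine Integrable.mono' hIIRHS.1 haesm ?_
    refine (ae_restrict_iff' measurableSet_Ioc).2 (ae_of_all _ fun t ht => ?_)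
    rw [Real.norm_eq_abs, abs_of_nonneg (hrp_nonneg _)]
    exact hpt t (Ioc_subset_Icc_self ht)
  have hGnonneg : 0 ≤ ∫ t in (s n/4)..(1 - s n/2),
      ‖c n (A*t+B) - c₀ ((4:ℝ)⁻¹*t+4⁻¹)‖ ^ p :=
    intervalIntegral.integral_nonneg hαβn fun t _ => hrp_nonneg _
  have hmono := intervalIntegral.integral_mono_on hαβn hLHSII hIIRHS hpt
  rw [intervalIntegral.integral_const_mul,
    intervalIntegral.integral_add ((hII1.add hII2).add hII3) hII4,
    intervalIntegral.integral_add (hII1.add hII2) hII3,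
    intervalIntegral.integral_add hII1 hII2] at hmono
  have hT0id : (∫ t in (s n/4)..(1 - s n/2), ‖c n (A*t+B) - c₀ (A*t+B)‖ ^ p) = T0 n := by
    simp only [hT0def]
    rfl
  rw [hT0id] at hmono
  rw [Real.dist_eq, sub_zero, abs_of_nonneg hGnonneg]
  have hsum : T0 n + (∫ t in (s n/4)..(1 - s n/2), ‖f' (A*t+B) - g (A*t+B)‖ ^ p)
      + (∫ t in (s n/4)..(1 - s n/2), ‖g (A*t+B) - g ((4:ℝ)⁻¹*t+4⁻¹)‖ ^ p)
      + (∫ t in (s n/4)..(1 - s n/2), ‖g ((4:ℝ)⁻¹*t+4⁻¹) - f' ((4:ℝ)⁻¹*t+4⁻¹)‖ ^ p)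
      < ε/(4*K) + 4*δ + ε/(4*K) + 4*δ := by
    linarith
  have hmul := mul_lt_mul_of_pos_left hsum hK
  have hval : K * (ε/(4*K) + 4*δ + ε/(4*K) + 4*δ) = 3*ε/4 := by
    rw [hδdef]
    field_simp
    ring
  linarith
end

section
/- Fix 1 ≤ p < ∞ and k ∈ ℕ, let Z be a topological space, and let c : Z × [0,1] → L^p([0,1], ℝ^k) be continuous. Define H̃₁ : Z × [0,1] → L^p([0,1], ℝ^k) as follows: for s > 0, H̃₁(ζ, s) is the (equivalence class of the) function t ↦ c(ζ, s)(t/s) for t ∈ [0, s/4), t ↦ c(ζ, s)((t + 1 − s)/(4 − 3s)) for t ∈ [s/4, 1 − s/2], and t ↦ c(ζ, s)(t/s − 1/s + 1) for t ∈ (1 − s/2, 1]; and H̃₁(ζ, 0) is the function t ↦ c(ζ, 0)((t+1)/4). Then H̃₁ is continuous on Z × [0,1] with respect to the L^p-norm topology on the target. -/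
open MeasureTheory Filter Set
open scoped ENNReal NNReal Topology

namespace S9

noncomputable section

variable {β γ : Type*} {E : Type*} [NormedAddCommGroup E]

/-- The piecewise-affine reparametrization operator (on raw functions). -/
def F (s : ℝ) (u : ℝ → β) (t : ℝ) : β :=
  if t < s / 4 then u (t / s)
  else if t ≤ 1 - s / 2 then u ((t + 1 - s) / (4 - 3 * s))
  else u (t / s - 1 / s + 1)

lemma F_comp (s : ℝ) (h : β → γ) (u : ℝ → β) :
    F s (fun x => h (u x)) = fun t => h (F s u t) := by
  funext t; unfold F; split_ifs <;> rfl

lemma F_sub (s : ℝ) (u v : ℝ → E) : F s u - F s v = F s (u - v) := by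
  funext t; simp only [Pi.sub_apply]; unfold F; split_ifs <;> simp

lemma map_affine {m : ℝ} (hm : m ≠ 0) (q : ℝ) :
    Measure.map (fun t : ℝ => m * t + q) volume = ENNReal.ofReal |m⁻¹| • volume := by
  have h1 : (fun t : ℝ => m * t + q) = (fun x : ℝ => x + q) ∘ (fun t : ℝ => m * t) := rfl
  rw [h1, ← Measure.map_map (measurable_add_const q) (measurable_const_mul m),
    Real.map_volume_mul_left hm, Measure.map_smul,
    map_add_right_eq_self volume q]

lemma null_preimage {m : ℝ} (hm : m ≠ 0) (q : ℝ) (φ : ℝ → ℝ)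
    (hφ : ∀ t, φ t = m * t + q) {N : Set ℝ} (hN : volume N = 0) :
    volume (φ ⁻¹' N) = 0 := by
  rw [show φ = fun t => m * t + q from funext hφ]
  set M := toMeasurable volume N with hMdef
  have hMmeas : MeasurableSet M := measurableSet_toMeasurable _ _
  have hM0 : volume M = 0 := by rw [hMdef, measure_toMeasurable]; exact hN
  have hmap := Measure.map_apply (μ := volume) (f := fun t : ℝ => m * t + q)
    (by fun_prop) hMmeas
  rw [map_affine hm q] at hmap
  have hpre : volume ((fun t : ℝ => m * t + q) ⁻¹' M) = 0 := by
    rw [← hmap]; simp [hM0]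
  exact measure_mono_null (preimage_mono (subset_toMeasurable _ _)) hpre

lemma F_congr {s : ℝ} (hs : s ∈ Icc (0:ℝ) 1) {u v : ℝ → β}
    (h : u =ᵐ[volume.restrict (Icc (0:ℝ) 1)] v) :
    F s u =ᵐ[volume.restrict (Icc (0:ℝ) 1)] F s v := by
  rw [EventuallyEq, ae_restrict_iff' measurableSet_Icc] at h ⊢
  rw [ae_iff] at h
  set N := {x : ℝ | ¬ (x ∈ Icc (0:ℝ) 1 → u x = v x)} with hNdef
  have hkey : ∀ x, x ∉ N → x ∈ Icc (0:ℝ) 1 → u x = v x := by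
    intro x hx; simpa [hNdef] using hx
  have hs1 : s ≤ 1 := hs.2
  have hd : (0:ℝ) < 4 - 3 * s := by linarith
  have hN2 : volume ((fun t : ℝ => (t + 1 - s) / (4 - 3 * s)) ⁻¹' N) = 0 := by
    refine null_preimage (m := (4 - 3*s)⁻¹) (inv_ne_zero hd.ne') ((1 - s)/(4 - 3*s)) _
      (fun t => by field_simp; ring) h
  rcases eq_or_lt_of_le hs.1 with hs0 | hs0
  · -- s = 0
    subst hs0
    filter_upwards [measure_eq_zero_iff_ae_notMem.1 hN2] with t h2 ht
    unfold F
    have ht0 : (0:ℝ) ≤ t := ht.1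
    have ht1 : t ≤ 1 := ht.2
    have hc1 : ¬ (t < 0 / 4) := by norm_num; linarith
    have hc2 : t ≤ 1 - 0 / 2 := by norm_num; linarith
    simp only [if_neg hc1, if_pos hc2]
    refine hkey _ h2 ⟨?_, ?_⟩
    · apply div_nonneg <;> linarith
    · rw [div_le_one (by norm_num : (0:ℝ) < 4 - 3*0)]; linarith
  · -- 0 < s
    have hN1 : volume ((fun t : ℝ => t / s) ⁻¹' N) = 0 := by
      refine null_preimage (m := s⁻¹) (inv_ne_zero hs0.ne') 0 _
        (fun t => by rw [div_eq_inv_mul, add_zero]) h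
    have hN3 : volume ((fun t : ℝ => t / s - 1 / s + 1) ⁻¹' N) = 0 := by
      refine null_preimage (m := s⁻¹) (inv_ne_zero hs0.ne') (1 - 1/s) _
        (fun t => by field_simp; ring) h
    filter_upwards [measure_eq_zero_iff_ae_notMem.1 hN1, measure_eq_zero_iff_ae_notMem.1 hN2,
      measure_eq_zero_iff_ae_notMem.1 hN3] with t h1 h2 h3 ht
    obtain ⟨ht0, ht1⟩ := ht
    unfold F
    split_ifs with c1 c2
    · refine hkey _ h1 ⟨div_nonneg ht0 hs0.le, ?_⟩
      rw [div_le_one hs0]; linarith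
    · refine hkey _ h2 ⟨div_nonneg (by push_neg at c1; linarith) hd.le, ?_⟩
      rw [div_le_one hd]; linarith
    · push_neg at c1 c2
      refine hkey _ h3 ⟨?_, ?_⟩
      · have : (1:ℝ) - s ≤ t := by linarith
        have h' : (-1:ℝ) ≤ (t - 1) / s := (le_div_iff₀ hs0).2 (by linarith)
        have : t / s - 1 / s = (t - 1) / s := by ring
        linarith
      · have h' : (t - 1) / s ≤ 0 := div_nonpos_iff.2 (Or.inr ⟨by linarith, by linarith⟩)
        have : t / s - 1 / s = (t - 1) / s := by ring
        linarith

lemma F_sm {β : Type*} [TopologicalSpace β] (s : ℝ) {u : ℝ → β}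
    (hu : StronglyMeasurable u) : StronglyMeasurable (F s u) := by
  unfold F
  refine StronglyMeasurable.ite (measurableSet_lt measurable_id measurable_const) ?_
    (StronglyMeasurable.ite (measurableSet_le measurable_id measurable_const) ?_ ?_)
  · exact hu.comp_measurable (measurable_id.div_const s)
  · exact hu.comp_measurable (((measurable_id.add_const 1).sub_const s).div_const _)
  · exact hu.comp_measurable (((measurable_id.div_const s).sub_const (1/s)).add_const 1)

lemma F_aesm {s : ℝ} (hs : s ∈ Icc (0:ℝ) 1) {u : ℝ → E}
    (hu : AEStronglyMeasurable u (volume.restrict (Icc (0:ℝ) 1))) :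
    AEStronglyMeasurable (F s u) (volume.restrict (Icc (0:ℝ) 1)) :=
  ⟨F s (hu.mk u), F_sm s hu.stronglyMeasurable_mk, F_congr hs hu.ae_eq_mk⟩

lemma aff_le {m t b q : ℝ} (hm : 0 < m) : m⁻¹ * t + q ≤ b ↔ t ≤ (b - q) * m := by
  rw [← le_sub_iff_add_le, inv_mul_eq_div, div_le_iff₀ hm]

lemma aff_lt {m t b q : ℝ} (hm : 0 < m) : m⁻¹ * t + q < b ↔ t < (b - q) * m := by
  rw [← lt_sub_iff_add_lt, inv_mul_eq_div, div_lt_iff₀ hm]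

lemma aff_ge {m t b q : ℝ} (hm : 0 < m) : b ≤ m⁻¹ * t + q ↔ (b - q) * m ≤ t := by
  rw [← sub_le_iff_le_add, inv_mul_eq_div, le_div_iff₀ hm]

lemma aff_gt {m t b q : ℝ} (hm : 0 < m) : b < m⁻¹ * t + q ↔ (b - q) * m < t := by
  rw [← sub_lt_iff_lt_add, inv_mul_eq_div, lt_div_iff₀ hm]

lemma lintegral_affine {m q : ℝ} (hm : 0 < m) {f : ℝ → ℝ≥0∞} (hf : Measurable f)
    {B : Set ℝ} (hB : MeasurableSet B) :
    ∫⁻ t in (fun t => m * t + q) ⁻¹' B, f (m * t + q) ∂volume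
      = ENNReal.ofReal m⁻¹ * ∫⁻ x in B, f x ∂volume := by
  have hφ : Measurable (fun t : ℝ => m * t + q) := (measurable_id.const_mul m).add_const q
  rw [← lintegral_map hf hφ, ← Measure.restrict_map hφ hB, map_affine hm.ne' q,
    Measure.restrict_smul, lintegral_smul_measure, abs_of_pos (inv_pos.2 hm), smul_eq_mul]

lemma piece {m q : ℝ} (hm : 0 < m) {f : ℝ → ℝ≥0∞} (hf : Measurable f)
    {A B : Set ℝ} (hB : MeasurableSet B) (hAmeas : MeasurableSet A)
    (hAB : A = (fun t => m * t + q) ⁻¹' B) (hBsub : B ⊆ Icc 0 1)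
    {g : ℝ → ℝ≥0∞} (hg : ∀ t ∈ A, g t = f (m * t + q)) :
    ∫⁻ t in A, g t ∂volume ≤ ENNReal.ofReal m⁻¹ * ∫⁻ x in Icc (0:ℝ) 1, f x ∂volume := by
  rw [setLIntegral_congr_fun_ae hAmeas (ae_of_all _ hg), hAB, lintegral_affine hm hf hB]
  exact mul_le_mul_right (lintegral_mono_set hBsub) _

lemma lintegral_F_le {s : ℝ} (hs : s ∈ Icc (0:ℝ) 1) {f : ℝ → ℝ≥0∞} (hf : Measurable f) :
    ∫⁻ t in Icc (0:ℝ) 1, F s f t ∂volume ≤ 6 * ∫⁻ t in Icc (0:ℝ) 1, f t ∂volume := by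
  obtain ⟨hs0', hs1⟩ := hs
  set I := ∫⁻ t in Icc (0:ℝ) 1, f t ∂volume with hI
  rcases eq_or_lt_of_le hs0' with hs0 | hs0
  · -- s = 0
    have h1 : ∫⁻ t in Icc (0:ℝ) 1, F s f t ∂volume
        ≤ ENNReal.ofReal (4⁻¹)⁻¹ * I := by
      refine piece (m := (4⁻¹:ℝ)) (q := (4⁻¹:ℝ)) (B := Icc (4⁻¹:ℝ) 2⁻¹)
        (by norm_num) hf measurableSet_Icc measurableSet_Icc ?_ ?_ ?_
      · ext t
        simp only [mem_Icc, mem_preimage]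
        rw [aff_ge (by norm_num : (0:ℝ) < 4), aff_le (by norm_num : (0:ℝ) < 4)]
        constructor <;> rintro ⟨a, b⟩ <;> constructor <;> linarith
      · rintro t ⟨a, b⟩; exact ⟨by linarith, by linarith⟩
      · intro t ⟨a, b⟩
        unfold F
        rw [← hs0, if_neg (by norm_num; linarith), if_pos (by norm_num; linarith)]
        congr 1
        ring
    calc ∫⁻ t in Icc (0:ℝ) 1, F s f t ∂volume ≤ ENNReal.ofReal (4⁻¹)⁻¹ * I := h1
      _ ≤ 6 * I := mul_le_mul_left (by norm_num) I
  · -- 0 < s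
    have hd : (0:ℝ) < 4 - 3 * s := by linarith
    have hsub : s/4 ≤ 1 - s/2 := by linarith
    set A1 : Set ℝ := Ico 0 (s/4)
    set A2 : Set ℝ := Icc (s/4) (1 - s/2)
    set A3 : Set ℝ := Ioc (1 - s/2) 1
    have hdecomp : Icc (0:ℝ) 1 = A1 ∪ (A2 ∪ A3) := by
      ext t
      simp only [A1, A2, A3, mem_Icc, mem_union, mem_Ico, mem_Ioc]
      constructor
      · rintro ⟨h0, h1⟩
        rcases lt_or_ge t (s/4) with h | h
        · exact Or.inl ⟨h0, h⟩
        · rcases le_or_gt t (1 - s/2) with h' | h'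
          · exact Or.inr (Or.inl ⟨h, h'⟩)
          · exact Or.inr (Or.inr ⟨h', h1⟩)
      · rintro (⟨a, b⟩ | ⟨a, b⟩ | ⟨a, b⟩) <;> constructor <;> linarith
    have hsplit : ∫⁻ t in Icc (0:ℝ) 1, F s f t ∂volume
        = (∫⁻ t in A1, F s f t ∂volume)
          + ((∫⁻ t in A2, F s f t ∂volume) + (∫⁻ t in A3, F s f t ∂volume)) := by
      rw [hdecomp, lintegral_union (measurableSet_Icc.union measurableSet_Ioc) ?_,
        lintegral_union measurableSet_Ioc ?_]
      · rw [Set.disjoint_left]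
        rintro t ⟨a, b⟩ ⟨a', b'⟩; linarith
      · rw [Set.disjoint_left]
        rintro t ⟨a, b⟩ (⟨a', b'⟩ | ⟨a', b'⟩) <;> linarith
    have hP1 : ∫⁻ t in A1, F s f t ∂volume ≤ ENNReal.ofReal s * I := by
      have := piece (f := f) (g := F s f) (A := A1) (B := Ico (0:ℝ) 4⁻¹) (q := (0:ℝ))
        (inv_pos.2 hs0) hf measurableSet_Ico measurableSet_Ico ?_ ?_ ?_
      · rwa [inv_inv] at this
      · ext t
        simp only [A1, mem_Ico, mem_preimage]
        rw [aff_ge hs0, aff_lt hs0]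
        constructor <;> rintro ⟨a, b⟩ <;> constructor <;> nlinarith
      · rintro t ⟨a, b⟩; exact ⟨by linarith, by linarith⟩
      · rintro t ⟨a, b⟩
        unfold F
        rw [if_pos b]
        rw [div_eq_inv_mul, add_zero]
    have hP2 : ∫⁻ t in A2, F s f t ∂volume ≤ ENNReal.ofReal (4 - 3*s) * I := by
      have := piece (f := f) (g := F s f) (A := A2) (B := Icc (4⁻¹:ℝ) 2⁻¹) (q := (1-s)/(4-3*s))
        (inv_pos.2 hd) hf measurableSet_Icc measurableSet_Icc ?_ ?_ ?_
      · rwa [inv_inv] at this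
      · ext t
        simp only [A2, mem_Icc, mem_preimage]
        rw [show (4-3*s)⁻¹ * t + (1-s)/(4-3*s) = (t+1-s)/(4-3*s) from by field_simp; ring,
          le_div_iff₀ hd, div_le_iff₀ hd]
        constructor <;> rintro ⟨a, b⟩ <;> constructor <;> linarith
      · rintro t ⟨a, b⟩; exact ⟨by linarith, by linarith⟩
      · rintro t ⟨a, b⟩
        unfold F
        rw [if_neg (not_lt.2 a), if_pos b]
        congr 1
        field_simp
        ring
    have hP3 : ∫⁻ t in A3, F s f t ∂volume ≤ ENNReal.ofReal s * I := by
      have := piece (f := f) (g := F s f) (A := A3) (B := Ioc (2⁻¹:ℝ) 1) (q := 1 - 1/s)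
        (inv_pos.2 hs0) hf measurableSet_Ioc measurableSet_Ioc ?_ ?_ ?_
      · rwa [inv_inv] at this
      · ext t
        simp only [A3, mem_Ioc, mem_preimage]
        rw [show s⁻¹ * t + (1 - 1/s) = (t + s - 1)/s from by field_simp; ring,
          lt_div_iff₀ hs0, div_le_iff₀ hs0]
        constructor <;> rintro ⟨a, b⟩ <;> constructor <;> linarith
      · rintro t ⟨a, b⟩; exact ⟨by linarith, by linarith⟩
      · rintro t ⟨a, b⟩
        unfold F
        rw [if_neg (by push_neg; linarith), if_neg (by push_neg; linarith)]
        congr 1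
        field_simp
        ring
    rw [hsplit]
    calc (∫⁻ t in A1, F s f t ∂volume)
          + ((∫⁻ t in A2, F s f t ∂volume) + (∫⁻ t in A3, F s f t ∂volume))
        ≤ ENNReal.ofReal s * I + (ENNReal.ofReal (4 - 3*s) * I + ENNReal.ofReal s * I) :=
          add_le_add hP1 (add_le_add hP2 hP3)
      _ ≤ 1 * I + (4 * I + 1 * I) := by
          have h4 : ENNReal.ofReal (4 - 3*s) ≤ 4 := by
            calc ENNReal.ofReal (4 - 3*s) ≤ ENNReal.ofReal 4 :=
                  ENNReal.ofReal_le_ofReal (by linarith)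
              _ = 4 := by norm_num
          exact add_le_add (mul_le_mul_left (ENNReal.ofReal_le_one.2 hs1) I)
            (add_le_add (mul_le_mul_left h4 I)
              (mul_le_mul_left (ENNReal.ofReal_le_one.2 hs1) I))
      _ = 6 * I := by ring

lemma eLpNorm_F_le {p : ℝ} (hp : 1 ≤ p) {s : ℝ} (hs : s ∈ Icc (0:ℝ) 1) {w : ℝ → E}
    (hw : AEStronglyMeasurable w (volume.restrict (Icc (0:ℝ) 1))) :
    eLpNorm (F s w) (ENNReal.ofReal p) (volume.restrict (Icc (0:ℝ) 1))
      ≤ (6 : ℝ≥0∞) ^ (1/p)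
        * eLpNorm w (ENNReal.ofReal p) (volume.restrict (Icc (0:ℝ) 1)) := by
  have hp0 : 0 < p := lt_of_lt_of_le one_pos hp
  have hq0 : ENNReal.ofReal p ≠ 0 := by
    simp only [ne_eq, ENNReal.ofReal_eq_zero, not_le]; exact hp0
  have htR : (ENNReal.ofReal p).toReal = p := ENNReal.toReal_ofReal hp0.le
  set g := hw.mk w with hgdef
  rw [eLpNorm_congr_ae (F_congr hs hw.ae_eq_mk), eLpNorm_congr_ae hw.ae_eq_mk,
    eLpNorm_eq_lintegral_rpow_enorm_toReal hq0 ENNReal.ofReal_ne_top,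
    eLpNorm_eq_lintegral_rpow_enorm_toReal hq0 ENNReal.ofReal_ne_top, htR]
  set f : ℝ → ℝ≥0∞ := fun x => (‖g x‖₊ : ℝ≥0∞) ^ p with hfdef
  have hfm : Measurable f :=
    ENNReal.continuous_rpow_const.measurable.comp hw.stronglyMeasurable_mk.enorm
  have hcomp : (fun t => (‖F s g t‖₊ : ℝ≥0∞) ^ p) = F s f := by
    rw [F_comp s (fun e : E => (‖e‖₊ : ℝ≥0∞) ^ p) g]
  have hle : ∫⁻ t, (‖F s g t‖₊ : ℝ≥0∞) ^ p ∂(volume.restrict (Icc (0:ℝ) 1))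
      ≤ 6 * ∫⁻ t, (‖g t‖₊ : ℝ≥0∞) ^ p ∂(volume.restrict (Icc (0:ℝ) 1)) := by
    calc ∫⁻ t, (‖F s g t‖₊ : ℝ≥0∞) ^ p ∂(volume.restrict (Icc (0:ℝ) 1))
        = ∫⁻ t in Icc (0:ℝ) 1, F s f t ∂volume := by rw [hcomp]
      _ ≤ 6 * ∫⁻ t in Icc (0:ℝ) 1, f t ∂volume := lintegral_F_le hs hfm
  calc (∫⁻ t, (‖F s g t‖₊ : ℝ≥0∞) ^ p ∂(volume.restrict (Icc (0:ℝ) 1))) ^ (1/p)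
      ≤ (6 * ∫⁻ t, (‖g t‖₊ : ℝ≥0∞) ^ p ∂(volume.restrict (Icc (0:ℝ) 1))) ^ (1/p) :=
        ENNReal.rpow_le_rpow hle (by positivity)
    _ = (6 : ℝ≥0∞) ^ (1/p)
        * (∫⁻ t, (‖g t‖₊ : ℝ≥0∞) ^ p ∂(volume.restrict (Icc (0:ℝ) 1))) ^ (1/p) :=
        ENNReal.mul_rpow_of_nonneg _ _ (by positivity)

lemma F_norm_le (s : ℝ) (g : BoundedContinuousFunction ℝ E) (t : ℝ) :
    ‖F s (⇑g) t‖₊ ≤ ‖g‖₊ := by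
  unfold F; split_ifs <;> exact g.nnnorm_coe_le_nnnorm _

lemma tendsto_F_pt {u : ℝ → E} (hu : Continuous u) {s₀ : ℝ} (hs₀ : s₀ ∈ Icc (0:ℝ) 1)
    {t : ℝ} (ht : t ∈ Icc (0:ℝ) 1) (h0 : t ≠ 0) (h1 : t ≠ 1)
    (h2 : t ≠ s₀/4) (h3 : t ≠ 1 - s₀/2) :
    Tendsto (fun s => F s u t) (𝓝[Icc (0:ℝ) 1] s₀) (𝓝 (F s₀ u t)) := by
  obtain ⟨ht0, ht1⟩ := ht
  obtain ⟨hs₀0, hs₀1⟩ := hs₀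
  set l := 𝓝[Icc (0:ℝ) 1] s₀ with hldef
  have hid : Tendsto (fun s : ℝ => s) l (𝓝 s₀) := tendsto_id.mono_left nhdsWithin_le_nhds
  have hmem : ∀ᶠ s in l, s ∈ Icc (0:ℝ) 1 := eventually_mem_nhdsWithin
  rcases lt_trichotomy t (s₀/4) with hA | hA | hA
  · -- first branch
    have hs0 : 0 < s₀ := by linarith
    have hev : ∀ᶠ s in l, t < s/4 := (hid.div_const 4).eventually_const_lt hA
    have harg : Tendsto (fun s : ℝ => t / s) l (𝓝 (t / s₀)) :=
      tendsto_const_nhds.div hid hs0.ne'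
    have hF : Tendsto (fun s => u (t / s)) l (𝓝 (u (t / s₀))) :=
      (hu.tendsto _).comp harg
    have hfin : F s₀ u t = u (t / s₀) := by simp only [F, if_pos hA]
    rw [hfin]
    refine hF.congr' ?_
    filter_upwards [hev] with s hs
    simp only [F, if_pos hs]
  · exact absurd hA h2
  · rcases lt_trichotomy t (1 - s₀/2) with hB | hB | hB
    · -- middle branch
      have hev1 : ∀ᶠ s in l, s/4 < t := (hid.div_const 4).eventually_lt_const hA
      have hev2 : ∀ᶠ s in l, t < 1 - s/2 :=
        (tendsto_const_nhds.sub (hid.div_const 2)).eventually_const_lt hB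
      have hd : (0:ℝ) < 4 - 3*s₀ := by linarith
      have harg : Tendsto (fun s : ℝ => (t + 1 - s) / (4 - 3*s)) l
          (𝓝 ((t + 1 - s₀) / (4 - 3*s₀))) :=
        (tendsto_const_nhds.sub hid).div (tendsto_const_nhds.sub (hid.const_mul 3)) hd.ne'
      have hF : Tendsto (fun s => u ((t + 1 - s) / (4 - 3*s))) l
          (𝓝 (u ((t + 1 - s₀) / (4 - 3*s₀)))) := (hu.tendsto _).comp harg
      have hfin : F s₀ u t = u ((t + 1 - s₀) / (4 - 3*s₀)) := by
        simp only [F, if_neg (not_lt.2 hA.le), if_pos hB.le]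
      rw [hfin]
      refine hF.congr' ?_
      filter_upwards [hev1, hev2] with s hsa hsb
      simp only [F, if_neg (not_lt.2 hsa.le), if_pos hsb.le]
    · exact absurd hB h3
    · -- last branch
      have hs0 : 0 < s₀ := by
        rcases lt_or_eq_of_le ht1 with h | h
        · linarith
        · exact absurd h h1
      have hev : ∀ᶠ s in l, 1 - s/2 < t :=
        (tendsto_const_nhds.sub (hid.div_const 2)).eventually_lt_const hB
      have harg : Tendsto (fun s : ℝ => t / s - 1 / s + 1) l (𝓝 (t / s₀ - 1 / s₀ + 1)) :=
        ((tendsto_const_nhds.div hid hs0.ne').sub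
          (tendsto_const_nhds.div hid hs0.ne')).add tendsto_const_nhds
      have hF : Tendsto (fun s => u (t / s - 1 / s + 1)) l
          (𝓝 (u (t / s₀ - 1 / s₀ + 1))) := (hu.tendsto _).comp harg
      have hfin : F s₀ u t = u (t / s₀ - 1 / s₀ + 1) := by
        have : ¬ t < s₀/4 := by push_neg; linarith
        simp only [F, if_neg this, if_neg (not_le.2 hB)]
      rw [hfin]
      refine hF.congr' ?_
      filter_upwards [hev, hmem] with s hsa hsb
      have hns : ¬ t < s/4 := by push_neg; nlinarith [hsb.1, hsb.2]
      simp only [F, if_neg hns, if_neg (not_le.2 hsa)]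

lemma tendsto_eLpNorm_F {p : ℝ} (hp : 1 ≤ p) (g : BoundedContinuousFunction ℝ E)
    {s₀ : ℝ} (hs₀ : s₀ ∈ Icc (0:ℝ) 1) :
    Tendsto (fun s => eLpNorm (F s ⇑g - F s₀ ⇑g) (ENNReal.ofReal p)
        (volume.restrict (Icc (0:ℝ) 1)))
      (𝓝[Icc (0:ℝ) 1] s₀) (𝓝 0) := by
  have hp0 : 0 < p := lt_of_lt_of_le one_pos hp
  have hq0 : ENNReal.ofReal p ≠ 0 := by
    simp only [ne_eq, ENNReal.ofReal_eq_zero, not_le]; exact hp0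
  have htR : (ENNReal.ofReal p).toReal = p := ENNReal.toReal_ofReal hp0.le
  set μ := volume.restrict (Icc (0:ℝ) 1) with hμdef
  have hsm : ∀ s : ℝ, StronglyMeasurable (F s ⇑g) :=
    fun s => F_sm s g.continuous.stronglyMeasurable
  -- the lintegral tends to 0
  have hlim : Tendsto (fun s => ∫⁻ t, (‖F s ⇑g t - F s₀ ⇑g t‖₊ : ℝ≥0∞) ^ p ∂μ)
      (𝓝[Icc (0:ℝ) 1] s₀) (𝓝 0) := by
    have h0int : (0:ℝ≥0∞) = ∫⁻ _, (0:ℝ≥0∞) ∂μ := by simp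
    rw [h0int]
    refine tendsto_lintegral_filter_of_dominated_convergence
      (fun _ => ((2 * ‖g‖₊ : ℝ≥0) : ℝ≥0∞) ^ p) ?_ ?_ ?_ ?_
    · refine Eventually.of_forall fun s => ?_
      exact ENNReal.continuous_rpow_const.measurable.comp
        ((hsm s).sub (hsm s₀)).enorm
    · refine Eventually.of_forall fun s => ae_of_all _ fun t => ?_
      have hb : ‖F s ⇑g t - F s₀ ⇑g t‖₊ ≤ 2 * ‖g‖₊ := by
        refine le_trans (nnnorm_sub_le _ _) ?_
        rw [two_mul]
        exact add_le_add (F_norm_le s g t) (F_norm_le s₀ g t)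
      exact ENNReal.rpow_le_rpow (by exact_mod_cast hb) hp0.le
    · refine ne_of_lt ?_
      rw [lintegral_const]
      refine ENNReal.mul_lt_top (ENNReal.rpow_lt_top_of_nonneg hp0.le ENNReal.coe_ne_top) ?_
      rw [hμdef, Measure.restrict_apply_univ, Real.volume_Icc]
      simp
    · -- pointwise a.e. convergence
      have hbad : μ ({0, 1, s₀/4, 1 - s₀/2} : Set ℝ) = 0 := by
        have h1 : volume ({0, 1, s₀/4, 1 - s₀/2} : Set ℝ) = 0 :=
          Set.Countable.measure_zero (by
            apply Set.Countable.insert; apply Set.Countable.insert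
            apply Set.Countable.insert; exact Set.countable_singleton _) _
        exact le_antisymm
          (le_trans (Measure.le_iff'.1 Measure.restrict_le_self _) h1.le) zero_le
      filter_upwards [ae_restrict_mem measurableSet_Icc, measure_eq_zero_iff_ae_notMem.1 hbad]
        with t htIcc htbad
      simp only [mem_insert_iff, mem_singleton_iff, not_or] at htbad
      obtain ⟨h0, h1', h2, h3⟩ := htbad
      have hpt := tendsto_F_pt g.continuous hs₀ htIcc h0 h1' h2 h3
      have hsub : Tendsto (fun s => F s ⇑g t - F s₀ ⇑g t) (𝓝[Icc (0:ℝ) 1] s₀) (𝓝 0) := by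
        simpa using hpt.sub_const (F s₀ ⇑g t)
      have hnn : Tendsto (fun s => (‖F s ⇑g t - F s₀ ⇑g t‖₊ : ℝ≥0∞))
          (𝓝[Icc (0:ℝ) 1] s₀) (𝓝 0) := by
        rw [show (0:ℝ≥0∞) = ((0:ℝ≥0) : ℝ≥0∞) from rfl]
        refine ENNReal.tendsto_coe.2 ?_
        simpa [Function.comp_def] using (continuous_nnnorm.tendsto (0:E)).comp hsub
      have := (ENNReal.continuous_rpow_const (y := p)).tendsto (0:ℝ≥0∞) |>.comp hnn
      rw [ENNReal.zero_rpow_of_pos hp0] at this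
      exact this
  -- compose with rpow (1/p)
  have hcont : Tendsto (fun x : ℝ≥0∞ => x ^ (1/p)) (𝓝 0) (𝓝 ((0:ℝ≥0∞) ^ (1/p))) :=
    ENNReal.continuous_rpow_const.tendsto 0
  have hcomp := hcont.comp hlim
  rw [ENNReal.zero_rpow_of_pos (by positivity)] at hcomp
  refine hcomp.congr fun s => ?_
  rw [eLpNorm_eq_lintegral_rpow_enorm_toReal hq0 ENNReal.ofReal_ne_top, htR]
  rfl

end

end S9

open S9 in
theorem statement9 (p : ℝ) (hp : 1 ≤ p) [Fact (1 ≤ ENNReal.ofReal p)] (k : ℕ)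
    {Z : Type*} [TopologicalSpace Z]
    (c : Z × Icc (0:ℝ) 1 →
      Lp (EuclideanSpace ℝ (Fin k)) (ENNReal.ofReal p) (volume.restrict (Icc (0:ℝ) 1)))
    (hc : Continuous c)
    (H : Z × Icc (0:ℝ) 1 →
      Lp (EuclideanSpace ℝ (Fin k)) (ENNReal.ofReal p) (volume.restrict (Icc (0:ℝ) 1)))
    (hHpos : ∀ (ζ : Z) (s : Icc (0:ℝ) 1), 0 < (s : ℝ) →
      ∀ᵐ t ∂(volume.restrict (Icc (0:ℝ) 1)),
        H (ζ, s) t =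
          if t < (s : ℝ) / 4 then c (ζ, s) (t / (s : ℝ))
          else if t ≤ 1 - (s : ℝ) / 2 then c (ζ, s) ((t + 1 - (s : ℝ)) / (4 - 3 * (s : ℝ)))
          else c (ζ, s) (t / (s : ℝ) - 1 / (s : ℝ) + 1))
    (hH0 : ∀ (ζ : Z) (s : Icc (0:ℝ) 1), (s : ℝ) = 0 →
      ∀ᵐ t ∂(volume.restrict (Icc (0:ℝ) 1)),
        H (ζ, s) t = c (ζ, s) ((t + 1) / 4)) :
    Continuous H := by
  have hp0 : 0 < p := lt_of_lt_of_le one_pos hp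
  have hq1 : 1 ≤ ENNReal.ofReal p := ENNReal.one_le_ofReal.2 hp
  have hqt : ENNReal.ofReal p ≠ ∞ := ENNReal.ofReal_ne_top
  -- identification of H with the reparametrization operator
  have hH : ∀ x : Z × Icc (0:ℝ) 1,
      ⇑(H x) =ᵐ[volume.restrict (Icc (0:ℝ) 1)] F ((x.2 : ℝ)) ⇑(c x) := by
    rintro ⟨ζ, s⟩
    rcases lt_or_eq_of_le s.2.1 with h | h
    · filter_upwards [hHpos ζ s h] with t ht
      rw [ht]; rfl
    · have hform : (fun t : ℝ => c (ζ, s) ((t + 1) / 4))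
          =ᵐ[volume.restrict (Icc (0:ℝ) 1)] F ((s : ℝ)) ⇑(c (ζ, s)) := by
        refine (ae_restrict_iff' measurableSet_Icc).2 (ae_of_all _ fun t ht => ?_)
        unfold F
        rw [← h]
        rw [if_neg (by norm_num; linarith [ht.1]), if_pos (by norm_num; linarith [ht.2])]
        norm_num
      exact Filter.EventuallyEq.trans (hH0 ζ s h.symm) hform
  -- constants
  set C : ℝ≥0∞ := (6 : ℝ≥0∞) ^ (1/p) with hCdef
  have hCne : C ≠ ∞ := ENNReal.rpow_ne_top_of_nonneg (by positivity) (by norm_num)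
  set D : ℝ≥0∞ := 3 * C + 1 with hDdef
  have hD0 : D ≠ 0 := by simp [hDdef]
  have hDt : D ≠ ∞ := by
    rw [hDdef]
    exact ENNReal.add_ne_top.2 ⟨ENNReal.mul_ne_top (by norm_num) hCne, by norm_num⟩
  -- weak regularity for density of bounded continuous functions
  haveI : (volume.restrict (Icc (0:ℝ) 1)).WeaklyRegular :=
    MeasureTheory.Measure.WeaklyRegular.restrict_of_measure_ne_top
      (by rw [Real.volume_Icc]; norm_num)
  rw [continuous_iff_continuousAt]
  intro x₀
  rw [ContinuousAt, EMetric.tendsto_nhds]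
  intro ε hε
  set δ := min ε 1 with hδdef
  have hδpos : 0 < δ := lt_min hε zero_lt_one
  have hδ0 : δ ≠ 0 := hδpos.ne'
  have hδt : δ ≠ ∞ := ne_top_of_le_ne_top (by norm_num) (min_le_right _ _)
  set ε' := (δ / 2) / D with hε'def
  have hε'0 : ε' ≠ 0 := by
    rw [hε'def]
    simp only [ne_eq, ENNReal.div_eq_zero_iff, not_or]
    exact ⟨⟨hδ0, by norm_num⟩, hDt⟩
  -- bounded continuous approximation of c x₀
  obtain ⟨g, hg, -⟩ :=
    (Lp.memLp (c x₀)).exists_boundedContinuous_eLpNorm_sub_le hqt hε'0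
  -- hg : eLpNorm (⇑(c x₀) - ⇑g) q μ ≤ ε'
  set s₀ : ℝ := (x₀.2 : ℝ) with hs₀def
  have hs₀I : s₀ ∈ Icc (0:ℝ) 1 := x₀.2.2
  -- eventualities
  have hcx : ∀ᶠ x in 𝓝 x₀, edist (c x) (c x₀) < ε' :=
    EMetric.tendsto_nhds.1 hc.continuousAt ε' (pos_iff_ne_zero.2 hε'0)
  have hsnd : Tendsto (fun x : Z × Icc (0:ℝ) 1 => ((x.2 : ℝ)))
      (𝓝 x₀) (𝓝[Icc (0:ℝ) 1] s₀) := by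
    rw [← map_nhds_subtype_val x₀.2]
    exact tendsto_map.comp (continuous_snd.tendsto x₀)
  have hthird : ∀ᶠ x in 𝓝 x₀,
      eLpNorm (F ((x.2 : ℝ)) ⇑g - F s₀ ⇑g) (ENNReal.ofReal p)
        (volume.restrict (Icc (0:ℝ) 1)) < ε' :=
    ((tendsto_eLpNorm_F hp g hs₀I).comp hsnd).eventually_lt_const
      (pos_iff_ne_zero.2 hε'0)
  filter_upwards [hcx, hthird] with x he1 he3
  set s : ℝ := (x.2 : ℝ) with hsdef
  have hsI : s ∈ Icc (0:ℝ) 1 := x.2.2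
  -- measurability facts
  have hu : AEStronglyMeasurable (⇑(c x)) (volume.restrict (Icc (0:ℝ) 1)) :=
    (Lp.memLp (c x)).aestronglyMeasurable
  have hu₀ : AEStronglyMeasurable (⇑(c x₀)) (volume.restrict (Icc (0:ℝ) 1)) :=
    (Lp.memLp (c x₀)).aestronglyMeasurable
  have hgm : AEStronglyMeasurable (⇑g) (volume.restrict (Icc (0:ℝ) 1)) :=
    g.continuous.stronglyMeasurable.aestronglyMeasurable
  -- decomposition
  have hdec : ⇑(H x) - ⇑(H x₀) =ᵐ[volume.restrict (Icc (0:ℝ) 1)]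
      (F s ⇑(c x) - F s ⇑g) + ((F s ⇑g - F s₀ ⇑g) + (F s₀ ⇑g - F s₀ ⇑(c x₀))) := by
    filter_upwards [hH x, hH x₀] with t h1 h2
    simp only [Pi.add_apply, Pi.sub_apply]
    rw [h1, h2]
    abel
  -- estimates for the outer terms
  have hkey1 : eLpNorm (F s ⇑(c x) - F s ⇑g) (ENNReal.ofReal p)
        (volume.restrict (Icc (0:ℝ) 1))
      ≤ C * (eLpNorm (⇑(c x) - ⇑(c x₀)) (ENNReal.ofReal p) (volume.restrict (Icc (0:ℝ) 1))
        + eLpNorm (⇑(c x₀) - ⇑g) (ENNReal.ofReal p) (volume.restrict (Icc (0:ℝ) 1))) := by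
    rw [F_sub]
    refine le_trans (eLpNorm_F_le hp hsI (hu.sub hgm)) ?_
    refine mul_le_mul_right ?_ C
    have hsplit : (⇑(c x) - ⇑g) = (⇑(c x) - ⇑(c x₀)) + (⇑(c x₀) - ⇑g) := by
      funext t; simp only [Pi.add_apply, Pi.sub_apply]; abel
    rw [hsplit]
    exact eLpNorm_add_le (hu.sub hu₀) (hu₀.sub hgm) hq1
  have hkey3 : eLpNorm (F s₀ ⇑g - F s₀ ⇑(c x₀)) (ENNReal.ofReal p)
        (volume.restrict (Icc (0:ℝ) 1))
      ≤ C * eLpNorm (⇑(c x₀) - ⇑g) (ENNReal.ofReal p) (volume.restrict (Icc (0:ℝ) 1)) := by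
    rw [F_sub]
    refine le_trans (eLpNorm_F_le hp hs₀I (hgm.sub hu₀)) ?_
    rw [eLpNorm_sub_comm]
  have haesm1 : AEStronglyMeasurable (F s ⇑(c x) - F s ⇑g)
      (volume.restrict (Icc (0:ℝ) 1)) := by
    rw [F_sub]; exact F_aesm hsI (hu.sub hgm)
  have haesm2 : AEStronglyMeasurable (F s ⇑g - F s₀ ⇑g)
      (volume.restrict (Icc (0:ℝ) 1)) := (F_aesm hsI hgm).sub (F_aesm hs₀I hgm)
  have haesm3 : AEStronglyMeasurable (F s₀ ⇑g - F s₀ ⇑(c x₀))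
      (volume.restrict (Icc (0:ℝ) 1)) := (F_aesm hs₀I hgm).sub (F_aesm hs₀I hu₀)
  calc edist (H x) (H x₀)
      = eLpNorm (⇑(H x) - ⇑(H x₀)) (ENNReal.ofReal p) (volume.restrict (Icc (0:ℝ) 1)) :=
        Lp.edist_def _ _
    _ = eLpNorm ((F s ⇑(c x) - F s ⇑g)
        + ((F s ⇑g - F s₀ ⇑g) + (F s₀ ⇑g - F s₀ ⇑(c x₀)))) (ENNReal.ofReal p)
          (volume.restrict (Icc (0:ℝ) 1)) := eLpNorm_congr_ae hdec
    _ ≤ eLpNorm (F s ⇑(c x) - F s ⇑g) (ENNReal.ofReal p) (volume.restrict (Icc (0:ℝ) 1))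
        + (eLpNorm (F s ⇑g - F s₀ ⇑g) (ENNReal.ofReal p) (volume.restrict (Icc (0:ℝ) 1))
          + eLpNorm (F s₀ ⇑g - F s₀ ⇑(c x₀)) (ENNReal.ofReal p)
            (volume.restrict (Icc (0:ℝ) 1))) := by
        refine le_trans (eLpNorm_add_le haesm1 (haesm2.add haesm3) hq1) ?_
        exact add_le_add_right (eLpNorm_add_le haesm2 haesm3 hq1) _
    _ ≤ C * (ε' + ε') + (ε' + C * ε') := by
        refine add_le_add (le_trans hkey1 ?_) (add_le_add he3.le (le_trans hkey3 ?_))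
        · refine mul_le_mul_right (add_le_add ?_ hg) C
          rw [← Lp.edist_def]
          exact he1.le
        · exact mul_le_mul_right hg C
    _ = D * ε' := by rw [hDdef]; ring
    _ ≤ δ / 2 := by rw [hε'def]; exact ENNReal.mul_div_le
    _ < δ := ENNReal.half_lt_self hδ0 hδt
    _ ≤ ε := min_le_left _ _
end
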